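/- arXiv:1206.1301 — 5 statements merged into one kernel-verified Lean document; each statement's English description precedes it below -/
import Mathlib

section
/- Let D be a Dyck path of semilength n with height sequence (h_1,...,h_n). Then Σ_{M ∈ M_n(D)} q^{ne(M)} Π_{i ∈ Long(M)} t_i = Π_{k=1}^n (t_k + q + q^2 + ··· + q^{h_k − 1}). -/
/-- Perfect matchings on `{0,…,2n-1}` whose set of openers (left endpoints of arcs)
is exactly `O`: fixed-point-free involutions `M` with `i ∈ O ↔ i < M i`. -/
def matchingsOfType (n : ℕ) (O : Finset (Fin (2 * n))) :
    Finset (Equiv.Perm (Fin (2 * n))) :=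
  Finset.univ.filter (fun M =>
    (∀ i, M (M i) = i) ∧ (∀ i, M i ≠ i) ∧ (∀ i, i ∈ O ↔ i < M i))

/-- `O` is the set of rises of a Dyck path of semilength `n`: it has `n`
elements and every prefix contains at least as many openers as closers. -/
def IsDyckType (n : ℕ) (O : Finset (Fin (2 * n))) : Prop :=
  O.card = n ∧ ∀ m : Fin (2 * n),
    ((Finset.Iic m).filter (fun i => i ∉ O)).card ≤
      ((Finset.Iic m).filter (fun i => i ∈ O)).card

/-- The `k`-th opener (in increasing order). -/
noncomputable def opener (n : ℕ) (O : Finset (Fin (2 * n))) (hO : O.card = n)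
    (k : Fin n) : Fin (2 * n) :=
  O.orderEmbOfFin hO k

/-- The height `h_k` of the `k`-th rise of the Dyck path with rise set `O`. -/
noncomputable def riseHeight (n : ℕ) (O : Finset (Fin (2 * n))) (hO : O.card = n)
    (k : Fin n) : ℕ :=
  ((Finset.Iic (opener n O hO k)).filter (fun i => i ∈ O)).card -
    ((Finset.Iic (opener n O hO k)).filter (fun i => i ∉ O)).card

/-- Number of nestings of a matching: pairs of arcs `i·M i`, `k·M k` with
`i < k < M k < M i`. -/
def neM {n : ℕ} (O : Finset (Fin (2 * n))) (M : Equiv.Perm (Fin (2 * n))) : ℕ :=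
  (Finset.univ.filter (fun p : Fin (2 * n) × Fin (2 * n) =>
    p.1 ∈ O ∧ p.2 ∈ O ∧ p.1 < p.2 ∧ M p.2 < M p.1)).card

/-- `Long M`: indices `k` such that the arc at the `k`-th opener is not the
right (inner) arc of any nesting. -/
noncomputable def LongM (n : ℕ) (O : Finset (Fin (2 * n))) (hO : O.card = n)
    (M : Equiv.Perm (Fin (2 * n))) : Finset (Fin n) :=
  Finset.univ.filter (fun k : Fin n =>
    ¬ ∃ i ∈ O, i < opener n O hO k ∧ M (opener n O hO k) < M i)


/- ————————————————————————————————————————————————————————————————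
   Auxiliary general development: matchings on a sub-ground-set
   `S ⊆ Fin N` with opener set `O`, proved by induction removing the
   first closer together with the arc it closes.
———————————————————————————————————————————————————————————————— -/

open Finset

section AuxDev

set_option linter.unusedSectionVars false
set_option linter.unusedVariables false
set_option maxHeartbeats 1000000

variable {R : Type*} [CommRing R] {N : ℕ}
variable {S O : Finset (Fin N)} {c j : Fin N} {M : Equiv.Perm (Fin N)}




/-- `q + q^2 + ⋯ + q^(h-1)`. -/
def Pq (q : R) (h : ℕ) : R := ∑ i ∈ Finset.Icc 1 (h - 1), q ^ i

lemma Pq_succ (q : R) {m : ℕ} (hm : 1 ≤ m) : Pq q (m + 1) = Pq q m + q ^ m := by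
  unfold Pq
  have h1 : m + 1 - 1 = (m - 1) + 1 := by omega
  have h2 : m - 1 + 1 = m := by omega
  rw [h1, Finset.sum_Icc_succ_top (by omega), h2]

lemma Pq_one (q : R) : Pq q 1 = 0 := by simp [Pq]

lemma keyid (q : R) : ∀ (F : ℕ) (A : Finset (Fin N)), A.card ≤ F → A.Nonempty → ∀ t : (Fin N) → R,
    (∑ j ∈ A, (if (A ∩ Finset.Iio j).card = 0 then t j else q ^ (A ∩ Finset.Iio j).card) *
      ∏ o ∈ A.erase j, (t o + Pq q (if o < j then (A ∩ Finset.Iic o).card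
        else (A ∩ Finset.Iic o).card - 1)))
    = ∏ o ∈ A, (t o + Pq q (A ∩ Finset.Iic o).card) := by
  intro F
  induction F with
  | zero =>
    intro A hc hne t
    rw [Nat.le_zero, Finset.card_eq_zero] at hc
    simp [hc] at hne
  | succ F ih =>
    intro A hc hne t
    have haA : A.max' hne ∈ A := A.max'_mem hne
    set a := A.max' hne with ha
    by_cases h1 : A.erase a = ∅
    · have hA : A = {a} := by
        have := (Finset.erase_eq_empty_iff A a).mp h1
        rcases this with h | h
        · exact absurd h (Finset.nonempty_iff_ne_empty.mp hne)
        · exact h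
      rw [hA]
      have hio : ({a} : Finset (Fin N)) ∩ Finset.Iio a = ∅ := by
        ext x; simp only [Finset.mem_inter, Finset.mem_singleton, Finset.mem_Iio,
          Finset.notMem_empty, iff_false]
        rintro ⟨rfl, h⟩; exact lt_irrefl _ h
      have hic : ({a} : Finset (Fin N)) ∩ Finset.Iic a = {a} := by
        ext x; simp (config := {contextual := true}) [le_of_eq]
      simp [hio, hic, Pq_one]
    · -- A' := A.erase a nonempty
      have hne' : (A.erase a).Nonempty := Finset.nonempty_iff_ne_empty.mpr h1
      have hlt : ∀ o ∈ A.erase a, o < a := fun o ho =>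
        lt_of_le_of_ne (Finset.le_max' A o (Finset.mem_of_mem_erase ho))
          (Finset.ne_of_mem_erase ho)
      have hiic : ∀ o ∈ A.erase a, A ∩ Finset.Iic o = A.erase a ∩ Finset.Iic o := by
        intro o ho
        ext x
        simp only [Finset.mem_inter, Finset.mem_Iic, Finset.mem_erase]
        constructor
        · rintro ⟨hx, hxo⟩
          exact ⟨⟨fun hxa => absurd (hxa ▸ hxo) (not_le.mpr (hlt o ho)), hx⟩, hxo⟩
        · rintro ⟨⟨_, hx⟩, hxo⟩; exact ⟨hx, hxo⟩
      have hiio : ∀ j ∈ A.erase a, A ∩ Finset.Iio j = A.erase a ∩ Finset.Iio j := by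
        intro j hj
        ext x
        simp only [Finset.mem_inter, Finset.mem_Iio, Finset.mem_erase]
        constructor
        · rintro ⟨hx, hxj⟩
          exact ⟨⟨fun hxa => absurd (hxa ▸ hxj) (not_lt.mpr (le_of_lt (hlt j hj))), hx⟩, hxj⟩
        · rintro ⟨⟨_, hx⟩, hxj⟩; exact ⟨hx, hxj⟩
      have hicA : A ∩ Finset.Iic a = A := by
        apply Finset.inter_eq_left.mpr
        intro x hx; exact Finset.mem_Iic.mpr (Finset.le_max' A x hx)
      have hioA : A ∩ Finset.Iio a = A.erase a := by
        ext x
        simp only [Finset.mem_inter, Finset.mem_Iio, Finset.mem_erase]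
        constructor
        · rintro ⟨hx, hxa⟩; exact ⟨ne_of_lt hxa, hx⟩
        · rintro ⟨hxa, hx⟩; exact ⟨hx, lt_of_le_of_ne (Finset.le_max' A x hx) hxa⟩
      have hcard2 : 2 ≤ A.card := by
        have := Finset.card_erase_of_mem haA
        have hpos := Finset.card_pos.mpr hne'
        omega
      have hcard' : (A.erase a).card = A.card - 1 := Finset.card_erase_of_mem haA
      -- RHS
      rw [← Finset.mul_prod_erase A _ haA, ← Finset.add_sum_erase A _ haA]
      have hrhs : ∏ o ∈ A.erase a, (t o + Pq q (A ∩ Finset.Iic o).card)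
          = ∏ o ∈ A.erase a, (t o + Pq q ((A.erase a) ∩ Finset.Iic o).card) :=
        Finset.prod_congr rfl fun o ho => by rw [hiic o ho]
      -- term a of LHS
      have hterma :
          (if (A ∩ Finset.Iio a).card = 0 then t a else q ^ (A ∩ Finset.Iio a).card) *
            ∏ o ∈ A.erase a, (t o + Pq q (if o < a then (A ∩ Finset.Iic o).card
              else (A ∩ Finset.Iic o).card - 1))
          = q ^ (A.card - 1) *
            ∏ o ∈ A.erase a, (t o + Pq q ((A.erase a) ∩ Finset.Iic o).card) := by
        rw [hioA, hcard']
        rw [if_neg (by omega)]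
        congr 1
        refine Finset.prod_congr rfl fun o ho => ?_
        rw [if_pos (hlt o ho), hiic o ho]
      -- terms j ∈ A.erase a
      have htermj : ∀ j ∈ A.erase a,
          (if (A ∩ Finset.Iio j).card = 0 then t j else q ^ (A ∩ Finset.Iio j).card) *
            ∏ o ∈ A.erase j, (t o + Pq q (if o < j then (A ∩ Finset.Iic o).card
              else (A ∩ Finset.Iic o).card - 1))
          = (t a + Pq q (A.card - 1)) *
            ((if ((A.erase a) ∩ Finset.Iio j).card = 0 then t j
                else q ^ ((A.erase a) ∩ Finset.Iio j).card) *
              ∏ o ∈ (A.erase a).erase j, (t o + Pq q (if o < j then ((A.erase a) ∩ Finset.Iic o).card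
                else ((A.erase a) ∩ Finset.Iic o).card - 1))) := by
        intro j hj
        have hja : a ∈ A.erase j := Finset.mem_erase.mpr ⟨(Finset.ne_of_mem_erase hj).symm, haA⟩
        rw [← Finset.mul_prod_erase (A.erase j) _ hja, Finset.erase_right_comm]
        rw [if_neg (not_lt.mpr (le_of_lt (hlt j hj))), hicA]
        have hprod : ∏ o ∈ (A.erase a).erase j,
            (t o + Pq q (if o < j then (A ∩ Finset.Iic o).card else (A ∩ Finset.Iic o).card - 1))
            = ∏ o ∈ (A.erase a).erase j, (t o + Pq q (if o < j then ((A.erase a) ∩ Finset.Iic o).card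
              else ((A.erase a) ∩ Finset.Iic o).card - 1)) := by
          refine Finset.prod_congr rfl fun o ho => ?_
          rw [hiic o (Finset.mem_of_mem_erase ho)]
        rw [hprod, hiio j hj]
        ring
      rw [hterma, Finset.sum_congr rfl htermj, ← Finset.mul_sum,
        ih (A.erase a) (by omega) hne' t, hrhs, hicA]
      have hP : Pq q A.card = Pq q (A.card - 1) + q ^ (A.card - 1) := by
        have h3 : A.card - 1 + 1 = A.card := by omega
        rw [← h3, Pq_succ q (by omega), h3]
      rw [hP]
      ring




/-- matchings of the "interval" S with opener set O -/
def pmG (S O : Finset (Fin N)) : Finset (Equiv.Perm (Fin N)) :=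
  Finset.univ.filter fun M =>
    (∀ i, M (M i) = i) ∧ (∀ i ∈ S, M i ≠ i) ∧ (∀ i, i ∉ S → M i = i) ∧ (∀ i, i ∈ O ↔ i < M i)

lemma mem_pmG {S O : Finset (Fin N)} {M : Equiv.Perm (Fin N)} :
    M ∈ pmG S O ↔ (∀ i, M (M i) = i) ∧ (∀ i ∈ S, M i ≠ i) ∧ (∀ i, i ∉ S → M i = i) ∧
      (∀ i, i ∈ O ↔ i < M i) := by
  simp [pmG]

def neG (O : Finset (Fin N)) (M : Equiv.Perm (Fin N)) : ℕ :=
  (Finset.univ.filter fun p : (Fin N) × (Fin N) => p.1 ∈ O ∧ p.2 ∈ O ∧ p.1 < p.2 ∧ M p.2 < M p.1).card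

def LongG (O : Finset (Fin N)) (M : Equiv.Perm (Fin N)) : Finset (Fin N) :=
  O.filter fun k => ¬ ∃ i ∈ O, i < k ∧ M k < M i

def hPG (S O : Finset (Fin N)) (o : (Fin N)) : ℕ :=
  ((S ∩ Finset.Iic o).filter (fun i => i ∈ O)).card -
    ((S ∩ Finset.Iic o).filter (fun i => i ∉ O)).card

lemma conj_swap_apply (M : Equiv.Perm (Fin N)) (hinv : ∀ i, M (M i) = i) {c j : (Fin N)} (hc : M c = j)
    (hjc : j ≠ c) (x : (Fin N)) :
    (Equiv.swap j c * M) x = if x = j then j else if x = c then c else M x := by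
  have hj : M j = c := by rw [← hc, hinv]
  by_cases hxj : x = j
  · subst hxj; simp [Equiv.Perm.mul_apply, hj, Equiv.swap_apply_right, hjc]
  by_cases hxc : x = c
  · subst hxc; simp [Equiv.Perm.mul_apply, hc, Equiv.swap_apply_left, hxj]
  · have h1 : M x ≠ j := fun h => hxc (by rw [← hinv x, h, hj])
    have h2 : M x ≠ c := fun h => hxj (by rw [← hinv x, h, hc])
    simp [Equiv.Perm.mul_apply, Equiv.swap_apply_of_ne_of_ne h1 h2, hxj, hxc]

lemma swap_ext_apply (M : Equiv.Perm (Fin N)) {c j : (Fin N)} (hj : M j = j) (hc : M c = c) (x : (Fin N)) :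
    (Equiv.swap j c * M) x = if x = j then c else if x = c then j else M x := by
  by_cases hxj : x = j
  · subst hxj; simp [Equiv.Perm.mul_apply, hj, Equiv.swap_apply_left]
  by_cases hxc : x = c
  · subst hxc; simp [Equiv.Perm.mul_apply, hc, Equiv.swap_apply_right, hxj]
  · have h1 : M x ≠ j := fun h => hxj (by rw [← hj] at h; exact M.injective h)
    have h2 : M x ≠ c := fun h => hxc (by rw [← hc] at h; exact M.injective h)
    simp [Equiv.Perm.mul_apply, Equiv.swap_apply_of_ne_of_ne h1 h2, hxj, hxc]

section Step


/-- every arc other than the one at `j` closes strictly after `c`. -/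
lemma arc_high (hOS : O ⊆ S) (hcmin : ∀ x ∈ S, x ∉ O → c ≤ x)
    (hM : M ∈ pmG S O) (hMc : M c = j) {i : (Fin N)} (hi : i ∈ O) (hij : i ≠ j) : c < M i := by
  obtain ⟨hinv, hfix, hout, hiff⟩ := mem_pmG.mp hM
  have h1 : i < M i := (hiff i).mp hi
  have hMiS : M i ∈ S := by
    by_contra h
    have := hout _ h
    have : M (M i) = M i := by rw [this]
    rw [hinv] at this
    exact absurd this.symm (ne_of_gt h1)
  have hMiO : M i ∉ O := by
    intro h
    have := (hiff _).mp h
    rw [hinv] at this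
    exact absurd h1 (not_lt.mpr this.le)
  have hle : c ≤ M i := hcmin _ hMiS hMiO
  have hne : M i ≠ c := by
    intro h
    apply hij
    rw [← hinv i, h, hMc]
  exact lt_of_le_of_ne hle (Ne.symm hne)

lemma Mc_mem (hOS : O ⊆ S) (hcS : c ∈ S) (hcO : c ∉ O) (hcmin : ∀ x ∈ S, x ∉ O → c ≤ x)
    (hM : M ∈ pmG S O) : M c ∈ O ∧ M c < c := by
  obtain ⟨hinv, hfix, hout, hiff⟩ := mem_pmG.mp hM
  have h1 : ¬ c < M c := fun h => hcO ((hiff c).mpr h)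
  have h2 : M c ≠ c := hfix c hcS
  have hlt : M c < c := lt_of_le_of_ne (not_lt.mp h1) h2
  have hMcS : M c ∈ S := by
    by_contra h
    have := hout _ h
    have h3 : M (M c) = M c := by rw [this]
    rw [hinv] at h3
    exact h2 (h3.symm)
  have hMcO : M c ∈ O := by
    by_contra h
    exact absurd (hcmin _ hMcS h) (not_le.mpr hlt)
  exact ⟨hMcO, hlt⟩

lemma pm_fwd (hOS : O ⊆ S) (hcS : c ∈ S) (hcO : c ∉ O) (hjO : j ∈ O) (hjc : j < c)
    (hM : M ∈ pmG S O) (hMc : M c = j) :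
    Equiv.swap j c * M ∈ pmG ((S.erase j).erase c) (O.erase j) := by
  obtain ⟨hinv, hfix, hout, hiff⟩ := mem_pmG.mp hM
  have hjc' : j ≠ c := ne_of_lt hjc
  have hjS : j ∈ S := hOS hjO
  have key := conj_swap_apply M hinv hMc hjc'
  rw [mem_pmG]
  refine ⟨?_, ?_, ?_, ?_⟩
  · intro i
    rw [key i]
    by_cases h1 : i = j
    · subst h1; rw [key]; simp
    by_cases h2 : i = c
    · subst h2; rw [if_neg h1, if_pos rfl, key]; simp [h1]
    · rw [if_neg h1, if_neg h2, key]
      have hm1 : M i ≠ j := fun h => h2 (by rw [← hinv i, h, ← hMc, hinv])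
      have hm2 : M i ≠ c := fun h => h1 (by rw [← hinv i, h, hMc])
      rw [if_neg hm1, if_neg hm2, hinv]
  · intro i hi
    rw [Finset.mem_erase, Finset.mem_erase] at hi
    rw [key i, if_neg hi.2.1, if_neg hi.1]
    exact hfix i hi.2.2
  · intro i hi
    rw [key i]
    by_cases h1 : i = j
    · simp [h1]
    by_cases h2 : i = c
    · subst h2; rw [if_neg h1, if_pos rfl]
    · rw [if_neg h1, if_neg h2]
      apply hout
      intro hiS
      exact hi (Finset.mem_erase.mpr ⟨h2, Finset.mem_erase.mpr ⟨h1, hiS⟩⟩)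
  · intro i
    rw [key i, Finset.mem_erase]
    by_cases h1 : i = j
    · subst h1; simp
    by_cases h2 : i = c
    · subst h2; simp [hcO, h1]
    · rw [if_neg h1, if_neg h2]
      constructor
      · rintro ⟨_, h⟩; exact (hiff i).mp h
      · intro h; exact ⟨h1, (hiff i).mpr h⟩

lemma pm_bwd (hOS : O ⊆ S) (hcS : c ∈ S) (hcO : c ∉ O) (hjO : j ∈ O) (hjc : j < c)
    {M' : Equiv.Perm (Fin N)} (hM' : M' ∈ pmG ((S.erase j).erase c) (O.erase j)) :
    Equiv.swap j c * M' ∈ pmG S O ∧ (Equiv.swap j c * M') c = j := by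
  obtain ⟨hinv, hfix, hout, hiff⟩ := mem_pmG.mp hM'
  have hjc' : j ≠ c := ne_of_lt hjc
  have hjS : j ∈ S := hOS hjO
  have hjfix : M' j = j := hout _ (by simp)
  have hcfix : M' c = c := hout _ (by simp [hjc'.symm])
  have key := swap_ext_apply M' hjfix hcfix
  constructor
  · rw [mem_pmG]
    refine ⟨?_, ?_, ?_, ?_⟩
    · intro i
      rw [key i]
      by_cases h1 : i = j
      · subst h1; rw [if_pos rfl, key, if_neg hjc'.symm, if_pos rfl]
      by_cases h2 : i = c
      · subst h2; rw [if_neg h1, if_pos rfl, key, if_pos rfl]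
      · rw [if_neg h1, if_neg h2, key]
        have hm1 : M' i ≠ j := fun h => h1 (by rw [← hjfix] at h; exact M'.injective h)
        have hm2 : M' i ≠ c := fun h => h2 (by rw [← hcfix] at h; exact M'.injective h)
        rw [if_neg hm1, if_neg hm2, hinv]
    · intro i hi
      rw [key i]
      by_cases h1 : i = j
      · subst h1; rw [if_pos rfl]; exact hjc'.symm
      by_cases h2 : i = c
      · subst h2; rw [if_neg h1, if_pos rfl]; exact hjc'
      · rw [if_neg h1, if_neg h2]
        exact hfix i (Finset.mem_erase.mpr ⟨h2, Finset.mem_erase.mpr ⟨h1, hi⟩⟩)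
    · intro i hi
      have h1 : i ≠ j := fun h => hi (h ▸ hjS)
      have h2 : i ≠ c := fun h => hi (h ▸ hcS)
      rw [key i, if_neg h1, if_neg h2]
      apply hout
      intro h
      exact hi (Finset.mem_of_mem_erase (Finset.mem_of_mem_erase h))
    · intro i
      rw [key i]
      by_cases h1 : i = j
      · subst h1; simp [hjO, hjc]
      by_cases h2 : i = c
      · subst h2; rw [if_neg h1, if_pos rfl]
        simp only [hcO, false_iff]
        exact not_lt.mpr hjc.le
      · rw [if_neg h1, if_neg h2]
        constructor
        · intro h; exact (hiff i).mp (Finset.mem_erase.mpr ⟨h1, h⟩)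
        · intro h; exact Finset.mem_of_mem_erase ((hiff i).mpr h)
  · rw [key c, if_neg hjc'.symm, if_pos rfl]

end Step

section Step

lemma ne_step (hOS : O ⊆ S) (hcS : c ∈ S) (hcO : c ∉ O) (hcmin : ∀ x ∈ S, x ∉ O → c ≤ x)
    (hjO : j ∈ O) (hjc : j < c) (hM : M ∈ pmG S O) (hMc : M c = j) :
    neG O M = (O ∩ Finset.Iio j).card + neG (O.erase j) (Equiv.swap j c * M) := by
  obtain ⟨hinv, hfix, hout, hiff⟩ := mem_pmG.mp hM
  have hjc' : j ≠ c := ne_of_lt hjc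
  have key := conj_swap_apply M hinv hMc hjc'
  have hMj : M j = c := by rw [← hMc, hinv]
  have high := fun {i} (hi : i ∈ O) (hij : i ≠ j) => arc_high hOS hcmin hM hMc hi hij
  unfold neG
  rw [← Finset.card_filter_add_card_filter_not (s := Finset.univ.filter fun p : (Fin N) × (Fin N) =>
      p.1 ∈ O ∧ p.2 ∈ O ∧ p.1 < p.2 ∧ M p.2 < M p.1) (fun p => p.2 = j)]
  congr 1
  · -- pairs with inner arc j : count = (O ∩ Iio j).card
    rw [Finset.filter_filter]
    have hset : (Finset.univ.filter fun p : (Fin N) × (Fin N) =>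
        (p.1 ∈ O ∧ p.2 ∈ O ∧ p.1 < p.2 ∧ M p.2 < M p.1) ∧ p.2 = j)
        = (O ∩ Finset.Iio j).image (fun x => (x, j)) := by
      ext p
      simp only [Finset.mem_filter, Finset.mem_univ, true_and, Finset.mem_image,
        Finset.mem_inter, Finset.mem_Iio]
      constructor
      · rintro ⟨⟨h1, h2, h3, h4⟩, h5⟩
        exact ⟨p.1, ⟨h1, h5 ▸ h3⟩, by rw [← h5]⟩
      · rintro ⟨x, ⟨hx1, hx2⟩, rfl⟩
        have hxj : x ≠ j := ne_of_lt hx2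
        exact ⟨⟨hx1, hjO, hx2, by rw [hMj]; exact high hx1 hxj⟩, rfl⟩
    rw [hset, Finset.card_image_of_injective _ (fun a b h => (Prod.mk.injEq _ _ _ _).mp h |>.1)]
  · -- other pairs match pairs of the reduced matching
    rw [Finset.filter_filter]
    congr 1
    ext p
    simp only [Finset.mem_filter, Finset.mem_univ, true_and, Finset.mem_erase]
    constructor
    · rintro ⟨⟨h1, h2, h3, h4⟩, h5⟩
      have h1j : p.1 ≠ j := by
        rintro rfl
        rw [hMj] at h4
        exact absurd (high h2 h5) (not_lt.mpr h4.le)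
      have hm1 : (Equiv.swap j c * M) p.1 = M p.1 := by
        rw [key p.1, if_neg h1j, if_neg (fun h : p.1 = c => hcO (h ▸ h1))]
      have hm2 : (Equiv.swap j c * M) p.2 = M p.2 := by
        rw [key p.2, if_neg h5, if_neg (fun h : p.2 = c => hcO (h ▸ h2))]
      exact ⟨⟨h1j, h1⟩, ⟨h5, h2⟩, h3, by rw [hm1, hm2]; exact h4⟩
    · rintro ⟨⟨h1j, h1⟩, ⟨h2j, h2⟩, h3, h4⟩
      have hm1 : (Equiv.swap j c * M) p.1 = M p.1 := by
        rw [key p.1, if_neg h1j, if_neg (fun h : p.1 = c => hcO (h ▸ h1))]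
      have hm2 : (Equiv.swap j c * M) p.2 = M p.2 := by
        rw [key p.2, if_neg h2j, if_neg (fun h : p.2 = c => hcO (h ▸ h2))]
      rw [hm1, hm2] at h4
      exact ⟨⟨h1, h2, h3, h4⟩, h2j⟩

lemma long_step_erase (hOS : O ⊆ S) (hcS : c ∈ S) (hcO : c ∉ O)
    (hcmin : ∀ x ∈ S, x ∉ O → c ≤ x) (hjO : j ∈ O) (hjc : j < c)
    (hM : M ∈ pmG S O) (hMc : M c = j) :
    (LongG O M).erase j = LongG (O.erase j) (Equiv.swap j c * M) := by
  obtain ⟨hinv, hfix, hout, hiff⟩ := mem_pmG.mp hM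
  have hjc' : j ≠ c := ne_of_lt hjc
  have key := conj_swap_apply M hinv hMc hjc'
  have hMj : M j = c := by rw [← hMc, hinv]
  have high := fun {i} (hi : i ∈ O) (hij : i ≠ j) => arc_high hOS hcmin hM hMc hi hij
  ext k
  simp only [LongG, Finset.mem_erase, Finset.mem_filter]
  constructor
  · rintro ⟨hkj, hk, hno⟩
    have hmk : (Equiv.swap j c * M) k = M k := by
      rw [key k, if_neg hkj, if_neg (fun h : k = c => hcO (h ▸ hk))]
    refine ⟨⟨hkj, hk⟩, ?_⟩
    rintro ⟨i, hi, hik, hlt⟩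
    have hij : i ≠ j := hi.1
    have hiO : i ∈ O := hi.2
    have hmi : (Equiv.swap j c * M) i = M i := by
      rw [key i, if_neg hij, if_neg (fun h : i = c => hcO (h ▸ hiO))]
    rw [hmk, hmi] at hlt
    exact hno ⟨i, hiO, hik, hlt⟩
  · rintro ⟨⟨hkj, hk⟩, hno⟩
    have hmk : (Equiv.swap j c * M) k = M k := by
      rw [key k, if_neg hkj, if_neg (fun h : k = c => hcO (h ▸ hk))]
    refine ⟨hkj, hk, ?_⟩
    rintro ⟨i, hi, hik, hlt⟩
    by_cases hij : i = j
    · subst hij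
      rw [hMj] at hlt
      exact absurd (high hk hkj) (not_lt.mpr hlt.le)
    · have hmi : (Equiv.swap j c * M) i = M i := by
        rw [key i, if_neg hij, if_neg (fun h : i = c => hcO (h ▸ hi))]
      exact hno ⟨i, ⟨hij, hi⟩, hik, by rw [hmk, hmi]; exact hlt⟩

lemma long_step_mem (hOS : O ⊆ S) (hcS : c ∈ S) (hcO : c ∉ O)
    (hcmin : ∀ x ∈ S, x ∉ O → c ≤ x) (hjO : j ∈ O) (hjc : j < c)
    (hM : M ∈ pmG S O) (hMc : M c = j) :
    j ∈ LongG O M ↔ O ∩ Finset.Iio j = ∅ := by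
  obtain ⟨hinv, hfix, hout, hiff⟩ := mem_pmG.mp hM
  have hMj : M j = c := by rw [← hMc, hinv]
  have high := fun {i} (hi : i ∈ O) (hij : i ≠ j) => arc_high hOS hcmin hM hMc hi hij
  simp only [LongG, Finset.mem_filter]
  constructor
  · rintro ⟨_, hno⟩
    rw [Finset.eq_empty_iff_forall_notMem]
    rintro x hx
    rw [Finset.mem_inter, Finset.mem_Iio] at hx
    exact hno ⟨x, hx.1, hx.2, by rw [hMj]; exact high hx.1 (ne_of_lt hx.2)⟩
  · intro hemp
    refine ⟨hjO, ?_⟩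
    rintro ⟨i, hi, hij, _⟩
    exact Finset.eq_empty_iff_forall_notMem.mp hemp i
      (Finset.mem_inter.mpr ⟨hi, Finset.mem_Iio.mpr hij⟩)

-- height set identities
lemma opener_set (hOS : O ⊆ S) (hcO : c ∉ O) (o : (Fin N)) :
    (((S.erase j).erase c ∩ Finset.Iic o).filter (fun i => i ∈ O.erase j))
      = ((S ∩ Finset.Iic o).filter (fun i => i ∈ O)).erase j := by
  ext x
  simp only [Finset.mem_filter, Finset.mem_inter, Finset.mem_erase, Finset.mem_Iic]
  constructor
  · rintro ⟨⟨⟨hxc, hxj, hxS⟩, hxo⟩, _, hxO⟩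
    exact ⟨hxj, ⟨hxS, hxo⟩, hxO⟩
  · rintro ⟨hxj, ⟨hxS, hxo⟩, hxO⟩
    exact ⟨⟨⟨fun h => hcO (h ▸ hxO), hxj, hxS⟩, hxo⟩, hxj, hxO⟩

lemma closer_set (hOS : O ⊆ S) (hjO : j ∈ O) (o : (Fin N)) :
    (((S.erase j).erase c ∩ Finset.Iic o).filter (fun i => i ∉ O.erase j))
      = ((S ∩ Finset.Iic o).filter (fun i => i ∉ O)).erase c := by
  ext x
  simp only [Finset.mem_filter, Finset.mem_inter, Finset.mem_erase, Finset.mem_Iic]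
  constructor
  · rintro ⟨⟨⟨hxc, hxj, hxS⟩, hxo⟩, hn⟩
    refine ⟨hxc, ⟨hxS, hxo⟩, fun hxO => hn ⟨hxj, hxO⟩⟩
  · rintro ⟨hxc, ⟨hxS, hxo⟩, hxO⟩
    exact ⟨⟨⟨hxc, fun h => hxO (h ▸ hjO), hxS⟩, hxo⟩, fun h => hxO h.2⟩

lemma rank_open (hOS : O ⊆ S) (hcmin : ∀ x ∈ S, x ∉ O → c ≤ x) {o : (Fin N)} (hoc : o < c) :
    (S ∩ Finset.Iic o).filter (fun i => i ∈ O) = (O ∩ Finset.Iio c) ∩ Finset.Iic o := by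
  ext x
  simp only [Finset.mem_filter, Finset.mem_inter, Finset.mem_Iic, Finset.mem_Iio]
  constructor
  · rintro ⟨⟨hxS, hxo⟩, hxO⟩
    exact ⟨⟨hxO, lt_of_le_of_lt hxo hoc⟩, hxo⟩
  · rintro ⟨⟨hxO, _⟩, hxo⟩
    exact ⟨⟨hOS hxO, hxo⟩, hxO⟩

lemma rank_close (hcmin : ∀ x ∈ S, x ∉ O → c ≤ x) {o : (Fin N)} (hoc : o < c) :
    (S ∩ Finset.Iic o).filter (fun i => i ∉ O) = ∅ := by
  rw [Finset.eq_empty_iff_forall_notMem]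
  rintro x hx
  simp only [Finset.mem_filter, Finset.mem_inter, Finset.mem_Iic] at hx
  exact absurd (hcmin x hx.1.1 hx.2) (not_le.mpr (lt_of_le_of_lt hx.1.2 hoc))

lemma h_A (hOS : O ⊆ S) (hcmin : ∀ x ∈ S, x ∉ O → c ≤ x) {o : (Fin N)} (hoc : o < c) :
    hPG S O o = ((O ∩ Finset.Iio c) ∩ Finset.Iic o).card := by
  unfold hPG
  rw [rank_open hOS hcmin hoc, rank_close hcmin hoc]
  simp

lemma h_step_A (hOS : O ⊆ S) (hcO : c ∉ O) (hcmin : ∀ x ∈ S, x ∉ O → c ≤ x)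
    (hjO : j ∈ O) (hjc : j < c) {o : (Fin N)} (hoO : o ∈ O) (hoc : o < c) (hoj : o ≠ j) :
    hPG ((S.erase j).erase c) (O.erase j) o
      = if o < j then ((O ∩ Finset.Iio c) ∩ Finset.Iic o).card
        else ((O ∩ Finset.Iio c) ∩ Finset.Iic o).card - 1 := by
  unfold hPG
  rw [opener_set hOS hcO o, closer_set hOS hjO o, rank_open hOS hcmin hoc,
    rank_close hcmin hoc]
  simp only [Finset.erase_empty, Finset.card_empty, Nat.sub_zero]
  by_cases h : o < j
  · rw [if_pos h]
    rw [Finset.erase_eq_of_notMem]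
    intro hj
    simp only [Finset.mem_inter, Finset.mem_Iic] at hj
    exact absurd hj.2 (not_le.mpr h)
  · rw [if_neg h]
    rw [Finset.card_erase_of_mem]
    simp only [Finset.mem_inter, Finset.mem_Iio, Finset.mem_Iic]
    exact ⟨⟨hjO, hjc⟩, le_of_lt (lt_of_le_of_ne (not_lt.mp h) (Ne.symm hoj))⟩

lemma h_step_high (hOS : O ⊆ S) (hcS : c ∈ S) (hcO : c ∉ O) (hjO : j ∈ O) (hjc : j < c)
    {o : (Fin N)} (hoO : o ∈ O) (hco : c < o) :
    hPG ((S.erase j).erase c) (O.erase j) o = hPG S O o := by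
  unfold hPG
  rw [opener_set hOS hcO o, closer_set hOS hjO o]
  have hjmem : j ∈ (S ∩ Finset.Iic o).filter (fun i => i ∈ O) := by
    simp only [Finset.mem_filter, Finset.mem_inter, Finset.mem_Iic]
    exact ⟨⟨hOS hjO, le_of_lt (lt_trans hjc hco)⟩, hjO⟩
  have hcmem : c ∈ (S ∩ Finset.Iic o).filter (fun i => i ∉ O) := by
    simp only [Finset.mem_filter, Finset.mem_inter, Finset.mem_Iic]
    exact ⟨⟨hcS, le_of_lt hco⟩, hcO⟩
  rw [Finset.card_erase_of_mem hjmem, Finset.card_erase_of_mem hcmem]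
  have h1 : 1 ≤ ((S ∩ Finset.Iic o).filter (fun i => i ∈ O)).card :=
    Finset.card_pos.mpr ⟨j, hjmem⟩
  have h2 : 1 ≤ ((S ∩ Finset.Iic o).filter (fun i => i ∉ O)).card :=
    Finset.card_pos.mpr ⟨c, hcmem⟩
  omega

lemma dyck_step (hOS : O ⊆ S) (hcS : c ∈ S) (hcO : c ∉ O)
    (hcmin : ∀ x ∈ S, x ∉ O → c ≤ x) (hjO : j ∈ O) (hjc : j < c)
    (hdy : ∀ m : (Fin N), ((S ∩ Finset.Iic m).filter (fun i => i ∉ O)).card ≤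
      ((S ∩ Finset.Iic m).filter (fun i => i ∈ O)).card) :
    ∀ m : (Fin N), ((((S.erase j).erase c) ∩ Finset.Iic m).filter (fun i => i ∉ O.erase j)).card ≤
      ((((S.erase j).erase c) ∩ Finset.Iic m).filter (fun i => i ∈ O.erase j)).card := by
  intro m
  rw [opener_set hOS hcO m, closer_set hOS hjO m]
  by_cases hm : m < c
  · rw [rank_close hcmin hm]
    simp
  · have hjmem : j ∈ (S ∩ Finset.Iic m).filter (fun i => i ∈ O) := by
      simp only [Finset.mem_filter, Finset.mem_inter, Finset.mem_Iic]
      exact ⟨⟨hOS hjO, le_of_lt (lt_of_lt_of_le hjc (not_lt.mp hm))⟩, hjO⟩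
    have hcmem : c ∈ (S ∩ Finset.Iic m).filter (fun i => i ∉ O) := by
      simp only [Finset.mem_filter, Finset.mem_inter, Finset.mem_Iic]
      exact ⟨⟨hcS, not_lt.mp hm⟩, hcO⟩
    rw [Finset.card_erase_of_mem hjmem, Finset.card_erase_of_mem hcmem]
    have := hdy m
    omega

lemma balance_step (hOS : O ⊆ S) (hcS : c ∈ S) (hcO : c ∉ O) (hjO : j ∈ O) (hjc : j < c)
    (hbal : (S \ O).card = O.card) :
    (((S.erase j).erase c) \ (O.erase j)).card = (O.erase j).card := by
  have hset : ((S.erase j).erase c) \ (O.erase j) = (S \ O).erase c := by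
    ext x
    simp only [Finset.mem_sdiff, Finset.mem_erase]
    constructor
    · rintro ⟨⟨hxc, hxj, hxS⟩, hn⟩
      refine ⟨hxc, hxS, fun hxO => hn ⟨hxj, hxO⟩⟩
    · rintro ⟨hxc, hxS, hxO⟩
      exact ⟨⟨hxc, fun h => hxO (h ▸ hjO), hxS⟩, fun h => hxO h.2⟩
  rw [hset, Finset.card_erase_of_mem (Finset.mem_sdiff.mpr ⟨hcS, hcO⟩),
    Finset.card_erase_of_mem hjO, hbal]

lemma subset_step (hOS : O ⊆ S) (hcO : c ∉ O) : O.erase j ⊆ (S.erase j).erase c := by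
  intro x hx
  rw [Finset.mem_erase] at hx ⊢
  exact ⟨fun h => hcO (h ▸ hx.2), Finset.mem_erase.mpr ⟨hx.1, hOS hx.2⟩⟩

end Step


lemma pmG_empty : pmG (∅ : Finset (Fin N)) ∅ = {1} := by
  ext M
  rw [mem_pmG, Finset.mem_singleton]
  constructor
  · rintro ⟨_, _, hout, _⟩
    ext x
    simp [hout x (Finset.notMem_empty x)]
  · rintro rfl
    exact ⟨fun i => rfl, fun i hi => absurd hi (Finset.notMem_empty i), fun i _ => rfl,
      fun i => by simp⟩

lemma neG_empty (M : Equiv.Perm (Fin N)) : neG (∅ : Finset (Fin N)) M = 0 := by simp [neG]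

lemma LongG_empty (M : Equiv.Perm (Fin N)) : LongG (∅ : Finset (Fin N)) M = ∅ := by simp [LongG]

theorem genAux (q : R) : ∀ (F : ℕ) (S O : Finset (Fin N)), S.card ≤ F → O ⊆ S →
    (S \ O).card = O.card →
    (∀ m : (Fin N), ((S ∩ Finset.Iic m).filter (fun i => i ∉ O)).card ≤
      ((S ∩ Finset.Iic m).filter (fun i => i ∈ O)).card) →
    ∀ t : (Fin N) → R,
    (∑ M ∈ pmG S O, q ^ neG O M * ∏ o ∈ LongG O M, t o)
      = ∏ o ∈ O, (t o + Pq q (hPG S O o)) := by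
  intro F
  induction F with
  | zero =>
    intro S O hc hOS hbal hdy t
    have hS : S = ∅ := Finset.card_eq_zero.mp (Nat.le_zero.mp hc)
    subst hS
    have hO : O = ∅ := Finset.subset_empty.mp hOS
    subst hO
    simp [pmG_empty, neG_empty, LongG_empty]
  | succ F ih =>
    intro S O hc hOS hbal hdy t
    by_cases hS : S = ∅
    · subst hS
      have hO : O = ∅ := Finset.subset_empty.mp hOS
      subst hO
      simp [pmG_empty, neG_empty, LongG_empty]
    have hSne : S.Nonempty := Finset.nonempty_iff_ne_empty.mpr hS
    have hOne : O.Nonempty := by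
      by_contra h
      rw [Finset.not_nonempty_iff_eq_empty] at h
      subst h
      rw [Finset.sdiff_empty, Finset.card_empty] at hbal
      exact hS (Finset.card_eq_zero.mp hbal)
    have hCne : (S \ O).Nonempty := by
      rw [← Finset.card_pos, hbal, Finset.card_pos]
      exact hOne
    set c := (S \ O).min' hCne with hcdef
    obtain ⟨hcS, hcO⟩ : c ∈ S ∧ c ∉ O := by
      have h := (S \ O).min'_mem hCne
      rw [Finset.mem_sdiff] at h
      exact h
    have hcmin : ∀ x ∈ S, x ∉ O → c ≤ x := fun x hx hxO =>
      (S \ O).min'_le x (Finset.mem_sdiff.mpr ⟨hx, hxO⟩)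
    set A := O ∩ Finset.Iio c with hAdef
    have hAO : A ⊆ O := Finset.inter_subset_left
    have hAmem : ∀ {j : (Fin N)}, j ∈ A → j ∈ O ∧ j < c := by
      intro j hj
      rw [hAdef, Finset.mem_inter, Finset.mem_Iio] at hj
      exact hj
    have hAne : A.Nonempty := by
      have h1 : c ∈ (S ∩ Finset.Iic c).filter (fun i => i ∉ O) := by
        simp [hcS, hcO]
      have h2 := hdy c
      have h3 : 0 < ((S ∩ Finset.Iic c).filter (fun i => i ∈ O)).card := by
        have := Finset.card_pos.mpr ⟨c, h1⟩
        omega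
      obtain ⟨x, hx⟩ := Finset.card_pos.mp h3
      simp only [Finset.mem_filter, Finset.mem_inter, Finset.mem_Iic] at hx
      refine ⟨x, Finset.mem_inter.mpr ⟨hx.2, Finset.mem_Iio.mpr ?_⟩⟩
      exact lt_of_le_of_ne hx.1.2 (fun h => hcO (h ▸ hx.2))
    have hmap : ∀ M ∈ pmG S O, M c ∈ A := by
      intro M hM
      obtain ⟨h1, h2⟩ := Mc_mem hOS hcS hcO hcmin hM
      exact Finset.mem_inter.mpr ⟨h1, Finset.mem_Iio.mpr h2⟩
    rw [← Finset.sum_fiberwise_of_maps_to hmap]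
    have hinner : ∀ j ∈ A,
        (∑ M ∈ (pmG S O).filter (fun M => M c = j), q ^ neG O M * ∏ o ∈ LongG O M, t o)
        = (if (O ∩ Finset.Iio j).card = 0 then t j else q ^ (O ∩ Finset.Iio j).card) *
          ∏ o ∈ O.erase j, (t o + Pq q (hPG ((S.erase j).erase c) (O.erase j) o)) := by
      intro j hj
      obtain ⟨hjO, hjc⟩ := hAmem hj
      have hsum : (∑ M ∈ (pmG S O).filter (fun M => M c = j),
            q ^ neG O M * ∏ o ∈ LongG O M, t o)
          = ∑ M' ∈ pmG ((S.erase j).erase c) (O.erase j),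
            (if (O ∩ Finset.Iio j).card = 0 then t j else q ^ (O ∩ Finset.Iio j).card) *
              (q ^ neG (O.erase j) M' * ∏ o ∈ LongG (O.erase j) M', t o) := by
        refine Finset.sum_nbij' (fun M => Equiv.swap j c * M) (fun M' => Equiv.swap j c * M')
          ?_ ?_ ?_ ?_ ?_
        · intro M hM
          rw [Finset.mem_filter] at hM
          exact pm_fwd hOS hcS hcO hjO hjc hM.1 hM.2
        · intro M' hM'
          obtain ⟨h1, h2⟩ := pm_bwd hOS hcS hcO hjO hjc hM'
          exact Finset.mem_filter.mpr ⟨h1, h2⟩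
        · intro M hM
          show Equiv.swap j c * (Equiv.swap j c * M) = M
          rw [← mul_assoc, Equiv.swap_mul_self, one_mul]
        · intro M' hM'
          show Equiv.swap j c * (Equiv.swap j c * M') = M'
          rw [← mul_assoc, Equiv.swap_mul_self, one_mul]
        · intro M hM
          rw [Finset.mem_filter] at hM
          rw [ne_step hOS hcS hcO hcmin hjO hjc hM.1 hM.2, pow_add]
          have hl1 : (LongG O M).erase j = LongG (O.erase j) (Equiv.swap j c * M) :=
            long_step_erase hOS hcS hcO hcmin hjO hjc hM.1 hM.2
          have hl2 := long_step_mem hOS hcS hcO hcmin hjO hjc hM.1 hM.2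
          by_cases hz : (O ∩ Finset.Iio j).card = 0
          · have hemp : O ∩ Finset.Iio j = ∅ := Finset.card_eq_zero.mp hz
            have hjL : j ∈ LongG O M := hl2.mpr hemp
            rw [← Finset.mul_prod_erase _ _ hjL, hl1, if_pos hz, hz, pow_zero]
            ring
          · have hjL : j ∉ LongG O M := fun h => hz (by rw [hl2.mp h]; simp)
            have hpr : ∏ o ∈ LongG O M, t o
                = ∏ o ∈ LongG (O.erase j) (Equiv.swap j c * M), t o := by
              rw [← hl1, Finset.erase_eq_of_notMem hjL]
            rw [hpr, if_neg hz]
            ring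
      rw [hsum, ← Finset.mul_sum]
      congr 1
      have hcjS : c ∈ S.erase j := Finset.mem_erase.mpr ⟨(ne_of_lt hjc).symm, hcS⟩
      have hcard' : ((S.erase j).erase c).card ≤ F := by
        rw [Finset.card_erase_of_mem hcjS, Finset.card_erase_of_mem (hOS hjO)]
        omega
      exact ih ((S.erase j).erase c) (O.erase j) hcard' (subset_step hOS hcO)
        (balance_step hOS hcS hcO hjO hjc hbal)
        (dyck_step hOS hcS hcO hcmin hjO hjc hdy) t
    rw [Finset.sum_congr rfl hinner]
    have hperj : ∀ j ∈ A,
        (if (O ∩ Finset.Iio j).card = 0 then t j else q ^ (O ∩ Finset.Iio j).card) *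
          ∏ o ∈ O.erase j, (t o + Pq q (hPG ((S.erase j).erase c) (O.erase j) o))
        = (∏ o ∈ O \ A, (t o + Pq q (hPG S O o))) *
          ((if (A ∩ Finset.Iio j).card = 0 then t j else q ^ (A ∩ Finset.Iio j).card) *
            ∏ o ∈ A.erase j, (t o + Pq q (if o < j then (A ∩ Finset.Iic o).card
              else (A ∩ Finset.Iic o).card - 1))) := by
      intro j hj
      obtain ⟨hjO, hjc⟩ := hAmem hj
      have hsub : A.erase j ⊆ O.erase j := fun x hx => Finset.mem_erase.mpr
        ⟨(Finset.mem_erase.mp hx).1, hAO (Finset.mem_of_mem_erase hx)⟩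
      rw [← Finset.prod_sdiff hsub]
      have hsd : (O.erase j) \ (A.erase j) = O \ A := by
        ext x
        simp only [Finset.mem_sdiff, Finset.mem_erase]
        constructor
        · rintro ⟨⟨hxj, hxO⟩, hn⟩
          exact ⟨hxO, fun hxA => hn ⟨hxj, hxA⟩⟩
        · rintro ⟨hxO, hxA⟩
          exact ⟨⟨fun h => hxA (h ▸ hj), hxO⟩, fun h => hxA h.2⟩
      rw [hsd]
      have hO_Iio : O ∩ Finset.Iio j = A ∩ Finset.Iio j := by
        ext x
        rw [hAdef]
        simp only [Finset.mem_inter, Finset.mem_Iio]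
        constructor
        · rintro ⟨hxO, hxj⟩
          exact ⟨⟨hxO, lt_trans hxj hjc⟩, hxj⟩
        · rintro ⟨⟨hxO, _⟩, hxj⟩
          exact ⟨hxO, hxj⟩
      have hp1 : ∏ o ∈ O \ A, (t o + Pq q (hPG ((S.erase j).erase c) (O.erase j) o))
          = ∏ o ∈ O \ A, (t o + Pq q (hPG S O o)) := by
        refine Finset.prod_congr rfl fun o ho => ?_
        rw [Finset.mem_sdiff] at ho
        have hco : c < o := by
          by_contra hn
          rcases eq_or_lt_of_le (not_lt.mp hn) with h | h
          · exact hcO (h ▸ ho.1)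
          · refine ho.2 ?_
            rw [hAdef]
            exact Finset.mem_inter.mpr ⟨ho.1, Finset.mem_Iio.mpr h⟩
        rw [h_step_high hOS hcS hcO hjO hjc ho.1 hco]
      have hp2 : ∏ o ∈ A.erase j, (t o + Pq q (hPG ((S.erase j).erase c) (O.erase j) o))
          = ∏ o ∈ A.erase j, (t o + Pq q (if o < j then (A ∩ Finset.Iic o).card
              else (A ∩ Finset.Iic o).card - 1)) := by
        refine Finset.prod_congr rfl fun o ho => ?_
        rw [Finset.mem_erase] at ho
        obtain ⟨hoO, hoc⟩ := hAmem ho.2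
        rw [h_step_A hOS hcO hcmin hjO hjc hoO hoc ho.1]
      rw [hp1, hp2, hO_Iio]
      ring
    rw [Finset.sum_congr rfl hperj, ← Finset.mul_sum, keyid q A.card A le_rfl hAne t]
    have hp3 : ∏ o ∈ A, (t o + Pq q (A ∩ Finset.Iic o).card)
        = ∏ o ∈ A, (t o + Pq q (hPG S O o)) := by
      refine Finset.prod_congr rfl fun o ho => ?_
      obtain ⟨hoO, hoc⟩ := hAmem ho
      rw [h_A hOS hcmin hoc, ← hAdef]
    rw [hp3, Finset.prod_sdiff hAO]


end AuxDev

set_option maxHeartbeats 1000000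

theorem nesting_Long_generating_function (n : ℕ) (O : Finset (Fin (2 * n)))
    (hD : IsDyckType n O) (hO : O.card = n)
    (R : Type*) [CommRing R] (q : R) (t : Fin n → R) :
    ∑ M ∈ matchingsOfType n O, q ^ neM O M * ∏ k ∈ LongM n O hO M, t k
      = ∏ k : Fin n, (t k + ∑ i ∈ Finset.Icc 1 (riseHeight n O hO k - 1), q ^ i) := by
  -- transfer t along the opener enumeration
  set th : Fin (2 * n) → R := fun o =>
    if h : o ∈ O then t ((O.orderIsoOfFin hO).symm ⟨o, h⟩) else 0 with hth
  have hopen_mem : ∀ k : Fin n, opener n O hO k ∈ O := fun k => Finset.orderEmbOfFin_mem O hO k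
  have hth_opener : ∀ k : Fin n, th (opener n O hO k) = t k := by
    intro k
    rw [hth]
    simp only [dif_pos (hopen_mem k)]
    congr 1
    rw [OrderIso.symm_apply_eq]
    ext
    rw [Finset.coe_orderIsoOfFin_apply]
    rfl
  have hopen_inj : ∀ x ∈ (Finset.univ : Finset (Fin n)), ∀ y ∈ Finset.univ,
      opener n O hO x = opener n O hO y → x = y := fun x _ y _ h =>
    (O.orderEmbOfFin hO).injective h
  have hsurj : ∀ o ∈ O, ∃ k : Fin n, opener n O hO k = o := by
    intro o ho
    have := Finset.range_orderEmbOfFin O hO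
    have h2 : (o : Fin (2 * n)) ∈ Set.range (O.orderEmbOfFin hO) := by
      rw [this]; exact ho
    obtain ⟨k, hk⟩ := h2
    exact ⟨k, hk⟩
  -- the matching sets agree
  have hmatch : matchingsOfType n O = pmG Finset.univ O := by
    ext M
    unfold matchingsOfType pmG
    rw [Finset.mem_filter, Finset.mem_filter]
    constructor
    · rintro ⟨hu, h1, h2, h3⟩
      exact ⟨hu, h1, fun i _ => h2 i, fun i hi => absurd (Finset.mem_univ i) hi, h3⟩
    · rintro ⟨hu, h1, h2, h3, h4⟩
      exact ⟨hu, h1, fun i => h2 i (Finset.mem_univ i), h4⟩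
  -- Long sets correspond
  have hlong : ∀ M : Equiv.Perm (Fin (2 * n)),
      LongG O M = (LongM n O hO M).image (opener n O hO) := by
    intro M
    ext o
    simp only [LongG, LongM, Finset.mem_filter, Finset.mem_image, Finset.mem_univ, true_and]
    constructor
    · rintro ⟨ho, hno⟩
      obtain ⟨k, hk⟩ := hsurj o ho
      exact ⟨k, by rw [hk]; exact hno, hk⟩
    · rintro ⟨k, hno, rfl⟩
      exact ⟨hopen_mem k, hno⟩
  have hprodlong : ∀ M : Equiv.Perm (Fin (2 * n)),
      ∏ k ∈ LongM n O hO M, t k = ∏ o ∈ LongG O M, th o := by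
    intro M
    rw [hlong M]
    rw [Finset.prod_image (g := opener n O hO) (fun x _ y _ h => (O.orderEmbOfFin hO).injective h)]
    exact Finset.prod_congr rfl fun k _ => (hth_opener k).symm
  -- heights correspond
  have hheight : ∀ k : Fin n, hPG Finset.univ O (opener n O hO k) = riseHeight n O hO k := by
    intro k
    unfold hPG riseHeight
    rw [Finset.univ_inter]
  -- RHS products correspond
  have hrhs : ∏ k : Fin n, (t k + ∑ i ∈ Finset.Icc 1 (riseHeight n O hO k - 1), q ^ i)
      = ∏ o ∈ O, (th o + Pq q (hPG Finset.univ O o)) := by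
    refine Finset.prod_bij (fun k _ => opener n O hO k) (fun k _ => hopen_mem k)
      hopen_inj (fun o ho => by obtain ⟨k, hk⟩ := hsurj o ho; exact ⟨k, Finset.mem_univ k, hk⟩)
      (fun k _ => ?_)
    rw [hth_opener k, hheight k]
    rfl
  -- hypotheses of genAux
  have hbal : ((Finset.univ : Finset (Fin (2 * n))) \ O).card = O.card := by
    rw [Finset.card_sdiff_of_subset (Finset.subset_univ O), Finset.card_univ, Fintype.card_fin, hO]
    omega
  have hdy : ∀ m : Fin (2 * n),
      (((Finset.univ : Finset (Fin (2 * n))) ∩ Finset.Iic m).filter (fun i => i ∉ O)).card ≤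
        ((Finset.univ ∩ Finset.Iic m).filter (fun i => i ∈ O)).card := by
    intro m
    rw [Finset.univ_inter]
    exact hD.2 m
  have := genAux q (Finset.univ : Finset (Fin (2 * n))).card Finset.univ O le_rfl
    (Finset.subset_univ O) hbal hdy th
  rw [hmatch, hrhs, ← this]
  refine Finset.sum_congr rfl fun M hM => ?_
  rw [hprodlong M]
  rfl
end

section
/- Let D be a Dyck path of semilength n with height sequence (h_1,...,h_n). Then Σ_{M ∈ M_n(D)} p^{cr(M)} q^{ne(M)} Π_{i ∈ Left(M)} s_i Π_{i ∈ Long(M)} t_i = Π_{k=1}^n (t_k p^{h_k−1} + p^{h_k−2}q + ··· + p q^{h_k−2} + s_k q^{h_k−1}). -/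
open Finset

section General
variable {α : Type} [LinearOrder α] [Fintype α]

def matchA (O : Finset α) : Finset (Equiv.Perm α) :=
  univ.filter (fun M => (∀ i, M (M i) = i) ∧ (∀ i, M i ≠ i) ∧ (∀ i, i ∈ O ↔ i < M i))

noncomputable def openerA (n : ℕ) (O : Finset α) (hO : O.card = n) (k : Fin n) : α :=
  O.orderEmbOfFin hO k

noncomputable def heightA [LocallyFiniteOrderBot α] (n : ℕ) (O : Finset α) (hO : O.card = n) (k : Fin n) : ℕ :=
  ((Iic (openerA n O hO k)).filter (fun i => i ∈ O)).card -
    ((Iic (openerA n O hO k)).filter (fun i => i ∉ O)).card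

def neA (O : Finset α) (M : Equiv.Perm α) : ℕ :=
  (univ.filter (fun p : α × α => p.1 ∈ O ∧ p.2 ∈ O ∧ p.1 < p.2 ∧ M p.2 < M p.1)).card

noncomputable def longA (n : ℕ) (O : Finset α) (hO : O.card = n) (M : Equiv.Perm α) : Finset (Fin n) :=
  univ.filter (fun k => ¬ ∃ i ∈ O, i < openerA n O hO k ∧ M (openerA n O hO k) < M i)

def crA (O : Finset α) (M : Equiv.Perm α) : ℕ :=
  (univ.filter (fun p : α × α => p.1 ∈ O ∧ p.2 ∈ O ∧ p.1 < p.2 ∧ p.2 < M p.1 ∧ M p.1 < M p.2)).card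

noncomputable def leftA (n : ℕ) (O : Finset α) (hO : O.card = n) (M : Equiv.Perm α) : Finset (Fin n) :=
  univ.filter (fun k => ¬ ∃ i ∈ O, i < openerA n O hO k ∧ openerA n O hO k < M i ∧ M i < M (openerA n O hO k))

noncomputable def mkLFOB (β : Type) [LinearOrder β] [Fintype β] : LocallyFiniteOrderBot β where
  finsetIio a := Finset.univ.filter (· < a)
  finsetIic a := Finset.univ.filter (· ≤ a)
  finset_mem_Iio a x := by simp
  finset_mem_Iic a x := by simp

/-- the type with two points deleted -/
abbrev dsub (o c : α) : Type := {x : α // x ≠ o ∧ x ≠ c}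

def dsubO (O : Finset α) (o c : α) : Finset (dsub o c) :=
  univ.filter (fun x => x.1 ∈ O)

lemma mem_dsubO {O : Finset α} {o c : α} {x : dsub o c} : x ∈ dsubO O o c ↔ x.1 ∈ O := by
  simp [dsubO]

lemma matchA_spec {O : Finset α} {M : Equiv.Perm α} (h : M ∈ matchA O) :
    (∀ i, M (M i) = i) ∧ (∀ i, M i ≠ i) ∧ (∀ i, i ∈ O ↔ i < M i) := by
  simpa [matchA] using h

lemma closer_lt {O : Finset α} {M : Equiv.Perm α} (h : M ∈ matchA O) {x : α} (hx : x ∉ O) :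
    M x < x := by
  obtain ⟨_, hfix, hiff⟩ := matchA_spec h
  rcases lt_trichotomy (M x) x with h' | h' | h'
  · exact h'
  · exact absurd h' (hfix x)
  · exact absurd ((hiff x).mpr h') hx

lemma card_dsub {o c : α} (hoc : o ≠ c) :
    Fintype.card (dsub o c) = Fintype.card α - 2 := by
  classical
  have : Fintype.card (dsub o c) = (univ.filter (fun x : α => x ≠ o ∧ x ≠ c)).card :=
    Fintype.card_subtype _
  rw [this]
  have h1 : (univ.filter (fun x : α => x ≠ o ∧ x ≠ c)) = univ \ {o, c} := by
    ext x; simp [not_or]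
  rw [h1, card_sdiff_of_subset (by simp)]
  simp [card_insert_of_notMem, hoc, Finset.card_univ]

lemma card_dsubO {O : Finset α} {o c : α} (ho : o ∈ O) (hc : c ∉ O) :
    (dsubO O o c).card = O.card - 1 := by
  classical
  have : (dsubO O o c).card = (O.erase o).card := by
    apply Finset.card_nbij (fun x => x.1)
    · intro a ha
      rw [mem_coe, mem_dsubO] at ha
      exact Finset.mem_erase.mpr ⟨a.2.1, ha⟩
    · intro a _ b _ hab; exact Subtype.ext hab
    · intro x hx
      simp only [Finset.coe_erase, Set.mem_diff, Set.mem_singleton_iff, mem_coe,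
        Finset.mem_erase] at hx
      rcases hx with ⟨hx1, hx2⟩
      refine ⟨⟨x, hx2, ?_⟩, ?_, rfl⟩
      · rintro rfl; exact hc hx1
      · simp [mem_dsubO, hx1]
  rw [this, Finset.card_erase_of_mem ho]

/-- transfer of Iic-counts to the subtype (with the `mkLFOB` instance or any) -/
lemma dsub_Iic_card [LocallyFiniteOrderBot α] {o c : α} [LocallyFiniteOrderBot (dsub o c)]
    (P : dsub o c → Prop) [DecidablePred P] (Q : α → Prop) [DecidablePred Q]
    (hPQ : ∀ x : dsub o c, P x ↔ Q x.1) (m : dsub o c) :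
    ((Iic m).filter P).card
      = ((Iic m.1).filter (fun x => Q x ∧ x ≠ o ∧ x ≠ c)).card := by
  apply Finset.card_nbij (fun x => x.1)
  · intro a ha
    simp only [mem_coe, mem_filter, mem_Iic] at ha ⊢
    exact ⟨Subtype.coe_le_coe.mpr ha.1, (hPQ a).mp ha.2, a.2⟩
  · intro a _ b _ hab; exact Subtype.ext hab
  · intro x hx
    simp only [coe_filter, Set.mem_setOf_eq, mem_Iic] at hx ⊢
    exact ⟨⟨x, hx.2.2⟩, ⟨Subtype.coe_le_coe.mp hx.1, (hPQ _).mpr hx.2.1⟩, rfl⟩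


lemma openerA_mem (n : ℕ) (O : Finset α) (hO : O.card = n) (k : Fin n) :
    openerA n O hO k ∈ O := Finset.orderEmbOfFin_mem O hO k

lemma openerA_strictMono (n : ℕ) (O : Finset α) (hO : O.card = n) :
    StrictMono (openerA n O hO) := (O.orderEmbOfFin hO).strictMono

lemma le_last_opener {n : ℕ} {O : Finset α} (hO : O.card = n + 1) {x : α} (hx : x ∈ O) :
    x ≤ openerA (n + 1) O hO (Fin.last n) := by
  have : x ∈ Set.range (O.orderEmbOfFin hO) := by
    rw [Finset.range_orderEmbOfFin]; exact hx
  obtain ⟨k, rfl⟩ := this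
  exact (openerA_strictMono (n+1) O hO).monotone (Fin.le_last k)

/-- the set of elements above `x` -/
def above (x : α) : Finset α := univ.filter (fun z => x < z)

lemma mem_above {x z : α} : z ∈ above x ↔ x < z := by simp [above]

lemma card_above [LocallyFiniteOrderBot α] (x : α) :
    (above x).card = Fintype.card α - (Iic x).card := by
  have h2 := Finset.card_filter_add_card_filter_not (s := univ) (fun z => x < z)
  have h1 : univ.filter (fun z => ¬ x < z) = Iic x := by
    ext z; simp [not_lt]
  rw [h1, Finset.card_univ] at h2
  show (univ.filter (fun z => x < z)).card = _
  omega

lemma filter_Iic_last [LocallyFiniteOrderBot α] {n : ℕ} {O : Finset α} (hO : O.card = n + 1) :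
    (Iic (openerA (n+1) O hO (Fin.last n))).filter (fun i => i ∈ O) = O := by
  ext z
  simp only [mem_filter, mem_Iic]
  exact ⟨fun h => h.2, fun h => ⟨le_last_opener hO h, h⟩⟩

lemma height_last [LocallyFiniteOrderBot α] {n : ℕ} {O : Finset α}
    (hcard : Fintype.card α = 2 * (n + 1)) (hO : O.card = n + 1) :
    heightA (n+1) O hO (Fin.last n) = (above (openerA (n+1) O hO (Fin.last n))).card := by
  set o := openerA (n+1) O hO (Fin.last n) with ho
  have h1 : ((Iic o).filter (fun i => i ∈ O)).card = n + 1 := by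
    rw [filter_Iic_last hO, hO]
  have h2 := Finset.card_filter_add_card_filter_not (s := Iic o) (fun i => i ∈ O)
  have h3 := card_above o
  have h4 : (Iic o).card ≤ Fintype.card α := by
    rw [← Finset.card_univ]; exact Finset.card_le_card (subset_univ _)
  rw [heightA]
  rw [← ho]
  omega

section Step

variable [LocallyFiniteOrderBot α] {n : ℕ} {O : Finset α} {o c : α}

lemma dsub_dyck [LocallyFiniteOrderBot (dsub o c)]
    (hcard : Fintype.card α = 2 * (n + 1)) (hO : O.card = n + 1)
    (hD : ∀ m : α, ((Iic m).filter (fun i => i ∉ O)).card ≤ ((Iic m).filter (fun i => i ∈ O)).card)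
    (ho : o = openerA (n+1) O hO (Fin.last n)) (hoc : o < c) :
    ∀ m : dsub o c, ((Iic m).filter (fun i => i ∉ dsubO O o c)).card ≤
      ((Iic m).filter (fun i => i ∈ dsubO O o c)).card := by
  have homem : o ∈ O := ho ▸ openerA_mem (n+1) O hO (Fin.last n)
  have hmax : ∀ x ∈ O, x ≤ o := fun x hx => ho ▸ le_last_opener hO hx
  have hcnot : c ∉ O := fun h => absurd (hmax c h) (not_le.mpr hoc)
  intro m
  have e1 : ((Iic m).filter (fun i => i ∈ dsubO O o c)).card
      = ((Iic m.1).filter (fun x => x ∈ O ∧ x ≠ o ∧ x ≠ c)).card :=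
    dsub_Iic_card _ (fun x => x ∈ O) (fun x => mem_dsubO) m
  have e2 : ((Iic m).filter (fun i => i ∉ dsubO O o c)).card
      = ((Iic m.1).filter (fun x => x ∉ O ∧ x ≠ o ∧ x ≠ c)).card :=
    dsub_Iic_card _ (fun x => x ∉ O) (fun x => not_congr mem_dsubO) m
  rw [e1, e2]
  have f1 : (Iic m.1).filter (fun x => x ∈ O ∧ x ≠ o ∧ x ≠ c)
      = ((Iic m.1).filter (fun x => x ∈ O)).erase o := by
    ext z
    simp only [Finset.mem_erase, mem_filter, mem_Iic]
    constructor
    · rintro ⟨h1, h2, h3, _⟩; exact ⟨h3, h1, h2⟩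
    · rintro ⟨h3, h1, h2⟩; exact ⟨h1, h2, h3, fun hzc => hcnot (hzc ▸ h2)⟩
  have f2 : (Iic m.1).filter (fun x => x ∉ O ∧ x ≠ o ∧ x ≠ c)
      = ((Iic m.1).filter (fun x => x ∉ O)).erase c := by
    ext z
    simp only [Finset.mem_erase, mem_filter, mem_Iic]
    constructor
    · rintro ⟨h1, h2, _, h4⟩; exact ⟨h4, h1, h2⟩
    · rintro ⟨h4, h1, h2⟩; exact ⟨h1, h2, fun hzo => h2 (hzo ▸ homem), h4⟩
  rw [f1, f2]
  set A := ((Iic m.1).filter (fun x => x ∈ O)).card with hA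
  set B := ((Iic m.1).filter (fun x => x ∉ O)).card with hB
  have hBA : B ≤ A := hD m.1
  by_cases hom : o ≤ m.1
  · have hAo : o ∈ (Iic m.1).filter (fun x => x ∈ O) := by
      simp [mem_filter, mem_Iic, hom, homem]
    rw [Finset.card_erase_of_mem hAo]
    by_cases hcm : c ≤ m.1
    · have hBc : c ∈ (Iic m.1).filter (fun x => x ∉ O) := by
        simp [mem_filter, mem_Iic, hcm, hcnot]
      rw [Finset.card_erase_of_mem hBc]
      have : 1 ≤ A := Finset.card_pos.mpr ⟨o, hAo⟩
      omega
    · have hBc : c ∉ (Iic m.1).filter (fun x => x ∉ O) := by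
        simp only [mem_filter, mem_Iic]; tauto
      rw [Finset.erase_eq_of_notMem hBc]
      -- need B ≤ A - 1 : A = n+1 and B ≤ n
      have hAn : A = n + 1 := by
        rw [hA]
        have : (Iic m.1).filter (fun x => x ∈ O) = O := by
          ext z
          simp only [mem_filter, mem_Iic]
          exact ⟨fun h => h.2, fun h => ⟨le_trans (hmax z h) hom, h⟩⟩
        rw [this, hO]
      have hBn : B ≤ n := by
        have hsub : (Iic m.1).filter (fun x => x ∉ O) ⊆ (univ.filter (fun x => x ∉ O)).erase c := by
          intro z hz
          simp only [mem_filter, mem_Iic] at hz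
          simp only [Finset.mem_erase, mem_filter, mem_univ, true_and]
          exact ⟨fun hzc => hcm (hzc ▸ hz.1), hz.2⟩
        have hcu : c ∈ univ.filter (fun x => x ∉ O) := by simp [hcnot]
        have := Finset.card_le_card hsub
        rw [Finset.card_erase_of_mem hcu] at this
        have htot := Finset.card_filter_add_card_filter_not (s := univ) (fun x => x ∈ O)
        have hOu : (univ.filter (fun x => x ∈ O)).card = n + 1 := by
          rw [Finset.filter_univ_mem, hO]
        rw [Finset.card_univ, hcard] at htot
        omega
      omega
  · have hAo : o ∉ (Iic m.1).filter (fun x => x ∈ O) := by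
      simp only [mem_filter, mem_Iic]; tauto
    have hBc : c ∉ (Iic m.1).filter (fun x => x ∉ O) := by
      simp only [mem_filter, mem_Iic]
      rintro ⟨hcm, -⟩
      exact hom (le_trans hoc.le hcm)
    rw [Finset.erase_eq_of_notMem hAo, Finset.erase_eq_of_notMem hBc]
    exact hBA


lemma between_above [LocallyFiniteOrderBot α] (hoc : o < c) :
    (above o).card = (univ.filter (fun z => o < z ∧ z < c)).card + 1 + (above c).card := by
  have hsplit := Finset.card_filter_add_card_filter_not (s := above o) (fun z => z < c)
  have h1 : (above o).filter (fun z => z < c) = univ.filter (fun z => o < z ∧ z < c) := by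
    ext z; simp [above, and_comm]
  have h2 : (above o).filter (fun z => ¬ z < c) = insert c (above c) := by
    ext z
    simp only [mem_filter, mem_above, not_lt, Finset.mem_insert]
    constructor
    · rintro ⟨h3, h4⟩
      rcases eq_or_lt_of_le h4 with h5 | h5
      · exact Or.inl h5.symm
      · exact Or.inr h5
    · rintro (rfl | h3)
      · exact ⟨hoc, le_refl _⟩
      · exact ⟨lt_trans hoc h3, h3.le⟩
  have h3 : c ∉ above c := by simp [mem_above]
  rw [h1, h2, Finset.card_insert_of_notMem h3] at hsplit
  omega

lemma dsub_opener [LocallyFiniteOrderBot (dsub o c)] (hO : O.card = n + 1)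
    (hO' : (dsubO O o c).card = n)
    (ho : o = openerA (n+1) O hO (Fin.last n)) (hoc : o < c) (k : Fin n) :
    (openerA n (dsubO O o c) hO' k).1 = openerA (n+1) O hO k.castSucc := by
  have hlt : ∀ j : Fin n, openerA (n+1) O hO j.castSucc < o := fun j =>
    ho ▸ openerA_strictMono (n+1) O hO (Fin.castSucc_lt_last j)
  set f : Fin n → dsub o c := fun j =>
    ⟨openerA (n+1) O hO j.castSucc, ne_of_lt (hlt j), ne_of_lt (lt_trans (hlt j) hoc)⟩ with hf
  have hmem : ∀ j, f j ∈ dsubO O o c := fun j => mem_dsubO.mpr (openerA_mem (n+1) O hO _)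
  have hmono : StrictMono f := fun a b hab =>
    Subtype.mk_lt_mk.mpr (openerA_strictMono (n+1) O hO (Fin.castSucc_lt_castSucc_iff.mpr hab))
  have huniq := Finset.orderEmbOfFin_unique hO' hmem hmono
  have : openerA n (dsubO O o c) hO' k = f k := (congrFun huniq k).symm
  rw [this]

lemma dsub_height [LocallyFiniteOrderBot α] [LocallyFiniteOrderBot (dsub o c)]
    (hO : O.card = n + 1) (hO' : (dsubO O o c).card = n)
    (ho : o = openerA (n+1) O hO (Fin.last n)) (hoc : o < c) (k : Fin n) :
    heightA n (dsubO O o c) hO' k = heightA (n+1) O hO k.castSucc := by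
  have hlt : openerA (n+1) O hO k.castSucc < o :=
    ho ▸ openerA_strictMono (n+1) O hO (Fin.castSucc_lt_last k)
  set u := openerA (n+1) O hO k.castSucc with hu
  have hval : (openerA n (dsubO O o c) hO' k).1 = u := dsub_opener hO hO' ho hoc k
  rw [heightA, heightA]
  have e1 : ((Iic (openerA n (dsubO O o c) hO' k)).filter (fun i => i ∈ dsubO O o c)).card
      = ((Iic u).filter (fun x => x ∈ O ∧ x ≠ o ∧ x ≠ c)).card := by
    rw [← hval]
    exact dsub_Iic_card _ (fun x => x ∈ O) (fun x => mem_dsubO) _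
  have e2 : ((Iic (openerA n (dsubO O o c) hO' k)).filter (fun i => i ∉ dsubO O o c)).card
      = ((Iic u).filter (fun x => x ∉ O ∧ x ≠ o ∧ x ≠ c)).card := by
    rw [← hval]
    exact dsub_Iic_card _ (fun x => x ∉ O) (fun x => not_congr mem_dsubO) _
  have f1 : (Iic u).filter (fun x => x ∈ O ∧ x ≠ o ∧ x ≠ c) = (Iic u).filter (fun x => x ∈ O) := by
    apply Finset.filter_congr
    intro z hz
    rw [mem_Iic] at hz
    have hzo : z ≠ o := ne_of_lt (lt_of_le_of_lt hz hlt)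
    have hzc : z ≠ c := ne_of_lt (lt_trans (lt_of_le_of_lt hz hlt) hoc)
    simp [hzo, hzc]
  have f2 : (Iic u).filter (fun x => x ∉ O ∧ x ≠ o ∧ x ≠ c) = (Iic u).filter (fun x => x ∉ O) := by
    apply Finset.filter_congr
    intro z hz
    rw [mem_Iic] at hz
    have hzo : z ≠ o := ne_of_lt (lt_of_le_of_lt hz hlt)
    have hzc : z ≠ c := ne_of_lt (lt_trans (lt_of_le_of_lt hz hlt) hoc)
    simp [hzo, hzc]
  rw [← hu]; erw [e1, e2]; rw [f1, f2]

lemma sub_pf {M : Equiv.Perm α} (hM : M ∈ matchA O) (hMo : M o = c) :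
    ∀ x : α, (M x ≠ o ∧ M x ≠ c) ↔ (x ≠ o ∧ x ≠ c) := by
  obtain ⟨hinv, hfix, hiff⟩ := matchA_spec hM
  have hMc : M c = o := by rw [← hMo, hinv]
  intro x
  refine Iff.symm ?_
  constructor
  · rintro ⟨h1, h2⟩
    refine ⟨fun h => h2 ?_, fun h => h1 ?_⟩
    · rw [← hinv x, h, hMo]
    · rw [← hinv x, h, hMc]
  · rintro ⟨h1, h2⟩
    refine ⟨fun h => h2 ?_, fun h => h1 ?_⟩
    · rw [h, hMo]
    · rw [h, hMc]

lemma subM_mem {M : Equiv.Perm α} (hM : M ∈ matchA O) (hMo : M o = c) :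
    M.subtypePerm (sub_pf hM hMo) ∈ matchA (dsubO O o c) := by
  obtain ⟨hinv, hfix, hiff⟩ := matchA_spec hM
  simp only [matchA, mem_filter, mem_univ, true_and]
  refine ⟨fun i => ?_, fun i h => ?_, fun i => ?_⟩
  · apply Subtype.ext; simp [Equiv.Perm.subtypePerm_apply, hinv]
  · exact hfix i.1 (congrArg Subtype.val h)
  · rw [mem_dsubO, hiff i.1]
    rw [← Subtype.coe_lt_coe]
    simp [Equiv.Perm.subtypePerm_apply]

lemma cr_split {M : Equiv.Perm α} (hO : O.card = n + 1) (hM : M ∈ matchA O) (hMo : M o = c)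
    (ho : o = openerA (n+1) O hO (Fin.last n)) (hoc : o < c) :
    crA O M = crA (dsubO O o c) (M.subtypePerm (sub_pf hM hMo))
      + (univ.filter (fun z => o < z ∧ z < c)).card := by
  obtain ⟨hinv, hfix, hiff⟩ := matchA_spec hM
  have hmax : ∀ x ∈ O, x ≤ o := fun x hx => ho ▸ le_last_opener hO hx
  have homem : o ∈ O := ho ▸ openerA_mem (n+1) O hO (Fin.last n)
  have hcnot : c ∉ O := fun h => absurd (hmax c h) (not_le.mpr hoc)
  have hsplit := Finset.card_filter_add_card_filter_not
    (s := univ.filter (fun p : α × α => p.1 ∈ O ∧ p.2 ∈ O ∧ p.1 < p.2 ∧ p.2 < M p.1 ∧ M p.1 < M p.2))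
    (fun p => p.2 = o)
  have hc1 : (((univ.filter (fun p : α × α => p.1 ∈ O ∧ p.2 ∈ O ∧ p.1 < p.2 ∧ p.2 < M p.1 ∧ M p.1 < M p.2))).filter
      (fun p => p.2 = o)).card = (univ.filter (fun z => o < z ∧ z < c)).card := by
    apply Finset.card_bij (fun p _ => M p.1)
    · rintro ⟨i, j⟩ hp
      simp only [mem_filter, mem_univ, true_and] at hp ⊢
      obtain ⟨⟨hi, hj, hij, hjM, hMM⟩, hjo⟩ := hp
      subst hjo
      exact ⟨hjM, by rwa [hMo] at hMM⟩
    · rintro ⟨i, j⟩ hp ⟨i', j'⟩ hp' h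
      simp only [mem_filter, mem_univ, true_and] at hp hp'
      have h1 : i = i' := M.injective h
      have h2 : j = j' := hp.2.trans hp'.2.symm
      simp [h1, h2]
    · intro j hj
      simp only [mem_filter, mem_univ, true_and] at hj
      obtain ⟨hoj, hjc⟩ := hj
      have hjO : j ∉ O := fun h => absurd (hmax j h) (not_le.mpr hoj)
      have hMj : M j < j := closer_lt hM hjO
      have hMjO : M j ∈ O := (hiff (M j)).mpr (by rw [hinv]; exact hMj)
      have hMjo : M j ≠ o := by
        intro h
        have : j = c := by rw [← hinv j, h, hMo]
        exact absurd this (ne_of_lt hjc)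
      refine ⟨(M j, o), ?_, ?_⟩
      · simp only [mem_filter, mem_univ, true_and]
        refine ⟨⟨hMjO, homem, lt_of_le_of_ne (hmax _ hMjO) hMjo, ?_, ?_⟩, trivial⟩
        · rw [hinv]; exact hoj
        · rw [hinv, hMo]; exact hjc
      · rw [hinv]
  have hc2 : (((univ.filter (fun p : α × α => p.1 ∈ O ∧ p.2 ∈ O ∧ p.1 < p.2 ∧ p.2 < M p.1 ∧ M p.1 < M p.2))).filter
      (fun p => ¬ p.2 = o)).card = crA (dsubO O o c) (M.subtypePerm (sub_pf hM hMo)) := by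
    rw [crA]
    have key : ∀ p : α × α, p ∈ ((univ.filter (fun p : α × α => p.1 ∈ O ∧ p.2 ∈ O ∧ p.1 < p.2 ∧ p.2 < M p.1 ∧ M p.1 < M p.2))).filter (fun p => ¬ p.2 = o) →
        (p.1 ≠ o ∧ p.1 ≠ c) ∧ (p.2 ≠ o ∧ p.2 ≠ c) := by
      rintro ⟨i, j⟩ hp
      simp only [mem_filter, mem_univ, true_and] at hp
      obtain ⟨⟨hi, hj, hij, -, -⟩, hjo⟩ := hp
      have hjle : j < o := lt_of_le_of_ne (hmax j hj) hjo
      exact ⟨⟨ne_of_lt (lt_trans hij hjle), ne_of_lt (lt_of_le_of_lt (hmax i hi) hoc)⟩,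
        ⟨hjo, ne_of_lt (lt_trans hjle hoc)⟩⟩
    apply Finset.card_bij
      (fun p hp => ((⟨p.1, (key p hp).1⟩ : dsub o c), (⟨p.2, (key p hp).2⟩ : dsub o c)))
    · intro p hp
      obtain ⟨hmem, hpo⟩ := mem_filter.mp hp
      simp only [mem_filter, mem_univ, true_and] at hmem ⊢
      obtain ⟨hi, hj, hij, hjM, hMM⟩ := hmem
      refine ⟨mem_dsubO.mpr hi, mem_dsubO.mpr hj, ?_, ?_, ?_⟩
      · exact Subtype.mk_lt_mk.mpr hij
      · simp only [Equiv.Perm.subtypePerm_apply]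
        exact Subtype.mk_lt_mk.mpr hjM
      · simp only [Equiv.Perm.subtypePerm_apply]
        exact Subtype.mk_lt_mk.mpr hMM
    · intro p hp p' hp' h
      obtain ⟨h1, h2⟩ := Prod.mk.inj h
      exact Prod.ext (congrArg Subtype.val h1) (congrArg Subtype.val h2)
    · rintro ⟨a, b⟩ hb
      simp only [mem_filter, mem_univ, true_and] at hb
      obtain ⟨ha1, hb1, hab, hbM, hMM⟩ := hb
      rw [mem_dsubO] at ha1 hb1
      refine ⟨(a.1, b.1), ?_, ?_⟩
      · simp only [mem_filter, mem_univ, true_and]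
        refine ⟨⟨ha1, hb1, Subtype.coe_lt_coe.mpr hab, ?_, ?_⟩, b.2.1⟩
        · simpa only [Equiv.Perm.subtypePerm_apply] using Subtype.coe_lt_coe.mpr hbM
        · simpa only [Equiv.Perm.subtypePerm_apply] using Subtype.coe_lt_coe.mpr hMM
      · simp
  rw [crA, ← hsplit, hc1, hc2]
  ring

lemma ne_split {M : Equiv.Perm α} (hO : O.card = n + 1) (hM : M ∈ matchA O) (hMo : M o = c)
    (ho : o = openerA (n+1) O hO (Fin.last n)) (hoc : o < c) :
    neA O M = neA (dsubO O o c) (M.subtypePerm (sub_pf hM hMo)) + (above c).card := by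
  obtain ⟨hinv, hfix, hiff⟩ := matchA_spec hM
  have hmax : ∀ x ∈ O, x ≤ o := fun x hx => ho ▸ le_last_opener hO hx
  have homem : o ∈ O := ho ▸ openerA_mem (n+1) O hO (Fin.last n)
  have hcnot : c ∉ O := fun h => absurd (hmax c h) (not_le.mpr hoc)
  have hsplit := Finset.card_filter_add_card_filter_not
    (s := univ.filter (fun p : α × α => p.1 ∈ O ∧ p.2 ∈ O ∧ p.1 < p.2 ∧ M p.2 < M p.1))
    (fun p => p.2 = o)
  have hc1 : (((univ.filter (fun p : α × α => p.1 ∈ O ∧ p.2 ∈ O ∧ p.1 < p.2 ∧ M p.2 < M p.1))).filter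
      (fun p => p.2 = o)).card = (above c).card := by
    apply Finset.card_bij (fun p _ => M p.1)
    · rintro ⟨i, j⟩ hp
      simp only [mem_filter, mem_univ, true_and, mem_above] at hp ⊢
      obtain ⟨⟨hi, hj, hij, hMM⟩, hjo⟩ := hp
      subst hjo
      rwa [hMo] at hMM
    · rintro ⟨i, j⟩ hp ⟨i', j'⟩ hp' h
      simp only [mem_filter, mem_univ, true_and] at hp hp'
      have h1 : i = i' := M.injective h
      have h2 : j = j' := hp.2.trans hp'.2.symm
      simp [h1, h2]
    · intro j hj
      rw [mem_above] at hj
      have hoj : o < j := lt_trans hoc hj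
      have hjO : j ∉ O := fun h => absurd (hmax j h) (not_le.mpr hoj)
      have hMj : M j < j := closer_lt hM hjO
      have hMjO : M j ∈ O := (hiff (M j)).mpr (by rw [hinv]; exact hMj)
      have hMjo : M j ≠ o := by
        intro h
        have : j = c := by rw [← hinv j, h, hMo]
        exact absurd this (ne_of_gt hj)
      refine ⟨(M j, o), ?_, ?_⟩
      · simp only [mem_filter, mem_univ, true_and]
        refine ⟨⟨hMjO, homem, lt_of_le_of_ne (hmax _ hMjO) hMjo, ?_⟩, trivial⟩
        rw [hinv, hMo]; exact hj
      · rw [hinv]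
  have hc2 : (((univ.filter (fun p : α × α => p.1 ∈ O ∧ p.2 ∈ O ∧ p.1 < p.2 ∧ M p.2 < M p.1))).filter
      (fun p => ¬ p.2 = o)).card = neA (dsubO O o c) (M.subtypePerm (sub_pf hM hMo)) := by
    rw [neA]
    have key : ∀ p : α × α, p ∈ ((univ.filter (fun p : α × α => p.1 ∈ O ∧ p.2 ∈ O ∧ p.1 < p.2 ∧ M p.2 < M p.1))).filter (fun p => ¬ p.2 = o) →
        (p.1 ≠ o ∧ p.1 ≠ c) ∧ (p.2 ≠ o ∧ p.2 ≠ c) := by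
      rintro ⟨i, j⟩ hp
      simp only [mem_filter, mem_univ, true_and] at hp
      obtain ⟨⟨hi, hj, hij, -⟩, hjo⟩ := hp
      have hjle : j < o := lt_of_le_of_ne (hmax j hj) hjo
      exact ⟨⟨ne_of_lt (lt_trans hij hjle), ne_of_lt (lt_of_le_of_lt (hmax i hi) hoc)⟩,
        ⟨hjo, ne_of_lt (lt_trans hjle hoc)⟩⟩
    apply Finset.card_bij
      (fun p hp => ((⟨p.1, (key p hp).1⟩ : dsub o c), (⟨p.2, (key p hp).2⟩ : dsub o c)))
    · intro p hp
      obtain ⟨hmem, hpo⟩ := mem_filter.mp hp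
      simp only [mem_filter, mem_univ, true_and] at hmem ⊢
      obtain ⟨hi, hj, hij, hMM⟩ := hmem
      refine ⟨mem_dsubO.mpr hi, mem_dsubO.mpr hj, Subtype.mk_lt_mk.mpr hij, ?_⟩
      simp only [Equiv.Perm.subtypePerm_apply]
      exact Subtype.mk_lt_mk.mpr hMM
    · intro p hp p' hp' h
      obtain ⟨h1, h2⟩ := Prod.mk.inj h
      exact Prod.ext (congrArg Subtype.val h1) (congrArg Subtype.val h2)
    · rintro ⟨a, b⟩ hb
      simp only [mem_filter, mem_univ, true_and] at hb
      obtain ⟨ha1, hb1, hab, hMM⟩ := hb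
      rw [mem_dsubO] at ha1 hb1
      refine ⟨(a.1, b.1), ?_, ?_⟩
      · simp only [mem_filter, mem_univ, true_and]
        refine ⟨⟨ha1, hb1, Subtype.coe_lt_coe.mpr hab, ?_⟩, b.2.1⟩
        simpa only [Equiv.Perm.subtypePerm_apply] using Subtype.coe_lt_coe.mpr hMM
      · simp
  rw [neA, ← hsplit, hc1, hc2]
  ring

lemma left_prod [LocallyFiniteOrderBot (dsub o c)] {M : Equiv.Perm α} (hO : O.card = n + 1)
    (hM : M ∈ matchA O) (hMo : M o = c)
    (ho : o = openerA (n+1) O hO (Fin.last n)) (hoc : o < c)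
    (hO' : (dsubO O o c).card = n) {R : Type*} [CommRing R] (s : Fin (n+1) → R) :
    ∏ k ∈ leftA (n+1) O hO M, s k
      = (if (univ.filter (fun z => o < z ∧ z < c)).card = 0 then s (Fin.last n) else 1)
        * ∏ k ∈ leftA n (dsubO O o c) hO' (M.subtypePerm (sub_pf hM hMo)), s k.castSucc := by
  obtain ⟨hinv, hfix, hiff⟩ := matchA_spec hM
  have hmax : ∀ x ∈ O, x ≤ o := fun x hx => ho ▸ le_last_opener hO hx
  rw [leftA, leftA, Finset.prod_filter, Finset.prod_filter, Fin.prod_univ_castSucc, mul_comm]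
  congr 1
  · have hcond : (¬ ∃ i ∈ O, i < openerA (n+1) O hO (Fin.last n) ∧
        openerA (n+1) O hO (Fin.last n) < M i ∧ M i < M (openerA (n+1) O hO (Fin.last n)))
        ↔ (univ.filter (fun z => o < z ∧ z < c)).card = 0 := by
      rw [← ho, hMo, Finset.card_eq_zero, Finset.filter_eq_empty_iff]
      constructor
      · intro hne z _ hz
        obtain ⟨hoz, hzc⟩ := hz
        have hzO : z ∉ O := fun h => absurd (hmax z h) (not_le.mpr hoz)
        have hMz : M z < z := closer_lt hM hzO
        have hMzO : M z ∈ O := (hiff (M z)).mpr (by rw [hinv]; exact hMz)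
        have hMzo : M z ≠ o := fun h =>
          absurd (show z = c by rw [← hinv z, h, hMo]) (ne_of_lt hzc)
        exact hne ⟨M z, hMzO, lt_of_le_of_ne (hmax _ hMzO) hMzo,
          by rw [hinv]; exact hoz, by rw [hinv]; exact hzc⟩
      · rintro hall ⟨i, hiO, h1, h2, h3⟩
        exact hall (mem_univ (M i)) ⟨h2, h3⟩
    exact if_congr hcond rfl rfl
  · apply Finset.prod_congr rfl
    intro k _
    have hu_lt : openerA (n+1) O hO k.castSucc < o :=
      ho ▸ openerA_strictMono (n+1) O hO (Fin.castSucc_lt_last k)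
    have hrepr : openerA n (dsubO O o c) hO' k
        = ⟨openerA (n+1) O hO k.castSucc, ne_of_lt hu_lt, ne_of_lt (lt_trans hu_lt hoc)⟩ :=
      Subtype.ext (dsub_opener hO hO' ho hoc k)
    rw [hrepr]
    apply if_congr _ rfl rfl
    apply not_congr
    constructor
    · rintro ⟨i, hiO, h1, h2, h3⟩
      have hio : i ≠ o := ne_of_lt (lt_trans h1 hu_lt)
      have hic : i ≠ c := ne_of_lt (lt_trans (lt_trans h1 hu_lt) hoc)
      refine ⟨⟨i, hio, hic⟩, mem_dsubO.mpr hiO, ?_, ?_, ?_⟩ <;>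
        simp only [Equiv.Perm.subtypePerm_apply, Subtype.mk_lt_mk]
      · exact h1
      · exact h2
      · exact h3
    · rintro ⟨⟨i, hio, hic⟩, hiO', h1, h2, h3⟩
      simp only [Equiv.Perm.subtypePerm_apply, Subtype.mk_lt_mk] at h1 h2 h3
      exact ⟨i, mem_dsubO.mp hiO', h1, h2, h3⟩

lemma long_prod [LocallyFiniteOrderBot (dsub o c)] {M : Equiv.Perm α} (hO : O.card = n + 1)
    (hM : M ∈ matchA O) (hMo : M o = c)
    (ho : o = openerA (n+1) O hO (Fin.last n)) (hoc : o < c)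
    (hO' : (dsubO O o c).card = n) {R : Type*} [CommRing R] (t : Fin (n+1) → R) :
    ∏ k ∈ longA (n+1) O hO M, t k
      = (if (above c).card = 0 then t (Fin.last n) else 1)
        * ∏ k ∈ longA n (dsubO O o c) hO' (M.subtypePerm (sub_pf hM hMo)), t k.castSucc := by
  obtain ⟨hinv, hfix, hiff⟩ := matchA_spec hM
  have hmax : ∀ x ∈ O, x ≤ o := fun x hx => ho ▸ le_last_opener hO hx
  rw [longA, longA, Finset.prod_filter, Finset.prod_filter, Fin.prod_univ_castSucc, mul_comm]
  congr 1
  · have hcond : (¬ ∃ i ∈ O, i < openerA (n+1) O hO (Fin.last n) ∧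
        M (openerA (n+1) O hO (Fin.last n)) < M i)
        ↔ (above c).card = 0 := by
      rw [← ho, hMo]
      simp only [above]
      rw [Finset.card_eq_zero, Finset.filter_eq_empty_iff]
      constructor
      · intro hne z _ hz
        have hoz : o < z := lt_trans hoc hz
        have hzO : z ∉ O := fun h => absurd (hmax z h) (not_le.mpr hoz)
        have hMz : M z < z := closer_lt hM hzO
        have hMzO : M z ∈ O := (hiff (M z)).mpr (by rw [hinv]; exact hMz)
        have hMzo : M z ≠ o := fun h =>
          absurd (show z = c by rw [← hinv z, h, hMo]) (ne_of_gt hz)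
        exact hne ⟨M z, hMzO, lt_of_le_of_ne (hmax _ hMzO) hMzo, by rw [hinv]; exact hz⟩
      · rintro hall ⟨i, hiO, h1, h2⟩
        exact hall (mem_univ (M i)) h2
    exact if_congr hcond rfl rfl
  · apply Finset.prod_congr rfl
    intro k _
    have hu_lt : openerA (n+1) O hO k.castSucc < o :=
      ho ▸ openerA_strictMono (n+1) O hO (Fin.castSucc_lt_last k)
    have hrepr : openerA n (dsubO O o c) hO' k
        = ⟨openerA (n+1) O hO k.castSucc, ne_of_lt hu_lt, ne_of_lt (lt_trans hu_lt hoc)⟩ :=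
      Subtype.ext (dsub_opener hO hO' ho hoc k)
    rw [hrepr]
    apply if_congr _ rfl rfl
    apply not_congr
    constructor
    · rintro ⟨i, hiO, h1, h2⟩
      have hio : i ≠ o := ne_of_lt (lt_trans h1 hu_lt)
      have hic : i ≠ c := ne_of_lt (lt_trans (lt_trans h1 hu_lt) hoc)
      refine ⟨⟨i, hio, hic⟩, mem_dsubO.mpr hiO, ?_, ?_⟩ <;>
        simp only [Equiv.Perm.subtypePerm_apply, Subtype.mk_lt_mk]
      · exact h1
      · exact h2
    · rintro ⟨⟨i, hio, hic⟩, hiO', h1, h2⟩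
      simp only [Equiv.Perm.subtypePerm_apply, Subtype.mk_lt_mk] at h1 h2
      exact ⟨i, mem_dsubO.mp hiO', h1, h2⟩

lemma fiber_sum [LocallyFiniteOrderBot (dsub o c)] (hO : O.card = n + 1)
    (ho : o = openerA (n+1) O hO (Fin.last n)) (hoc : o < c)
    (hO' : (dsubO O o c).card = n) {R : Type*} [CommRing R] (p q : R) (s t : Fin (n+1) → R) :
    ∑ M ∈ (matchA O).filter (fun M => M o = c),
      p ^ crA O M * q ^ neA O M * (∏ k ∈ leftA (n+1) O hO M, s k) * ∏ k ∈ longA (n+1) O hO M, t k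
    = (p ^ (univ.filter (fun z => o < z ∧ z < c)).card * q ^ (above c).card
        * (if (univ.filter (fun z => o < z ∧ z < c)).card = 0 then s (Fin.last n) else 1)
        * (if (above c).card = 0 then t (Fin.last n) else 1))
      * ∑ M' ∈ matchA (dsubO O o c),
          p ^ crA (dsubO O o c) M' * q ^ neA (dsubO O o c) M' *
            (∏ k ∈ leftA n (dsubO O o c) hO' M', s k.castSucc) *
            ∏ k ∈ longA n (dsubO O o c) hO' M', t k.castSucc := by
  have homem : o ∈ O := ho ▸ openerA_mem (n+1) O hO (Fin.last n)
  have hmax : ∀ x ∈ O, x ≤ o := fun x hx => ho ▸ le_last_opener hO hx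
  have hcnot : c ∉ O := fun h => absurd (hmax c h) (not_le.mpr hoc)
  rw [Finset.mul_sum]
  apply Finset.sum_bij (fun M hM =>
    M.subtypePerm (sub_pf (Finset.mem_filter.mp hM).1 (Finset.mem_filter.mp hM).2))
  · intro M hM
    exact subM_mem (Finset.mem_filter.mp hM).1 (Finset.mem_filter.mp hM).2
  · intro M₁ h₁ M₂ h₂ heq
    obtain ⟨hm₁, ho₁⟩ := Finset.mem_filter.mp h₁
    obtain ⟨hm₂, ho₂⟩ := Finset.mem_filter.mp h₂
    obtain ⟨hinv₁, -, -⟩ := matchA_spec hm₁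
    obtain ⟨hinv₂, -, -⟩ := matchA_spec hm₂
    ext x
    by_cases hxo : x = o
    · rw [hxo, ho₁, ho₂]
    by_cases hxc : x = c
    · rw [hxc, show M₁ c = o by rw [← ho₁, hinv₁], show M₂ c = o by rw [← ho₂, hinv₂]]
    · have := congrArg (fun f : Equiv.Perm (dsub o c) => (f ⟨x, hxo, hxc⟩).1) heq
      simpa [Equiv.Perm.subtypePerm_apply] using this
  · intro M' hM'
    obtain ⟨hinv', hfix', hiff'⟩ := matchA_spec hM'
    have hno : ¬ (o ≠ o ∧ o ≠ c) := by simp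
    have hnc : ¬ (c ≠ o ∧ c ≠ c) := by simp
    set sw : Equiv.Perm {x : α // ¬ (x ≠ o ∧ x ≠ c)} :=
      Equiv.swap ⟨o, hno⟩ ⟨c, hnc⟩ with hsw
    set N : Equiv.Perm α := M'.subtypeCongr sw with hN
    have hNo : N o = c := by
      have h1 : N o = (sw ⟨o, hno⟩).1 :=
        Equiv.Perm.subtypeCongr.right_apply (p := fun x : α => x ≠ o ∧ x ≠ c) M' sw hno
      rw [h1, hsw, Equiv.swap_apply_left]
    have hNc : N c = o := by
      have h1 : N c = (sw ⟨c, hnc⟩).1 :=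
        Equiv.Perm.subtypeCongr.right_apply (p := fun x : α => x ≠ o ∧ x ≠ c) M' sw hnc
      rw [h1, hsw, Equiv.swap_apply_right]
    have hNin : ∀ (x : α) (hx : x ≠ o ∧ x ≠ c), N x = (M' ⟨x, hx⟩).1 := fun x hx =>
      Equiv.Perm.subtypeCongr.left_apply (p := fun x : α => x ≠ o ∧ x ≠ c) M' sw hx
    have hNmem : N ∈ matchA O := by
      simp only [matchA, mem_filter, mem_univ, true_and]
      refine ⟨?_, ?_, ?_⟩
      · intro x
        by_cases hxo : x = o
        · rw [hxo, hNo, hNc]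
        by_cases hxc : x = c
        · rw [hxc, hNc, hNo]
        · have hx : x ≠ o ∧ x ≠ c := ⟨hxo, hxc⟩
          rw [hNin x hx, hNin _ (M' ⟨x, hx⟩).2]
          have : M' (M' ⟨x, hx⟩) = ⟨x, hx⟩ := hinv' _
          rw [show (⟨(M' ⟨x, hx⟩).1, (M' ⟨x, hx⟩).2⟩ : dsub o c) = M' ⟨x, hx⟩ from rfl, this]
      · intro x
        by_cases hxo : x = o
        · rw [hxo, hNo]; exact fun h => (ne_of_gt hoc) h
        by_cases hxc : x = c
        · rw [hxc, hNc]; exact fun h => (ne_of_lt hoc) h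
        · have hx : x ≠ o ∧ x ≠ c := ⟨hxo, hxc⟩
          rw [hNin x hx]
          intro h
          exact hfix' ⟨x, hx⟩ (Subtype.ext h)
      · intro x
        by_cases hxo : x = o
        · subst hxo
          rw [hNo]
          simp [homem, hoc]
        by_cases hxc : x = c
        · subst hxc
          rw [hNc]
          simp [hcnot, not_lt.mpr hoc.le]
        · have hx : x ≠ o ∧ x ≠ c := ⟨hxo, hxc⟩
          rw [hNin x hx]
          have e1 : x ∈ O ↔ (⟨x, hx⟩ : dsub o c) ∈ dsubO O o c := (mem_dsubO (x := ⟨x, hx⟩)).symm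
          rw [e1, hiff' ⟨x, hx⟩]
          constructor
          · exact fun h => Subtype.coe_lt_coe.mp h
          · exact fun h => Subtype.coe_lt_coe.mpr h
    refine ⟨N, Finset.mem_filter.mpr ⟨hNmem, hNo⟩, ?_⟩
    apply Equiv.ext
    intro x
    apply Subtype.ext
    simp only [Equiv.Perm.subtypePerm_apply]
    exact hNin x.1 x.2
  · intro M hM
    obtain ⟨hm, hmo⟩ := Finset.mem_filter.mp hM
    rw [cr_split hO hm hmo ho hoc, ne_split hO hm hmo ho hoc,
      left_prod hO hm hmo ho hoc hO' s, long_prod hO hm hmo ho hoc hO' t,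
      pow_add, pow_add]
    ring

lemma card_above_lt [LocallyFiniteOrderBot α] {x y : α} (hxy : x < y) :
    (above y).card < (above x).card := by
  apply Finset.card_lt_card
  constructor
  · intro z hz
    exact mem_above.mpr (lt_trans hxy (mem_above.mp hz))
  · intro hsub
    have := mem_above.mp (hsub (mem_above.mpr hxy))
    exact lt_irrefl y this

lemma sum_above [LocallyFiniteOrderBot α] {R : Type*} [CommRing R] (o : α) (G : ℕ → R) :
    ∑ c ∈ above o, G ((above c).card) = ∑ w ∈ Finset.range ((above o).card), G w := by
  have hinj : ∀ x ∈ above o, ∀ y ∈ above o, (above x).card = (above y).card → x = y := by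
    intro x _ y _ hxy
    rcases lt_trichotomy x y with h | h | h
    · exact absurd hxy (ne_of_gt (card_above_lt h))
    · exact h
    · exact absurd hxy (ne_of_lt (card_above_lt h))
  have himage : (above o).image (fun c => (above c).card) = Finset.range ((above o).card) := by
    apply Finset.eq_of_subset_of_card_le
    · intro w hw
      obtain ⟨c, hc, rfl⟩ := Finset.mem_image.mp hw
      exact Finset.mem_range.mpr (card_above_lt (mem_above.mp hc))
    · rw [Finset.card_range, Finset.card_image_of_injOn (fun x hx y hy h => hinj x hx y hy h)]
  rw [← himage, Finset.sum_image hinj]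

end Step

end General

theorem genThm : ∀ (n : ℕ) (α : Type) [LinearOrder α] [Fintype α] [LocallyFiniteOrderBot α]
    (hcard : Fintype.card α = 2 * n) (O : Finset α)
    (hD : ∀ m : α, ((Iic m).filter (fun i => i ∉ O)).card ≤ ((Iic m).filter (fun i => i ∈ O)).card)
    (hO : O.card = n)
    (R : Type u) [CommRing R] (p q : R) (s t : Fin n → R),
    ∑ M ∈ matchA O, p ^ crA O M * q ^ neA O M * (∏ k ∈ leftA n O hO M, s k) *
          ∏ k ∈ longA n O hO M, t k
      = ∏ k : Fin n, ∑ w ∈ Finset.range (heightA n O hO k),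
          (if w = 0 then t k else 1) * (if w = heightA n O hO k - 1 then s k else 1)
            * p ^ (heightA n O hO k - 1 - w) * q ^ w := by
  intro n
  induction n with
  | zero =>
    intro α _ _ _ hcard O hD hO R _ p q s t
    have he : IsEmpty α := Fintype.card_eq_zero_iff.mp (by simpa using hcard)
    have hm : matchA O = univ := by
      apply Finset.filter_true_of_mem
      intro M _
      refine ⟨fun i => he.elim i, fun i => he.elim i, fun i => he.elim i⟩
    have hw : ∀ M : Equiv.Perm α, p ^ crA O M * q ^ neA O M * (∏ k ∈ leftA 0 O hO M, s k) *
          ∏ k ∈ longA 0 O hO M, t k = 1 := by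
      intro M
      have h1 : crA O M = 0 := by simp [crA, Finset.univ_eq_empty]
      have h2 : neA O M = 0 := by simp [neA, Finset.univ_eq_empty]
      have h3 : leftA 0 O hO M = ∅ := Finset.eq_empty_of_forall_notMem (fun x _ => x.elim0)
      have h4 : longA 0 O hO M = ∅ := Finset.eq_empty_of_forall_notMem (fun x _ => x.elim0)
      simp [h1, h2, h3, h4]
    rw [hm]
    rw [Finset.sum_congr rfl (fun M _ => hw M)]
    have h0 : Fintype.card α = 0 := by simpa using hcard
    have : Fintype.card (Equiv.Perm α) = 1 := by
      rw [Fintype.card_perm, h0]; rfl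
    simp [Finset.card_univ, this]
  | succ n ih =>
    intro α _ _ _ hcard O hD hO R _ p q s t
    set o := openerA (n+1) O hO (Fin.last n) with ho
    have homem : o ∈ O := by rw [ho]; exact openerA_mem (n+1) O hO (Fin.last n)
    have hlast : heightA (n+1) O hO (Fin.last n) = (above o).card := by
      rw [ho]; exact height_last hcard hO
    by_cases hne : above o = ∅
    · have hm : matchA O = ∅ := by
        rw [Finset.eq_empty_iff_forall_notMem]
        intro M hM
        have h1 : M o ∈ above o := mem_above.mpr (((matchA_spec hM).2.2 o).mp homem)
        rw [hne] at h1
        exact absurd h1 (Finset.notMem_empty _)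
      rw [hm, Finset.sum_empty]
      symm
      apply Finset.prod_eq_zero (Finset.mem_univ (Fin.last n))
      rw [hlast, hne]
      simp
    · have hmaps : ∀ M ∈ matchA O, M o ∈ above o := fun M hM =>
        mem_above.mpr (((matchA_spec hM).2.2 o).mp homem)
      rw [← Finset.sum_fiberwise_of_maps_to hmaps
        (fun M => p ^ crA O M * q ^ neA O M * (∏ k ∈ leftA (n+1) O hO M, s k) *
          ∏ k ∈ longA (n+1) O hO M, t k)]
      have hstep : ∀ c ∈ above o,
          ∑ M ∈ (matchA O).filter (fun M => M o = c),
            (p ^ crA O M * q ^ neA O M * (∏ k ∈ leftA (n+1) O hO M, s k) *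
              ∏ k ∈ longA (n+1) O hO M, t k)
          = ((if (above c).card = 0 then t (Fin.last n) else 1) *
              (if (above c).card = heightA (n+1) O hO (Fin.last n) - 1 then s (Fin.last n) else 1) *
              p ^ (heightA (n+1) O hO (Fin.last n) - 1 - (above c).card) * q ^ (above c).card)
            * ∏ k : Fin n, ∑ w ∈ Finset.range (heightA (n+1) O hO k.castSucc),
                (if w = 0 then t k.castSucc else 1) *
                (if w = heightA (n+1) O hO k.castSucc - 1 then s k.castSucc else 1) *
                p ^ (heightA (n+1) O hO k.castSucc - 1 - w) * q ^ w := by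
        intro c hc
        rw [mem_above] at hc
        letI : LocallyFiniteOrderBot (dsub o c) := mkLFOB _
        have hcnot : c ∉ O := fun h =>
          absurd (show c ≤ o by rw [ho]; exact le_last_opener hO h) (not_le.mpr hc)
        have hO' : (dsubO O o c).card = n := by
          rw [card_dsubO homem hcnot, hO]
          omega
        have hcard' : Fintype.card (dsub o c) = 2 * n := by
          rw [card_dsub (ne_of_lt hc), hcard]
          omega
        have hD' := dsub_dyck hcard hO hD ho hc
        rw [fiber_sum hO ho hc hO' p q s t]
        rw [ih (dsub o c) hcard' (dsubO O o c) hD' hO' R p q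
          (fun k => s k.castSucc) (fun k => t k.castSucc)]
        have hh : ∀ k : Fin n, heightA n (dsubO O o c) hO' k = heightA (n+1) O hO k.castSucc :=
          dsub_height hO hO' ho hc
        congr 1
        · have hsplitc := between_above hc
          rw [hlast]
          have e1 : (above o).card - 1 - (above c).card
              = (univ.filter (fun z => o < z ∧ z < c)).card := by omega
          rw [e1]
          rw [show (if (above c).card = (above o).card - 1 then s (Fin.last n) else 1)
              = (if (univ.filter (fun z => o < z ∧ z < c)).card = 0 then s (Fin.last n) else 1)
            from if_congr (by omega) rfl rfl]
          ring
        · apply Finset.prod_congr rfl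
          intro k _
          rw [hh k]
      rw [Finset.sum_congr rfl hstep]
      rw [← Finset.sum_mul]
      rw [sum_above o (fun w => (if w = 0 then t (Fin.last n) else 1) *
            (if w = heightA (n+1) O hO (Fin.last n) - 1 then s (Fin.last n) else 1) *
            p ^ (heightA (n+1) O hO (Fin.last n) - 1 - w) * q ^ w)]
      rw [← hlast]
      rw [Fin.prod_univ_castSucc (f := fun k : Fin (n+1) =>
        ∑ w ∈ Finset.range (heightA (n+1) O hO k),
          (if w = 0 then t k else 1) * (if w = heightA (n+1) O hO k - 1 then s k else 1)
            * p ^ (heightA (n+1) O hO k - 1 - w) * q ^ w)]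
      rw [mul_comm]



/-- Number of crossings of a matching: pairs of arcs `i·M i`, `k·M k` with
`i < k < M i < M k`. -/
def crM {n : ℕ} (O : Finset (Fin (2 * n))) (M : Equiv.Perm (Fin (2 * n))) : ℕ :=
  (Finset.univ.filter (fun p : Fin (2 * n) × Fin (2 * n) =>
    p.1 ∈ O ∧ p.2 ∈ O ∧ p.1 < p.2 ∧ p.2 < M p.1 ∧ M p.1 < M p.2)).card

/-- `Left M`: indices `k` such that the arc at the `k`-th opener is not the
right arc of any crossing. -/
noncomputable def LeftM (n : ℕ) (O : Finset (Fin (2 * n))) (hO : O.card = n)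
    (M : Equiv.Perm (Fin (2 * n))) : Finset (Fin n) :=
  Finset.univ.filter (fun k : Fin n =>
    ¬ ∃ i ∈ O, i < opener n O hO k ∧ opener n O hO k < M i ∧
      M i < M (opener n O hO k))

set_option maxHeartbeats 2000000 in
/-- `∑_M p^{cr M} q^{ne M} ∏_{Left} s_i ∏_{Long} t_i
  = ∏_k (t_k p^{h_k−1} + p^{h_k−2}q + ⋯ + p q^{h_k−2} + s_k q^{h_k−1})`,
the `w`-th term of the `k`-th factor being `p^{h_k−w} q^{w−1}`, weighted by
`t_k` when `w = 1` and by `s_k` when `w = h_k`. -/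
theorem cr_ne_Left_Long_generating_function (n : ℕ) (O : Finset (Fin (2 * n)))
    (hD : IsDyckType n O) (hO : O.card = n)
    (R : Type*) [CommRing R] (p q : R) (s t : Fin n → R) :
    ∑ M ∈ matchingsOfType n O,
        p ^ crM O M * q ^ neM O M * (∏ k ∈ LeftM n O hO M, s k) *
          ∏ k ∈ LongM n O hO M, t k
      = ∏ k : Fin n, ∑ w ∈ Finset.range (riseHeight n O hO k),
          (if w = 0 then t k else 1) * (if w = riseHeight n O hO k - 1 then s k else 1)
            * p ^ (riseHeight n O hO k - 1 - w) * q ^ w := by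
  have e_match : matchingsOfType n O = matchA O := by
    ext M
    simp only [matchingsOfType, matchA, Finset.mem_filter, Finset.mem_univ, true_and]
  have e_cr : ∀ M : Equiv.Perm (Fin (2*n)), crM O M = crA O M := by
    intro M
    rw [crM, crA]
  have e_ne : ∀ M : Equiv.Perm (Fin (2*n)), neM O M = neA O M := by
    intro M
    rw [neM, neA]
  have e_left : ∀ M : Equiv.Perm (Fin (2*n)), LeftM n O hO M = leftA n O hO M := by
    intro M
    ext k
    simp only [LeftM, leftA, opener, openerA, Finset.mem_filter, Finset.mem_univ, true_and]
    simp
  have e_long : ∀ M : Equiv.Perm (Fin (2*n)), LongM n O hO M = longA n O hO M := by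
    intro M
    ext k
    simp only [LongM, longA, opener, openerA, Finset.mem_filter, Finset.mem_univ, true_and]
    simp
  have e_height : ∀ k : Fin n, riseHeight n O hO k = heightA n O hO k := by
    intro k
    rw [riseHeight, heightA]
    congr 1
  have key := genThm n (Fin (2*n)) (by simp) O (by
    intro m
    have h1 := hD.2 m
    refine le_of_eq_of_le ?_ (le_of_le_of_eq h1 ?_) <;>
      (congr 1)) hO R p q s t
  calc ∑ M ∈ matchingsOfType n O,
        p ^ crM O M * q ^ neM O M * (∏ k ∈ LeftM n O hO M, s k) * ∏ k ∈ LongM n O hO M, t k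
      = ∑ M ∈ matchA O,
        p ^ crA O M * q ^ neA O M * (∏ k ∈ leftA n O hO M, s k) * ∏ k ∈ longA n O hO M, t k := by
        apply Finset.sum_congr e_match
        intro M _
        rw [e_cr, e_ne, e_left, e_long]
    _ = ∏ k : Fin n, ∑ w ∈ Finset.range (heightA n O hO k),
          (if w = 0 then t k else 1) * (if w = heightA n O hO k - 1 then s k else 1)
            * p ^ (heightA n O hO k - 1 - w) * q ^ w := key
    _ = ∏ k : Fin n, ∑ w ∈ Finset.range (riseHeight n O hO k),
          (if w = 0 then t k else 1) * (if w = riseHeight n O hO k - 1 then s k else 1)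
            * p ^ (riseHeight n O hO k - 1 - w) * q ^ w := by
        apply Finset.prod_congr rfl
        intro k _
        rw [e_height k]
end

section
/- Let D be a Dyck path with height sequence (h_1,...,h_n) and M_0 ∈ M_n(D). Then Σ_{M ∈ M_n(D)} q^{sor(M,M_0)} Π_{i ∈ Cyc(M,M_0)} t_i = Σ_{M ∈ M_n(D)} q^{ne(M)} Π_{i ∈ Long(M)} t_i. -/
/-- The sequence of intermediate matchings obtained while sorting `M` to `M₀`:
`sortSeq … M j` is the paper's `M_{n-j}` (so `j = 0` gives `M_n = M`).  At each
step the arc at the currently largest unprocessed opener is reconnected as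
prescribed by `M₀`; this is conjugation by the swap of the two relevant
closers (which is the identity when the arc is already in place). -/
noncomputable def sortSeq (n : ℕ) (O : Finset (Fin (2 * n))) (hO : O.card = n)
    (M₀ M : Equiv.Perm (Fin (2 * n))) : ℕ → Equiv.Perm (Fin (2 * n))
  | 0 => M
  | j + 1 =>
    if h : j < n then
      let P := sortSeq n O hO M₀ M j
      let ok := opener n O hO ⟨n - 1 - j, by omega⟩
      let s := Equiv.swap (P ok) (M₀ ok)
      s * P * s
    else sortSeq n O hO M₀ M j

/-- `sor_k(M, M₀)` for the `k`-th opener (`k : Fin n`, `0`-based): with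
`a = M_{k+1}(o_k)` and `c = M₀(o_k)` (paper indexing `M_k(o_k)`, `M₀(o_k)`),
the number of closers `cc > o_k` with `M₀ cc < o_k` lying in `[a, c]`, resp.
outside the open interval `(c, a)` when `c < a`. -/
noncomputable def sorMk (n : ℕ) (O : Finset (Fin (2 * n))) (hO : O.card = n)
    (M₀ M : Equiv.Perm (Fin (2 * n))) (k : Fin n) : ℕ :=
  let ok := opener n O hO k
  let a := sortSeq n O hO M₀ M (n - 1 - (k : ℕ)) ok
  let c := M₀ ok
  (Finset.univ.filter (fun cc : Fin (2 * n) =>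
    ok < cc ∧ M₀ cc < ok ∧
      (if a ≤ c then a ≤ cc ∧ cc ≤ c else ¬(c < cc ∧ cc < a)))).card

/-- The sorting index of the matching `M` with respect to `M₀`. -/
noncomputable def sorMatch (n : ℕ) (O : Finset (Fin (2 * n))) (hO : O.card = n)
    (M₀ M : Equiv.Perm (Fin (2 * n))) : ℕ :=
  ∑ k : Fin n, sorMk n O hO M₀ M k

/-- `Cyc(M, M₀)`: indices `k` such that the `k`-th opener is the minimal vertex
of its cycle in the graph with `M` drawn above and `M₀` below the axis. -/
noncomputable def CycMatch (n : ℕ) (O : Finset (Fin (2 * n))) (hO : O.card = n)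
    (M₀ M : Equiv.Perm (Fin (2 * n))) : Finset (Fin n) :=
  Finset.univ.filter (fun k : Fin n => ∀ m : Fin (2 * n),
    ((M₀ * M).SameCycle (opener n O hO k) m ∨
      (M₀ * M).SameCycle (opener n O hO k) (M m)) → opener n O hO k ≤ m)


set_option linter.unusedSectionVars false
set_option maxHeartbeats 1000000

open Equiv Equiv.Perm

namespace SPaux
variable {α : Type*} [Fintype α] [DecidableEq α]
set_option linter.unusedSectionVars false

lemma mulswap_apply (τ : Perm α) (a c x : α) :
    (τ * swap a c) x = τ (swap a c x) := rfl

lemma key1 (τ : Perm α) (a c : α) (hc : τ c = c) (hac : a ≠ c) (u : α) (hu : u ≠ c) :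
    ∀ i : ℕ, (((τ * swap a c) ^ i) u ≠ c ∧ ∃ j : ℕ, (τ ^ j) u = ((τ * swap a c) ^ i) u) ∨
    (((τ * swap a c) ^ i) u = c ∧ ∃ j : ℕ, (τ ^ j) u = a) := by
  intro i
  induction i with
  | zero => exact Or.inl ⟨hu, 0, rfl⟩
  | succ i ih =>
    have hstep : ((τ * swap a c) ^ (i+1)) u = (τ * swap a c) (((τ * swap a c) ^ i) u) := by
      rw [pow_succ']; rfl
    rcases ih with ⟨hne, j, hj⟩ | ⟨heq, j, hj⟩
    · by_cases hwa : ((τ * swap a c) ^ i) u = a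
      · refine Or.inr ⟨?_, j, by rw [hj, hwa]⟩
        rw [hstep, hwa, mulswap_apply, swap_apply_left, hc]
      · refine Or.inl ⟨?_, j + 1, ?_⟩
        · rw [hstep, mulswap_apply, swap_apply_of_ne_of_ne hwa hne]
          intro h
          exact hne (τ.injective (h.trans hc.symm))
        · rw [hstep, mulswap_apply, swap_apply_of_ne_of_ne hwa hne]
          rw [show (τ ^ (j+1)) u = τ ((τ ^ j) u) by rw [pow_succ']; rfl, hj]
    · refine Or.inl ⟨?_, j + 1, ?_⟩
      · rw [hstep, heq, mulswap_apply, swap_apply_right]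
        intro h; exact hac (τ.injective (h.trans hc.symm))
      · rw [hstep, heq, mulswap_apply, swap_apply_right]
        rw [show (τ ^ (j+1)) u = τ ((τ ^ j) u) by rw [pow_succ']; rfl, hj]

lemma key2 (τ : Perm α) (a c : α) (hc : τ c = c) (hac : a ≠ c) (u : α) (hu : u ≠ c) :
    ∀ j : ℕ, ∃ i : ℕ, ((τ * swap a c) ^ i) u = (τ ^ j) u := by
  intro j
  induction j with
  | zero => exact ⟨0, rfl⟩
  | succ j ih =>
    obtain ⟨i, hi⟩ := ih
    have hwc : (τ ^ j) u ≠ c := by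
      intro h
      have h2 : (τ ^ j) c = c := Function.IsFixedPt.perm_pow hc j
      exact hu (((τ ^ j).injective (h.trans h2.symm)))
    have hnext : (τ ^ (j+1)) u = τ ((τ ^ j) u) := by rw [pow_succ']; rfl
    by_cases hwa : (τ ^ j) u = a
    · refine ⟨i + 2, ?_⟩
      have h1 : ((τ * swap a c) ^ (i+1)) u = c := by
        rw [show ((τ * swap a c) ^ (i+1)) u = (τ * swap a c) (((τ * swap a c) ^ i) u) by
          rw [pow_succ']; rfl, hi, hwa, mulswap_apply, swap_apply_left, hc]
      rw [show ((τ * swap a c) ^ (i+2)) u = (τ * swap a c) (((τ * swap a c) ^ (i+1)) u) by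
          rw [pow_succ']; rfl, h1, mulswap_apply, swap_apply_right, hnext, hwa]
    · refine ⟨i + 1, ?_⟩
      rw [show ((τ * swap a c) ^ (i+1)) u = (τ * swap a c) (((τ * swap a c) ^ i) u) by
          rw [pow_succ']; rfl, hi, mulswap_apply,
        swap_apply_of_ne_of_ne hwa hwc, hnext]

lemma sameCycle_of_pow {f : Perm α} {x y : α} (j : ℕ) (h : (f ^ j) x = y) : f.SameCycle x y :=
  ⟨(j : ℤ), by rw [zpow_natCast]; exact h⟩

lemma sameCycle_ins (τ : Perm α) (a c : α) (hc : τ c = c) (hac : a ≠ c) {u v : α}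
    (hu : u ≠ c) (hv : v ≠ c) : (τ * swap a c).SameCycle u v ↔ τ.SameCycle u v := by
  constructor
  · intro h
    obtain ⟨i, -, hi⟩ := h.exists_pow_eq'
    rcases key1 τ a c hc hac u hu i with ⟨-, j, hj⟩ | ⟨heq, -⟩
    · exact sameCycle_of_pow j (hj.trans hi)
    · exact absurd (heq.symm.trans hi) hv.symm
  · intro h
    obtain ⟨j, -, hj⟩ := h.exists_pow_eq'
    obtain ⟨i, hi⟩ := key2 τ a c hc hac u hu j
    exact sameCycle_of_pow i (hi.trans hj)

lemma sameCycle_ins_c (τ : Perm α) (a c : α) (hc : τ c = c) (hac : a ≠ c) {u : α}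
    (hu : u ≠ c) : (τ * swap a c).SameCycle u c ↔ τ.SameCycle u a := by
  constructor
  · intro h
    obtain ⟨i, -, hi⟩ := h.exists_pow_eq'
    rcases key1 τ a c hc hac u hu i with ⟨hne, -⟩ | ⟨-, j, hj⟩
    · exact absurd hi hne
    · exact sameCycle_of_pow j hj
  · intro h
    obtain ⟨j, -, hj⟩ := h.exists_pow_eq'
    obtain ⟨i, hi⟩ := key2 τ a c hc hac u hu j
    refine sameCycle_of_pow (i + 1) ?_
    rw [show ((τ * swap a c) ^ (i+1)) u = (τ * swap a c) (((τ * swap a c) ^ i) u) by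
        rw [pow_succ']; rfl, hi, hj, mulswap_apply, swap_apply_left, hc]


variable [LinearOrder α]

lemma transfer (M₀ W : Perm α) (o c a x : α)
    (hW2 : ∀ z, W (W z) = z) (hWff : ∀ z, W z ≠ z)
    (hWo : W o = c) (hM₀o : M₀ o = c) (hM₀c : M₀ c = o)
    (hac : a ≠ c) (hao : o < a) (hxo : x < o) (hxa : x < a) (hxc : x < c) :
    ((∀ m, ((M₀ * (swap a c * W * swap a c)).SameCycle x m ∨
        (M₀ * (swap a c * W * swap a c)).SameCycle x ((swap a c * W * swap a c) m)) → x ≤ m)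
      ↔ (∀ m, ((M₀ * W).SameCycle x m ∨ (M₀ * W).SameCycle x (W m)) → x ≤ m)) := by
  have hWc : W c = o := by rw [← hWo, hW2]
  set y := W a with hy
  have hWy : W y = a := hW2 a
  have hyo : y ≠ o := by
    intro h; apply hac; rw [← hWy, h, hWo]
  have hya : y ≠ a := hWff a
  have hyc : y ≠ c := by
    intro h
    have h2 : a = o := by rw [← hWy, h, hWc]
    exact hao.ne' h2
  have hoc : o ≠ c := fun h => hWff o (by rw [hWo, h])
  have hao' : a ≠ o := hao.ne'
  set W' := swap a c * W * swap a c with hW'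
  set σ := M₀ * W with hσ
  have σo : σ o = o := by rw [hσ, Perm.mul_apply, hWo, hM₀c]
  have σc : σ c = c := by rw [hσ, Perm.mul_apply, hWc, hM₀o]
  set τ₁ := σ * swap y o with hτ₁
  have τ₁c : τ₁ c = c := by
    rw [hτ₁, Perm.mul_apply, swap_apply_of_ne_of_ne (Ne.symm hyc) (Ne.symm hoc), σc]
  -- W' values
  have hW'a : W' a = o := by
    rw [hW']; simp only [Perm.mul_apply, swap_apply_left, hWc,
      swap_apply_of_ne_of_ne (Ne.symm hao') hoc]
  have hW'c : W' c = y := by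
    rw [hW']; simp only [Perm.mul_apply, swap_apply_right, ← hy,
      swap_apply_of_ne_of_ne hya hyc]
  have hW'o : W' o = a := by
    rw [hW']; simp only [Perm.mul_apply, swap_apply_of_ne_of_ne (Ne.symm hao') hoc,
      hWo, swap_apply_right]
  have hW'y : W' y = c := by
    rw [hW']; simp only [Perm.mul_apply, swap_apply_of_ne_of_ne hya hyc, hWy, swap_apply_left]
  have hW'gen : ∀ z, z ≠ a → z ≠ c → z ≠ o → z ≠ y → W' z = W z := by
    intro z h1 h2 h3 h4
    rw [hW']; simp only [Perm.mul_apply, swap_apply_of_ne_of_ne h1 h2]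
    have w1 : W z ≠ a := fun h => h4 (by rw [hy, ← h]; exact (hW2 z).symm)
    have w2 : W z ≠ c := fun h => h3 (by rw [← hWc, ← h]; exact (hW2 z).symm)
    rw [swap_apply_of_ne_of_ne w1 w2]
  -- key identity
  have hkey : M₀ * W' = τ₁ * swap a c := by
    apply Equiv.ext
    intro z
    show M₀ (W' z) = τ₁ (swap a c z)
    by_cases h1 : z = a
    · rw [h1, hW'a, hM₀o, swap_apply_left, τ₁c]
    · by_cases h2 : z = c
      · rw [h2, hW'c, swap_apply_right, hτ₁, Perm.mul_apply,
          swap_apply_of_ne_of_ne (Ne.symm hya) hao', hσ, Perm.mul_apply, ← hy]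
      · by_cases h3 : z = o
        · rw [h3, hW'o, swap_apply_of_ne_of_ne (Ne.symm hao') hoc, hτ₁, Perm.mul_apply,
            swap_apply_right, hσ, Perm.mul_apply, hWy]
        · by_cases h4 : z = y
          · rw [h4, hW'y, hM₀c, swap_apply_of_ne_of_ne hya hyc, hτ₁, Perm.mul_apply,
              swap_apply_left, σo]
          · rw [hW'gen z h1 h2 h3 h4, swap_apply_of_ne_of_ne h1 h2, hτ₁, Perm.mul_apply,
              swap_apply_of_ne_of_ne h4 h3, hσ, Perm.mul_apply]
  -- SameCycle translations
  have T2 : ∀ u v, u ≠ c → v ≠ c → u ≠ o → v ≠ o →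
      ((M₀ * W').SameCycle u v ↔ σ.SameCycle u v) := by
    intro u v h1 h2 h3 h4
    rw [hkey, sameCycle_ins τ₁ a c τ₁c hac h1 h2, hτ₁, sameCycle_ins σ y o σo hyo h3 h4]
  have T3 : ∀ u, u ≠ c → u ≠ o → ((M₀ * W').SameCycle u c ↔ σ.SameCycle u a) := by
    intro u h1 h3
    rw [hkey, sameCycle_ins_c τ₁ a c τ₁c hac h1, hτ₁, sameCycle_ins σ y o σo hyo h3 hao']
  have T4 : ∀ u, u ≠ c → u ≠ o → ((M₀ * W').SameCycle u o ↔ σ.SameCycle u y) := by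
    intro u h1 h3
    rw [hkey, sameCycle_ins τ₁ a c τ₁c hac h1 hoc, hτ₁,
      sameCycle_ins_c σ y o σo hyo h3]
  have hxc' : x ≠ c := hxc.ne
  have hxo' : x ≠ o := hxo.ne
  constructor
  · -- P(W') → P(W)
    intro hP m hm
    rcases hm with hs | hs
    · by_cases h3 : m = o
      · exact h3 ▸ hxo.le
      · by_cases h2 : m = c
        · exact h2 ▸ hxc.le
        · exact hP m (Or.inl ((T2 x m hxc' h2 hxo' h3).mpr hs))
    · by_cases h1 : m = a
      · exact h1 ▸ hxa.le
      · by_cases h2 : m = c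
        · exact h2 ▸ hxc.le
        · by_cases h3 : m = o
          · exact h3 ▸ hxo.le
          · by_cases h4 : m = y
            · subst h4
              rw [hWy] at hs
              have : (M₀ * W').SameCycle x c := (T3 x hxc' hxo').mpr hs
              exact hP y (Or.inr (hW'y ▸ this))
            · have w1 : W m ≠ c := fun h => h3 (by rw [← hWc, ← h]; exact (hW2 m).symm)
              have w2 : W m ≠ o := fun h => h2 (by rw [← hWo, ← h]; exact (hW2 m).symm)
              have := (T2 x (W m) hxc' w1 hxo' w2).mpr hs
              rw [← hW'gen m h1 h2 h3 h4] at this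
              exact hP m (Or.inr this)
  · -- P(W) → P(W')
    intro hP m hm
    rcases hm with hs | hs
    · by_cases h3 : m = o
      · exact h3 ▸ hxo.le
      · by_cases h2 : m = c
        · exact h2 ▸ hxc.le
        · exact hP m (Or.inl ((T2 x m hxc' h2 hxo' h3).mp hs))
    · by_cases h1 : m = a
      · exact h1 ▸ hxa.le
      · by_cases h2 : m = c
        · exact h2 ▸ hxc.le
        · by_cases h3 : m = o
          · exact h3 ▸ hxo.le
          · by_cases h4 : m = y
            · subst h4
              rw [hW'y] at hs
              have : σ.SameCycle x a := (T3 x hxc' hxo').mp hs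
              rw [← hWy] at this
              exact hP y (Or.inr this)
            · rw [hW'gen m h1 h2 h3 h4] at hs
              have w1 : W m ≠ c := fun h => h3 (by rw [← hWc, ← h]; exact (hW2 m).symm)
              have w2 : W m ≠ o := fun h => h2 (by rw [← hWo, ← h]; exact (hW2 m).symm)
              exact hP m (Or.inr ((T2 x (W m) hxc' w1 hxo' w2).mp hs))

end SPaux

namespace SP
open Finset Equiv Equiv.Perm SPaux

variable {n : ℕ} {O : Finset (Fin (2 * n))}

lemma mem_matchings {M : Equiv.Perm (Fin (2*n))} :
    M ∈ matchingsOfType n O ↔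
      (∀ i, M (M i) = i) ∧ (∀ i, M i ≠ i) ∧ (∀ i, i ∈ O ↔ i < M i) := by
  simp [matchingsOfType]

section basic
variable {M : Equiv.Perm (Fin (2*n))} (hM : M ∈ matchingsOfType n O)
include hM

lemma mm_invol (i) : M (M i) = i := (mem_matchings.mp hM).1 i
lemma mm_ne (i) : M i ≠ i := (mem_matchings.mp hM).2.1 i
lemma mm_iff (i) : i ∈ O ↔ i < M i := (mem_matchings.mp hM).2.2 i
lemma mm_lt {i} (hi : i ∈ O) : i < M i := (mm_iff hM i).mp hi
lemma mm_gt {i} (hi : i ∉ O) : M i < i := by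
  rcases lt_trichotomy (M i) i with h | h | h
  · exact h
  · exact absurd h (mm_ne hM i)
  · exact absurd ((mm_iff hM i).mpr h) hi
lemma mm_mem {i} (hi : i ∈ O) : M i ∉ O := by
  intro h
  have h1 := mm_lt hM hi
  have h2 := mm_lt hM h
  rw [mm_invol hM i] at h2
  exact absurd h1 (not_lt.mpr h2.le)
lemma mm_mem' {i} (hi : i ∉ O) : M i ∈ O := by
  by_contra h
  have h1 := mm_gt hM hi
  have h2 := mm_gt hM h
  rw [mm_invol hM i] at h2
  exact absurd h1 (not_lt.mpr h2.le)
end basic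

section main
variable (hO : O.card = n) (M₀ : Equiv.Perm (Fin (2 * n)))

/-- closers of `M₀`-arcs spanning the `k`-th opener. -/
noncomputable def Dk (k : Fin n) : Finset (Fin (2*n)) :=
  Finset.univ.filter (fun cc => opener n O hO k < cc ∧ M₀ cc < opener n O hO k)

noncomputable def Ek (k : Fin n) : Finset (Fin (2*n)) :=
  insert (M₀ (opener n O hO k)) (Dk hO M₀ k)

noncomputable def cntF (k : Fin n) (a : Fin (2*n)) : ℕ :=
  (Finset.univ.filter (fun cc : Fin (2*n) =>
    opener n O hO k < cc ∧ M₀ cc < opener n O hO k ∧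
      (if a ≤ M₀ (opener n O hO k) then a ≤ cc ∧ cc ≤ M₀ (opener n O hO k)
       else ¬(M₀ (opener n O hO k) < cc ∧ cc < a)))).card

noncomputable def aOf (k : Fin n) (d : ℕ) : Fin (2*n) :=
  if h : ∃ a ∈ Ek hO M₀ k, cntF hO M₀ k a = d then h.choose else M₀ (opener n O hO k)

noncomputable def encode (M : Equiv.Perm (Fin (2*n))) (k : Fin n) : ℕ :=
  (Finset.univ.filter (fun i =>
    i ∈ O ∧ i < opener n O hO k ∧ M (opener n O hO k) < M i)).card

noncomputable def unsortSeq (v : Fin n → ℕ) : ℕ → Equiv.Perm (Fin (2*n))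
  | 0 => M₀
  | j+1 => if h : j < n then
      (Equiv.swap (aOf hO M₀ ⟨j,h⟩ (v ⟨j,h⟩)) (M₀ (opener n O hO ⟨j,h⟩)))
        * unsortSeq v j *
      (Equiv.swap (aOf hO M₀ ⟨j,h⟩ (v ⟨j,h⟩)) (M₀ (opener n O hO ⟨j,h⟩)))
    else unsortSeq v j

lemma opener_mem (k : Fin n) : opener n O hO k ∈ O := Finset.orderEmbOfFin_mem O hO k
lemma opener_lt_iff {j k : Fin n} : opener n O hO j < opener n O hO k ↔ j < k :=
  OrderEmbedding.lt_iff_lt _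
lemma opener_le_iff {j k : Fin n} : opener n O hO j ≤ opener n O hO k ↔ j ≤ k :=
  OrderEmbedding.le_iff_le _
lemma opener_inj : Function.Injective (opener n O hO) :=
  (O.orderEmbOfFin hO).injective
lemma opener_surj {i} (hi : i ∈ O) : ∃ k, opener n O hO k = i := by
  have := Finset.range_orderEmbOfFin O hO
  have : i ∈ Set.range (O.orderEmbOfFin hO) := by rw [this]; exact hi
  obtain ⟨k, hk⟩ := this
  exact ⟨k, hk⟩

lemma card_openers_lt (k : Fin n) :
    (Finset.univ.filter fun i => i ∈ O ∧ i < opener n O hO k).card = k := by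
  have himg : Finset.univ.filter (fun i => i ∈ O ∧ i < opener n O hO k)
      = (Finset.univ.filter (fun j : Fin n => j < k)).image (opener n O hO) := by
    ext i
    simp only [mem_filter, mem_univ, true_and, mem_image]
    constructor
    · rintro ⟨hiO, hlt⟩
      obtain ⟨j, rfl⟩ := opener_surj hO hiO
      exact ⟨j, opener_lt_iff hO |>.mp hlt, rfl⟩
    · rintro ⟨j, hj, rfl⟩
      exact ⟨opener_mem hO j, (opener_lt_iff hO).mpr hj⟩
  rw [himg, Finset.card_image_of_injective _ (opener_inj hO)]
  have h2 : Finset.univ.filter (fun j : Fin n => j < k) = Finset.Iio k := by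
    ext j; simp
  rw [h2, Fin.card_Iio]

variable (hM₀ : M₀ ∈ matchingsOfType n O)
include hM₀

lemma card_low {M : Equiv.Perm (Fin (2*n))} (hM : M ∈ matchingsOfType n O) (k : Fin n) :
    (Finset.univ.filter fun i => i ∈ O ∧ i < opener n O hO k ∧ M i < opener n O hO k).card
      = (Finset.univ.filter fun x : Fin (2*n) => x ∉ O ∧ x < opener n O hO k).card := by
  apply Finset.card_bij (fun a _ => M a)
  · intro a ha
    simp only [mem_filter, mem_univ, true_and] at ha ⊢
    exact ⟨mm_mem hM ha.1, ha.2.2⟩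
  · intro a₁ h₁ a₂ h₂ h
    exact M.injective h
  · intro b hb
    simp only [mem_filter, mem_univ, true_and] at hb
    refine ⟨M b, ?_, mm_invol hM b⟩
    simp only [mem_filter, mem_univ, true_and]
    have h1 : M b ∈ O := mm_mem' hM hb.1
    have h2 : M b < b := mm_gt hM hb.1
    exact ⟨h1, h2.trans hb.2, by rw [mm_invol hM b]; exact hb.2⟩

lemma card_span {M : Equiv.Perm (Fin (2*n))} (hM : M ∈ matchingsOfType n O) (k : Fin n) :
    (Finset.univ.filter fun i => i ∈ O ∧ i < opener n O hO k ∧ opener n O hO k < M i).card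
      + (Finset.univ.filter fun x : Fin (2*n) => x ∉ O ∧ x < opener n O hO k).card = k := by
  rw [← card_low hO M₀ hM₀ hM k, ← card_openers_lt hO k]
  have key := Finset.card_filter_add_card_filter_not
    (s := Finset.univ.filter fun i => i ∈ O ∧ i < opener n O hO k)
    (p := fun i => opener n O hO k < M i)
  rw [Finset.filter_filter, Finset.filter_filter] at key
  have e1 : (Finset.univ.filter fun i => (i ∈ O ∧ i < opener n O hO k) ∧ opener n O hO k < M i)
      = (Finset.univ.filter fun i => i ∈ O ∧ i < opener n O hO k ∧ opener n O hO k < M i) := by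
    apply Finset.filter_congr; intro x _; tauto
  have e2 : (Finset.univ.filter fun i => (i ∈ O ∧ i < opener n O hO k) ∧ ¬ opener n O hO k < M i)
      = (Finset.univ.filter fun i => i ∈ O ∧ i < opener n O hO k ∧ M i < opener n O hO k) := by
    apply Finset.filter_congr
    intro x _
    constructor
    · rintro ⟨⟨h1, h2⟩, h3⟩
      refine ⟨h1, h2, lt_of_le_of_ne (not_lt.mp h3) ?_⟩
      intro h
      have : x = M (opener n O hO k) := by rw [← h, mm_invol hM]
      have h5 : opener n O hO k < M (opener n O hO k) := mm_lt hM (opener_mem hO k)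
      rw [← this] at h5
      exact absurd h2 (not_lt.mpr h5.le)
    · rintro ⟨h1, h2, h3⟩
      exact ⟨⟨h1, h2⟩, not_lt.mpr h3.le⟩
  rw [e1, e2] at key
  exact key

lemma card_Dk_add (k : Fin n) :
    (Dk hO M₀ k).card
      + (Finset.univ.filter fun x : Fin (2*n) => x ∉ O ∧ x < opener n O hO k).card = k := by
  have hcard : (Dk hO M₀ k).card = (Finset.univ.filter fun i =>
      i ∈ O ∧ i < opener n O hO k ∧ opener n O hO k < M₀ i).card := by
    apply Finset.card_bij (fun a _ => M₀ a)
    · intro a ha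
      simp only [Dk, mem_filter, mem_univ, true_and] at ha ⊢
      have h1 : M₀ a < M₀ (M₀ a) := by rw [mm_invol hM₀]; exact ha.2.trans ha.1
      exact ⟨(mm_iff hM₀ _).mpr h1, ha.2, by rw [mm_invol hM₀]; exact ha.1⟩
    · intro a₁ h₁ a₂ h₂ h
      exact M₀.injective h
    · intro b hb
      simp only [mem_filter, mem_univ, true_and] at hb
      refine ⟨M₀ b, ?_, mm_invol hM₀ b⟩
      simp only [Dk, mem_filter, mem_univ, true_and]
      exact ⟨hb.2.2, by rw [mm_invol hM₀]; exact hb.2.1⟩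
  rw [hcard]
  exact card_span hO M₀ hM₀ hM₀ k

lemma encode_le {M : Equiv.Perm (Fin (2*n))} (hM : M ∈ matchingsOfType n O) (k : Fin n) :
    encode hO M k ≤ (Dk hO M₀ k).card := by
  have h1 : encode hO M k ≤ (Finset.univ.filter fun i =>
      i ∈ O ∧ i < opener n O hO k ∧ opener n O hO k < M i).card := by
    apply Finset.card_le_card
    intro i hi
    simp only [encode, mem_filter, mem_univ, true_and] at hi ⊢
    have : opener n O hO k < M (opener n O hO k) := mm_lt hM (opener_mem hO k)
    exact ⟨hi.1, hi.2.1, this.trans hi.2.2⟩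
  have h2 := card_span hO M₀ hM₀ hM k
  have h3 := card_Dk_add hO M₀ hM₀ k
  omega

lemma c_gt (k : Fin n) : opener n O hO k < M₀ (opener n O hO k) := mm_lt hM₀ (opener_mem hO k)

lemma c_notMem_Dk (k : Fin n) : M₀ (opener n O hO k) ∉ Dk hO M₀ k := by
  simp only [Dk, mem_filter, mem_univ, true_and, not_and]
  intro _
  rw [mm_invol hM₀]
  exact lt_irrefl _

lemma mem_Ek_gt {k : Fin n} {a} (ha : a ∈ Ek hO M₀ k) : opener n O hO k < a := by
  rcases Finset.mem_insert.mp ha with h | h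
  · rw [h]; exact c_gt hO M₀ hM₀ k
  · exact (Finset.mem_filter.mp h).2.1

lemma mem_Ek_M₀le {k : Fin n} {a} (ha : a ∈ Ek hO M₀ k) : M₀ a ≤ opener n O hO k := by
  rcases Finset.mem_insert.mp ha with h | h
  · rw [h, mm_invol hM₀]
  · exact ((Finset.mem_filter.mp h).2.2).le

lemma mem_Ek_notmem {k : Fin n} {a} (ha : a ∈ Ek hO M₀ k) : a ∉ O := by
  intro haO
  have h1 := mm_lt hM₀ haO
  have h2 := mem_Ek_M₀le hO M₀ hM₀ ha
  have h3 := mem_Ek_gt hO M₀ hM₀ ha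
  exact absurd h1 (not_lt.mpr (h2.trans h3.le))

lemma cntF_le {k : Fin n} (a) : cntF hO M₀ k a ≤ (Dk hO M₀ k).card := by
  apply Finset.card_le_card
  intro cc hcc
  simp only [mem_filter, mem_univ, true_and, Dk] at hcc ⊢
  exact ⟨hcc.1, hcc.2.1⟩

lemma cntF_c (k : Fin n) : cntF hO M₀ k (M₀ (opener n O hO k)) = 0 := by
  rw [cntF, Finset.card_eq_zero, Finset.filter_eq_empty_iff]
  intro cc _
  rw [if_pos le_rfl]
  rintro ⟨h1, h2, h3, h4⟩
  have : cc = M₀ (opener n O hO k) := le_antisymm h4 h3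
  rw [this, mm_invol hM₀] at h2
  exact lt_irrefl _ h2

lemma cntF_pos {k : Fin n} {a} (ha : a ∈ Dk hO M₀ k) : 0 < cntF hO M₀ k a := by
  rw [cntF, Finset.card_pos]
  refine ⟨a, ?_⟩
  simp only [Dk, mem_filter, mem_univ, true_and] at ha
  simp only [mem_filter, mem_univ, true_and]
  refine ⟨ha.1, ha.2, ?_⟩
  by_cases h : a ≤ M₀ (opener n O hO k)
  · rw [if_pos h]; exact ⟨le_rfl, h⟩
  · rw [if_neg h]; rintro ⟨_, h2⟩; exact lt_irrefl _ h2

lemma cntF_eq (k : Fin n) (a : Fin (2*n)) :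
    cntF hO M₀ k a = ((Dk hO M₀ k).filter (fun cc =>
      if a ≤ M₀ (opener n O hO k) then a ≤ cc ∧ cc ≤ M₀ (opener n O hO k)
      else ¬(M₀ (opener n O hO k) < cc ∧ cc < a))).card := by
  rw [cntF, Dk, Finset.filter_filter]
  congr 1
  apply Finset.filter_congr
  intro x _
  tauto

lemma cntF_ne {k : Fin n} {a b} (ha : a ∈ Ek hO M₀ k) (hb : b ∈ Ek hO M₀ k) (hab : a < b) :
    cntF hO M₀ k a ≠ cntF hO M₀ k b := by
  set c := M₀ (opener n O hO k) with hc
  rcases Finset.mem_insert.mp hb with hbc | hbD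
  · -- b = c, so a ∈ Dk, cnt b = 0 < cnt a
    have haD : a ∈ Dk hO M₀ k := by
      rcases Finset.mem_insert.mp ha with h | h
      · exact absurd (h.trans hbc.symm) hab.ne
      · exact h
    rw [hbc, cntF_c hO M₀ hM₀ k]
    have := cntF_pos hO M₀ hM₀ haD
    omega
  · rcases Finset.mem_insert.mp ha with hac | haD
    · -- a = c
      rw [hac, cntF_c hO M₀ hM₀ k]
      have := cntF_pos hO M₀ hM₀ hbD
      omega
    · rw [cntF_eq hO M₀ hM₀, cntF_eq hO M₀ hM₀]
      rcases lt_trichotomy b c with hbc | hbc | hbc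
      · -- a < b < c : cnt b < cnt a
        have hac : a < c := hab.trans hbc
        apply Nat.ne_of_gt
        apply Finset.card_lt_card
        rw [Finset.ssubset_iff_of_subset]
        · refine ⟨a, ?_, ?_⟩
          · rw [Finset.mem_filter, if_pos hac.le]
            exact ⟨haD, le_rfl, hac.le⟩
          · rw [Finset.mem_filter, if_pos hbc.le]
            rintro ⟨-, h1, -⟩
            exact absurd hab (not_lt.mpr h1)
        · intro cc hcc
          rw [Finset.mem_filter, if_pos hbc.le] at hcc
          rw [Finset.mem_filter, if_pos hac.le]
          exact ⟨hcc.1, hab.le.trans hcc.2.1, hcc.2.2⟩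
      · exact absurd (by rwa [hbc] at hbD) (c_notMem_Dk hO M₀ hM₀ k)
      · -- c < b
        rcases lt_trichotomy a c with hac | hac | hac
        · -- a < c < b : cnt a < cnt b
          apply Nat.ne_of_lt
          apply Finset.card_lt_card
          rw [Finset.ssubset_iff_of_subset]
          · refine ⟨b, ?_, ?_⟩
            · rw [Finset.mem_filter, if_neg (not_le.mpr hbc)]
              exact ⟨hbD, fun h => lt_irrefl _ h.2⟩
            · rw [Finset.mem_filter, if_pos hac.le]
              rintro ⟨-, -, h1⟩
              exact absurd hbc (not_lt.mpr h1)
          · intro cc hcc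
            rw [Finset.mem_filter, if_pos hac.le] at hcc
            rw [Finset.mem_filter, if_neg (not_le.mpr hbc)]
            exact ⟨hcc.1, fun h => absurd h.1 (not_lt.mpr hcc.2.2)⟩
        · exact absurd (by rwa [hac] at haD) (c_notMem_Dk hO M₀ hM₀ k)
        · -- c < a < b : cnt b < cnt a
          apply Nat.ne_of_gt
          apply Finset.card_lt_card
          rw [Finset.ssubset_iff_of_subset]
          · refine ⟨a, ?_, ?_⟩
            · rw [Finset.mem_filter, if_neg (not_le.mpr hac)]
              exact ⟨haD, fun h => lt_irrefl _ h.2⟩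
            · rw [Finset.mem_filter, if_neg (not_le.mpr (hac.trans hab))]
              intro h
              exact h.2 ⟨hac, hab⟩
          · intro cc hcc
            rw [Finset.mem_filter, if_neg (not_le.mpr (hac.trans hab))] at hcc
            rw [Finset.mem_filter, if_neg (not_le.mpr hac)]
            exact ⟨hcc.1, fun h => hcc.2 ⟨h.1, h.2.trans hab⟩⟩

lemma cntF_injOn {k : Fin n} {a b} (ha : a ∈ Ek hO M₀ k) (hb : b ∈ Ek hO M₀ k)
    (h : cntF hO M₀ k a = cntF hO M₀ k b) : a = b := by
  rcases lt_trichotomy a b with hlt | he | hgt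
  · exact absurd h (cntF_ne hO M₀ hM₀ ha hb hlt)
  · exact he
  · exact absurd h.symm (cntF_ne hO M₀ hM₀ hb ha hgt)

lemma cntF_surj (k : Fin n) {d : ℕ} (hd : d ≤ (Dk hO M₀ k).card) :
    ∃ a ∈ Ek hO M₀ k, cntF hO M₀ k a = d := by
  have hcard : (Ek hO M₀ k).card = (Dk hO M₀ k).card + 1 :=
    Finset.card_insert_of_notMem (c_notMem_Dk hO M₀ hM₀ k)
  have hsurj := Finset.surj_on_of_inj_on_of_card_le (s := Ek hO M₀ k)
    (t := Finset.range ((Dk hO M₀ k).card + 1)) (fun a _ => cntF hO M₀ k a)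
    (fun a _ => Finset.mem_range.mpr (Nat.lt_succ_of_le (cntF_le hO M₀ hM₀ a)))
    (fun a₁ a₂ h₁ h₂ h => cntF_injOn hO M₀ hM₀ h₁ h₂ h)
    (by rw [hcard, Finset.card_range])
  obtain ⟨a, ha, hea⟩ := hsurj d (Finset.mem_range.mpr (Nat.lt_succ_of_le hd))
  exact ⟨a, ha, hea.symm⟩

lemma aOf_spec (k : Fin n) {d : ℕ} (hd : d ≤ (Dk hO M₀ k).card) :
    aOf hO M₀ k d ∈ Ek hO M₀ k ∧ cntF hO M₀ k (aOf hO M₀ k d) = d := by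
  rw [aOf, dif_pos (cntF_surj hO M₀ hM₀ k hd)]
  obtain ⟨h1, h2⟩ := (cntF_surj hO M₀ hM₀ k hd).choose_spec
  exact ⟨h1, h2⟩

lemma aOf_zero (k : Fin n) : aOf hO M₀ k 0 = M₀ (opener n O hO k) := by
  obtain ⟨h1, h2⟩ := aOf_spec hO M₀ hM₀ k (Nat.zero_le _)
  rcases Finset.mem_insert.mp h1 with h | h
  · exact h
  · have := cntF_pos hO M₀ hM₀ h
    omega


omit hM₀ in
lemma unsortSeq_succ (v : Fin n → ℕ) (j : ℕ) (h : j < n) :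
    unsortSeq hO M₀ v (j+1) =
      (Equiv.swap (aOf hO M₀ ⟨j,h⟩ (v ⟨j,h⟩)) (M₀ (opener n O hO ⟨j,h⟩)))
        * unsortSeq hO M₀ v j *
      (Equiv.swap (aOf hO M₀ ⟨j,h⟩ (v ⟨j,h⟩)) (M₀ (opener n O hO ⟨j,h⟩))) := by
  rw [unsortSeq, dif_pos h]

omit hM₀ in
lemma unsortSeq_succ_ge (v : Fin n → ℕ) (j : ℕ) (h : ¬ j < n) :
    unsortSeq hO M₀ v (j+1) = unsortSeq hO M₀ v j := by
  rw [unsortSeq, dif_neg h]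

omit hM₀ in
lemma sortSeq_succ (M : Equiv.Perm (Fin (2*n))) (j : ℕ) (h : j < n) :
    sortSeq n O hO M₀ M (j+1) =
      (Equiv.swap ((sortSeq n O hO M₀ M j) (opener n O hO ⟨n-1-j, by omega⟩))
          (M₀ (opener n O hO ⟨n-1-j, by omega⟩)))
        * sortSeq n O hO M₀ M j *
      (Equiv.swap ((sortSeq n O hO M₀ M j) (opener n O hO ⟨n-1-j, by omega⟩))
          (M₀ (opener n O hO ⟨n-1-j, by omega⟩))) := by
  rw [sortSeq, dif_pos h]

lemma unsort_agree (v : Fin n → ℕ) (hv : ∀ k, v k ≤ (Dk hO M₀ k).card) :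
    ∀ j, ∀ m : Fin n, j ≤ (m : ℕ) →
      unsortSeq hO M₀ v j (opener n O hO m) = M₀ (opener n O hO m) := by
  intro j
  induction j with
  | zero => intro m _; rfl
  | succ j ih =>
    intro m hm
    have hjn : j < n := lt_of_lt_of_le (Nat.lt_of_succ_le hm) (le_of_lt m.isLt)
    rw [unsortSeq_succ hO M₀ v j hjn]
    have haE : aOf hO M₀ ⟨j,hjn⟩ (v ⟨j,hjn⟩) ∈ Ek hO M₀ ⟨j,hjn⟩ :=
      (aOf_spec hO M₀ hM₀ ⟨j,hjn⟩ (hv _)).1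
    have hjm : (⟨j,hjn⟩ : Fin n) < m := Nat.lt_of_succ_le hm
    have h1 : opener n O hO m ≠ aOf hO M₀ ⟨j,hjn⟩ (v ⟨j,hjn⟩) :=
      fun h => (mem_Ek_notmem hO M₀ hM₀ haE) (h ▸ opener_mem hO m)
    have h2 : opener n O hO m ≠ M₀ (opener n O hO ⟨j,hjn⟩) :=
      fun h => (mm_mem hM₀ (opener_mem hO ⟨j,hjn⟩)) (h ▸ opener_mem hO m)
    rw [Perm.mul_apply, Perm.mul_apply, swap_apply_of_ne_of_ne h1 h2,
      ih m (le_of_lt (Nat.lt_of_succ_le hm))]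
    have h3 : M₀ (opener n O hO m) ≠ aOf hO M₀ ⟨j,hjn⟩ (v ⟨j,hjn⟩) := by
      intro h
      have hle := mem_Ek_M₀le hO M₀ hM₀ haE
      rw [← h, mm_invol hM₀] at hle
      exact absurd ((opener_lt_iff hO).mpr hjm) (not_lt.mpr hle)
    have h4 : M₀ (opener n O hO m) ≠ M₀ (opener n O hO ⟨j,hjn⟩) := by
      intro h
      exact (ne_of_gt hjm) (opener_inj hO (M₀.injective h))
    rw [swap_apply_of_ne_of_ne h3 h4]

lemma conj_mem {W : Equiv.Perm (Fin (2*n))} (hW : W ∈ matchingsOfType n O) (j : Fin n) {a}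
    (ha : a ∈ Ek hO M₀ j)
    (hagree : ∀ m : Fin n, (j:ℕ) ≤ m → W (opener n O hO m) = M₀ (opener n O hO m)) :
    (Equiv.swap a (M₀ (opener n O hO j))) * W * (Equiv.swap a (M₀ (opener n O hO j)))
      ∈ matchingsOfType n O := by
  have hcE : M₀ (opener n O hO j) ∈ Ek hO M₀ j := Finset.mem_insert_self _ _
  have partner : ∀ b ∈ Ek hO M₀ j, ∀ i, W i = b → i ≤ opener n O hO j := by
    intro b hb i hWi
    have hbO : b ∉ O := mem_Ek_notmem hO M₀ hM₀ hb
    have hiWb : i = W b := by rw [← hWi, mm_invol hW]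
    have hiO : i ∈ O := hiWb ▸ mm_mem' hW hbO
    obtain ⟨m, hm⟩ := opener_surj hO hiO
    by_contra hcon
    have hjm : (j : Fin n) < m := by
      rw [← opener_lt_iff hO (j := j) (k := m), hm]
      exact lt_of_not_ge hcon
    have heq := hagree m (le_of_lt hjm)
    rw [hm, hWi] at heq
    have hMb : M₀ b = opener n O hO m := by rw [heq, mm_invol hM₀, hm]
    have hle := mem_Ek_M₀le hO M₀ hM₀ hb
    rw [hMb] at hle
    exact absurd ((opener_lt_iff hO).mpr hjm) (not_lt.mpr hle)
  set c := M₀ (opener n O hO j) with hcdef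
  set s := Equiv.swap a c with hsdef
  have haO : a ∉ O := mem_Ek_notmem hO M₀ hM₀ ha
  have hcO : c ∉ O := mm_mem hM₀ (opener_mem hO j)
  have happly : ∀ x, (s * W * s) x = s (W (s x)) := by
    intro x; rw [Perm.mul_apply, Perm.mul_apply]
  have hgoal : ∀ i, (i ∈ O → i < (s * W * s) i) ∧ (i ∉ O → (s * W * s) i < i) := by
    intro i
    constructor
    · intro hiO
      have hia : i ≠ a := fun h => haO (h ▸ hiO)
      have hic : i ≠ c := fun h => hcO (h ▸ hiO)
      rw [happly, swap_apply_of_ne_of_ne hia hic]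
      by_cases h1 : W i = a
      · rw [h1, swap_apply_left]
        exact lt_of_le_of_lt (partner a ha i h1) (c_gt hO M₀ hM₀ j)
      · by_cases h2 : W i = c
        · rw [h2, swap_apply_right]
          exact lt_of_le_of_lt (partner c hcE i h2) (mem_Ek_gt hO M₀ hM₀ ha)
        · rw [swap_apply_of_ne_of_ne h1 h2]; exact mm_lt hW hiO
    · intro hiO
      by_cases hia : i = a
      · rw [hia, happly, swap_apply_left]
        have hWcO : W c ∈ O := mm_mem' hW hcO
        have e1 : W c ≠ a := fun h => haO (h ▸ hWcO)
        have e2 : W c ≠ c := fun h => hcO (h ▸ hWcO)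
        rw [swap_apply_of_ne_of_ne e1 e2]
        exact lt_of_le_of_lt (partner c hcE (W c) (mm_invol hW c)) (mem_Ek_gt hO M₀ hM₀ ha)
      · by_cases hic : i = c
        · rw [hic, happly, swap_apply_right]
          have hWaO : W a ∈ O := mm_mem' hW haO
          have e1 : W a ≠ a := fun h => haO (h ▸ hWaO)
          have e2 : W a ≠ c := fun h => hcO (h ▸ hWaO)
          rw [swap_apply_of_ne_of_ne e1 e2]
          exact lt_of_le_of_lt (partner a ha (W a) (mm_invol hW a)) (c_gt hO M₀ hM₀ j)
        · rw [happly, swap_apply_of_ne_of_ne hia hic]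
          have hWiO : W i ∈ O := mm_mem' hW hiO
          have e1 : W i ≠ a := fun h => haO (h ▸ hWiO)
          have e2 : W i ≠ c := fun h => hcO (h ▸ hWiO)
          rw [swap_apply_of_ne_of_ne e1 e2]
          exact mm_gt hW hiO
  rw [mem_matchings]
  refine ⟨?_, ?_, ?_⟩
  · intro x
    rw [happly, happly, swap_apply_self, mm_invol hW, swap_apply_self]
  · intro x h
    rw [happly] at h
    have h2 : W (s x) = s x := by
      have := congrArg s h
      rwa [swap_apply_self] at this
    exact mm_ne hW (s x) h2
  · intro i
    constructor
    · exact (hgoal i).1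
    · intro hlt
      by_contra hiO
      exact absurd hlt (not_lt.mpr (le_of_lt ((hgoal i).2 hiO)))

lemma unsort_mem (v : Fin n → ℕ) (hv : ∀ k, v k ≤ (Dk hO M₀ k).card) :
    ∀ j, unsortSeq hO M₀ v j ∈ matchingsOfType n O := by
  intro j
  induction j with
  | zero => exact hM₀
  | succ j ih =>
    by_cases h : j < n
    · rw [unsortSeq_succ hO M₀ v j h]
      exact conj_mem hO M₀ hM₀ ih ⟨j,h⟩ (aOf_spec hO M₀ hM₀ ⟨j,h⟩ (hv _)).1
        (fun m hm => unsort_agree hO M₀ hM₀ v hv j m hm)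
    · rw [unsortSeq_succ_ge hO M₀ v j h]; exact ih

lemma unsort_stage (v : Fin n → ℕ) (hv : ∀ k, v k ≤ (Dk hO M₀ k).card) (j : ℕ) (h : j < n) :
    unsortSeq hO M₀ v (j+1) (opener n O hO ⟨j,h⟩) = aOf hO M₀ ⟨j,h⟩ (v ⟨j,h⟩) := by
  rw [unsortSeq_succ hO M₀ v j h, Perm.mul_apply, Perm.mul_apply]
  have haE := (aOf_spec hO M₀ hM₀ ⟨j,h⟩ (hv _)).1
  have h1 : opener n O hO ⟨j,h⟩ ≠ aOf hO M₀ ⟨j,h⟩ (v ⟨j,h⟩) :=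
    ne_of_lt (mem_Ek_gt hO M₀ hM₀ haE)
  have h2 : opener n O hO ⟨j,h⟩ ≠ M₀ (opener n O hO ⟨j,h⟩) := ne_of_lt (c_gt hO M₀ hM₀ ⟨j,h⟩)
  rw [swap_apply_of_ne_of_ne h1 h2, unsort_agree hO M₀ hM₀ v hv j ⟨j,h⟩ le_rfl,
    swap_apply_right]

lemma retrace (v : Fin n → ℕ) (hv : ∀ k, v k ≤ (Dk hO M₀ k).card) :
    ∀ i, i ≤ n → sortSeq n O hO M₀ (unsortSeq hO M₀ v n) i = unsortSeq hO M₀ v (n - i) := by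
  intro i
  induction i with
  | zero => intro _; rw [Nat.sub_zero]; rfl
  | succ i ih =>
    intro hi
    have hin : i < n := hi
    have hr : n - 1 - i < n := by omega
    have hni : n - i = (n - 1 - i) + 1 := by omega
    have hni2 : n - (i+1) = n - 1 - i := by omega
    rw [sortSeq_succ hO M₀ _ i hin, ih (le_of_lt hin), hni, hni2]
    rw [unsort_stage hO M₀ hM₀ v hv (n-1-i) hr]
    rw [unsortSeq_succ hO M₀ v (n-1-i) hr]
    set s := Equiv.swap (aOf hO M₀ ⟨n-1-i,hr⟩ (v ⟨n-1-i,hr⟩)) (M₀ (opener n O hO ⟨n-1-i,hr⟩))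
    set Wr := unsortSeq hO M₀ v (n-1-i)
    have : s * (s * Wr * s) * s = (s*s) * Wr * (s*s) := by group
    rw [this, Equiv.swap_mul_self, one_mul, mul_one]

omit hM₀ in
lemma sorMk_eq_cntF (M : Equiv.Perm (Fin (2*n))) (k : Fin n) :
    sorMk n O hO M₀ M k
      = cntF hO M₀ k (sortSeq n O hO M₀ M (n - 1 - (k:ℕ)) (opener n O hO k)) := rfl

lemma sorMk_unsort (v : Fin n → ℕ) (hv : ∀ k, v k ≤ (Dk hO M₀ k).card) (k : Fin n) :
    sorMk n O hO M₀ (unsortSeq hO M₀ v n) k = v k := by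
  have h1 : n - 1 - (k:ℕ) ≤ n := by omega
  have h2 : n - (n - 1 - (k:ℕ)) = (k:ℕ) + 1 := by
    have := k.isLt; omega
  have hre := retrace hO M₀ hM₀ v hv (n - 1 - (k:ℕ)) h1
  rw [h2] at hre
  rw [sorMk_eq_cntF, hre]
  have hstage := unsort_stage hO M₀ hM₀ v hv (k:ℕ) k.isLt
  simp only [Fin.eta] at hstage
  rw [hstage]
  exact (aOf_spec hO M₀ hM₀ k (hv k)).2

lemma lemA {W : Equiv.Perm (Fin (2*n))} (hW : W ∈ matchingsOfType n O) (k : Fin n)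
    (h : W (opener n O hO k) = M₀ (opener n O hO k)) :
    ∀ m, ((M₀ * W).SameCycle (opener n O hO k) m ∨
        (M₀ * W).SameCycle (opener n O hO k) (W m)) → opener n O hO k ≤ m := by
  have hfix : Function.IsFixedPt (⇑(M₀ * W)) (opener n O hO k) := by
    show (M₀ * W) (opener n O hO k) = opener n O hO k
    rw [Perm.mul_apply, h, mm_invol hM₀]
  intro m hm
  rcases hm with ⟨i, hi⟩ | ⟨i, hi⟩
  · rw [Function.IsFixedPt.perm_zpow hfix i] at hi
    exact hi ▸ le_rfl
  · rw [Function.IsFixedPt.perm_zpow hfix i] at hi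
    have hm2 : m = W (opener n O hO k) := by rw [← mm_invol hW m, ← hi]
    rw [hm2, h]
    exact (c_gt hO M₀ hM₀ k).le

omit hM₀ in
lemma lemA' {W : Equiv.Perm (Fin (2*n))} (k : Fin n) {a}
    (hWa : W (opener n O hO k) = a) (haD : a ∈ Dk hO M₀ k) :
    ¬ (∀ m, ((M₀ * W).SameCycle (opener n O hO k) m ∨
        (M₀ * W).SameCycle (opener n O hO k) (W m)) → opener n O hO k ≤ m) := by
  intro h
  have h1 : (M₀ * W).SameCycle (opener n O hO k) (M₀ a) :=
    ⟨1, by rw [zpow_one, Perm.mul_apply, hWa]⟩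
  have h2 := h (M₀ a) (Or.inl h1)
  have h3 : M₀ a < opener n O hO k := (Finset.mem_filter.mp haD).2.2
  exact absurd h2 (not_le.mpr h3)

lemma cond_chain (v : Fin n → ℕ) (hv : ∀ k, v k ≤ (Dk hO M₀ k).card) (k : Fin n) :
    ∀ j, (k:ℕ)+1 ≤ j → j ≤ n →
    ((∀ m, ((M₀ * unsortSeq hO M₀ v j).SameCycle (opener n O hO k) m ∨
        (M₀ * unsortSeq hO M₀ v j).SameCycle (opener n O hO k) ((unsortSeq hO M₀ v j) m)) →
        opener n O hO k ≤ m)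
      ↔ (∀ m, ((M₀ * unsortSeq hO M₀ v ((k:ℕ)+1)).SameCycle (opener n O hO k) m ∨
        (M₀ * unsortSeq hO M₀ v ((k:ℕ)+1)).SameCycle (opener n O hO k)
          ((unsortSeq hO M₀ v ((k:ℕ)+1)) m)) →
        opener n O hO k ≤ m)) := by
  intro j
  induction j with
  | zero => intro h; omega
  | succ j ih =>
    intro hj1 hj2
    rcases Nat.lt_or_ge j ((k:ℕ)+1) with hcase | hcase
    · have : j = (k:ℕ) := by omega
      subst this
      exact Iff.rfl
    · have hjn : j < n := by omega
      have hstep : (∀ m, ((M₀ * unsortSeq hO M₀ v (j+1)).SameCycle (opener n O hO k) m ∨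
          (M₀ * unsortSeq hO M₀ v (j+1)).SameCycle (opener n O hO k)
            ((unsortSeq hO M₀ v (j+1)) m)) → opener n O hO k ≤ m)
          ↔ (∀ m, ((M₀ * unsortSeq hO M₀ v j).SameCycle (opener n O hO k) m ∨
          (M₀ * unsortSeq hO M₀ v j).SameCycle (opener n O hO k)
            ((unsortSeq hO M₀ v j) m)) → opener n O hO k ≤ m) := by
        by_cases hca : aOf hO M₀ ⟨j,hjn⟩ (v ⟨j,hjn⟩) = M₀ (opener n O hO ⟨j,hjn⟩)
        · rw [unsortSeq_succ hO M₀ v j hjn, hca, Equiv.swap_self, ← Perm.one_def,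
            one_mul, mul_one]
        · have haE := (aOf_spec hO M₀ hM₀ ⟨j,hjn⟩ (hv _)).1
          have haD : aOf hO M₀ ⟨j,hjn⟩ (v ⟨j,hjn⟩) ∈ Dk hO M₀ ⟨j,hjn⟩ := by
            rcases Finset.mem_insert.mp haE with h | h
            · exact absurd h hca
            · exact h
          have hW := unsort_mem hO M₀ hM₀ v hv j
          have hkj : (k : Fin n) < (⟨j,hjn⟩ : Fin n) := by
            show (k:ℕ) < j
            omega
          have hxo : opener n O hO k < opener n O hO ⟨j,hjn⟩ := (opener_lt_iff hO).mpr hkj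
          rw [unsortSeq_succ hO M₀ v j hjn]
          exact SPaux.transfer M₀ (unsortSeq hO M₀ v j) (opener n O hO ⟨j,hjn⟩)
            (M₀ (opener n O hO ⟨j,hjn⟩)) (aOf hO M₀ ⟨j,hjn⟩ (v ⟨j,hjn⟩)) (opener n O hO k)
            (mm_invol hW) (mm_ne hW)
            (unsort_agree hO M₀ hM₀ v hv j ⟨j,hjn⟩ le_rfl) rfl (mm_invol hM₀ _)
            hca ((Finset.mem_filter.mp haD).2.1)
            hxo (hxo.trans (mem_Ek_gt hO M₀ hM₀ haE)) (hxo.trans (c_gt hO M₀ hM₀ ⟨j,hjn⟩))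
      exact hstep.trans (ih hcase (by omega))

lemma cyc_unsort (v : Fin n → ℕ) (hv : ∀ k, v k ≤ (Dk hO M₀ k).card) :
    CycMatch n O hO M₀ (unsortSeq hO M₀ v n) = Finset.univ.filter (fun k => v k = 0) := by
  ext k
  rw [CycMatch, Finset.mem_filter, Finset.mem_filter]
  simp only [Finset.mem_univ, true_and]
  have hk1 : (k:ℕ)+1 ≤ n := k.isLt
  rw [cond_chain hO M₀ hM₀ v hv k n hk1 le_rfl]
  have hstage := unsort_stage hO M₀ hM₀ v hv (k:ℕ) k.isLt
  simp only [Fin.eta] at hstage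
  have hWmem := unsort_mem hO M₀ hM₀ v hv ((k:ℕ)+1)
  constructor
  · intro hcond
    by_contra hvk
    have hane : aOf hO M₀ k (v k) ≠ M₀ (opener n O hO k) := by
      intro h
      have := (aOf_spec hO M₀ hM₀ k (hv k)).2
      rw [h, cntF_c hO M₀ hM₀ k] at this
      exact hvk this.symm
    have haD : aOf hO M₀ k (v k) ∈ Dk hO M₀ k := by
      rcases Finset.mem_insert.mp (aOf_spec hO M₀ hM₀ k (hv k)).1 with h | h
      · exact absurd h hane
      · exact h
    exact lemA' hO M₀ k hstage haD hcond
  · intro hvk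
    rw [hvk] at hstage
    rw [aOf_zero hO M₀ hM₀ k] at hstage
    exact lemA hO M₀ hM₀ hWmem k hstage

lemma encode_asym {M M' : Equiv.Perm (Fin (2*n))} (hM : M ∈ matchingsOfType n O)
    (hM' : M' ∈ matchingsOfType n O) (h : ∀ k, encode hO M k = encode hO M' k) {p}
    (hagree : ∀ q, p < q → M q = M' q) (hpO : p ∉ O) (hne : M p ≠ M' p)
    (hlt : M p < M' p) : False := by
  have hmO : M' p ∈ O := mm_mem' hM' hpO
  obtain ⟨km, hkm⟩ := opener_surj hO hmO
  have hM'm : M' (M' p) = p := mm_invol hM' p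
  have hMm_lt : M (M' p) < p := by
    have h1 : M (M' p) ≠ p := by
      intro hh
      apply hne
      have : M' p = M p := by rw [← mm_invol hM (M' p), hh]
      exact this.symm ▸ rfl
    rcases lt_or_gt_of_ne h1 with hc | hc
    · exact hc
    · exfalso
      have h2 := hagree (M (M' p)) hc
      have h3 : M' (M (M' p)) = M' p := by rw [← h2, mm_invol hM]
      have h4 : M (M' p) = M' (M' p) := M'.injective (by rw [h3, mm_invol hM'])
      rw [hM'm] at h4
      exact h1 h4
  have hT : ∀ i, i < M' p → (p < M i ↔ p < M' i) := by
    intro i him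
    constructor
    · intro hpi
      have h3 : M' (M i) = i := by rw [← hagree _ hpi, mm_invol hM]
      have h4 : M' i = M i := M'.injective (by rw [mm_invol hM', h3])
      rw [h4]; exact hpi
    · intro hpi
      have h3 : M (M' i) = i := by rw [hagree _ hpi, mm_invol hM']
      have h4 : M i = M' i := M.injective (by rw [mm_invol hM, h3])
      rw [h4]; exact hpi
  have hE' : encode hO M' km = (Finset.univ.filter (fun i =>
      i ∈ O ∧ i < M' p ∧ p < M' i)).card := by
    rw [encode, hkm, hM'm]
  have hE : encode hO M km = (Finset.univ.filter (fun i =>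
      i ∈ O ∧ i < M' p ∧ M (M' p) < M i)).card := by
    rw [encode, hkm]
  have hsub : (Finset.univ.filter (fun i => i ∈ O ∧ i < M' p ∧ p < M' i))
      ⊂ (Finset.univ.filter (fun i => i ∈ O ∧ i < M' p ∧ M (M' p) < M i)) := by
    rw [Finset.ssubset_iff_of_subset]
    · refine ⟨M p, ?_, ?_⟩
      · simp only [Finset.mem_filter, Finset.mem_univ, true_and]
        refine ⟨mm_mem' hM hpO, hlt, ?_⟩
        rw [mm_invol hM]
        exact hMm_lt
      · simp only [Finset.mem_filter, Finset.mem_univ, true_and, not_and]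
        intro _ hmp h6
        have h7 := (hT (M p) hmp).mpr h6
        rw [mm_invol hM] at h7
        exact lt_irrefl _ h7
    · intro i hi
      simp only [Finset.mem_filter, Finset.mem_univ, true_and] at hi ⊢
      refine ⟨hi.1, hi.2.1, lt_trans hMm_lt ?_⟩
      exact (hT i hi.2.1).mpr hi.2.2
  have := Finset.card_lt_card hsub
  rw [← hE', ← hE] at this
  have h9 := h km
  omega

lemma encode_inj {M M' : Equiv.Perm (Fin (2*n))} (hM : M ∈ matchingsOfType n O)
    (hM' : M' ∈ matchingsOfType n O) (h : ∀ k, encode hO M k = encode hO M' k) : M = M' := by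
  by_contra hne
  have hex : ∃ p, M p ≠ M' p := by
    by_contra hall
    push_neg at hall
    exact hne (Equiv.ext hall)
  set P := Finset.univ.filter (fun p => M p ≠ M' p) with hP
  have hPne : P.Nonempty := ⟨hex.choose, by
    rw [hP, Finset.mem_filter]
    exact ⟨Finset.mem_univ _, hex.choose_spec⟩⟩
  set p := P.max' hPne with hpdef
  have hpmem : M p ≠ M' p := by
    have hmem := P.max'_mem hPne
    simp only [hP, Finset.mem_filter] at hmem
    exact hmem.2
  have hagree : ∀ q, p < q → M q = M' q := by
    intro q hq
    by_contra hne2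
    have hqP : q ∈ P := by rw [hP, Finset.mem_filter]; exact ⟨Finset.mem_univ q, hne2⟩
    exact absurd (P.le_max' q hqP) (not_le.mpr hq)
  have hpO : p ∉ O := by
    intro hpOmem
    have h1 : p < M p := mm_lt hM hpOmem
    have h2 : M (M p) = M' (M p) := hagree _ h1
    rw [mm_invol hM] at h2
    have h3 : M' p = M p := by
      nth_rewrite 1 [h2]
      rw [mm_invol hM']
    exact hpmem h3.symm
  rcases lt_or_gt_of_ne hpmem with hlt | hgt
  · exact encode_asym hO M₀ hM₀ hM hM' h hagree hpO hpmem hlt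
  · exact encode_asym hO M₀ hM₀ hM' hM (fun k => (h k).symm)
      (fun q hq => (hagree q hq).symm) hpO (Ne.symm hpmem) hgt

lemma neM_eq {M : Equiv.Perm (Fin (2*n))} (hM : M ∈ matchingsOfType n O) :
    neM O M = ∑ k : Fin n, encode hO M k := by
  rw [neM]
  rw [Finset.card_eq_sum_card_fiberwise (f := Prod.snd) (t := Finset.univ)
    (fun x _ => Finset.mem_univ _)]
  have hfib : ∀ b : Fin (2*n),
      ((Finset.univ.filter (fun p : Fin (2*n) × Fin (2*n) =>
        p.1 ∈ O ∧ p.2 ∈ O ∧ p.1 < p.2 ∧ M p.2 < M p.1)).filter (fun p => p.2 = b)).card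
      = (Finset.univ.filter (fun i => i ∈ O ∧ b ∈ O ∧ i < b ∧ M b < M i)).card := by
    intro b
    apply Finset.card_bij (fun p _ => p.1)
    · intro p hp
      simp only [Finset.mem_filter, Finset.mem_univ, true_and] at hp ⊢
      obtain ⟨⟨h1, h2, h3, h4⟩, h5⟩ := hp
      subst h5
      exact ⟨h1, h2, h3, h4⟩
    · intro p1 h1 p2 h2 hh
      simp only [Finset.mem_filter] at h1 h2
      exact Prod.ext hh (h1.2.trans h2.2.symm)
    · intro i hi
      simp only [Finset.mem_filter, Finset.mem_univ, true_and] at hi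
      refine ⟨(i, b), ?_, rfl⟩
      rw [Finset.mem_filter, Finset.mem_filter]
      exact ⟨⟨Finset.mem_univ _, hi.1, hi.2.1, hi.2.2⟩, rfl⟩
  simp only [hfib]
  rw [← Finset.sum_subset (Finset.subset_univ O) (fun b _ hb => by
    rw [Finset.card_eq_zero, Finset.filter_eq_empty_iff]
    intro i _
    rintro ⟨-, h2, -⟩
    exact hb h2)]
  refine (Finset.sum_bij (i := fun (k : Fin n) _ => opener n O hO k) ?_ ?_ ?_ ?_).symm
  · intro k _; exact opener_mem hO k
  · intro k1 _ k2 _ hh; exact opener_inj hO hh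
  · intro b hb
    obtain ⟨k, hk⟩ := opener_surj hO hb
    exact ⟨k, Finset.mem_univ k, hk⟩
  · intro k _
    rw [encode]
    congr 1
    apply Finset.filter_congr
    intro i _
    have hmem := opener_mem hO k
    tauto

omit hM₀ in
lemma LongM_eq (M : Equiv.Perm (Fin (2*n))) :
    LongM n O hO M = Finset.univ.filter (fun k => encode hO M k = 0) := by
  ext k
  rw [LongM, Finset.mem_filter, Finset.mem_filter]
  simp only [Finset.mem_univ, true_and]
  rw [encode, Finset.card_eq_zero, Finset.filter_eq_empty_iff]
  constructor
  · intro h i _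
    rintro ⟨h1, h2, h3⟩
    exact h ⟨i, h1, h2, h3⟩
  · rintro h ⟨i, h1, h2, h3⟩
    exact (h (Finset.mem_univ i)) ⟨h1, h2, h3⟩


end main
end SP


/-- The joint distribution of `(sor(·,M₀), Cyc(·,M₀))` over `M_n(D)` coincides
with that of `(ne, Long)`. -/
theorem sorMatch_CycMatch_eq_ne_Long (n : ℕ) (O : Finset (Fin (2 * n)))
    (hD : IsDyckType n O) (hO : O.card = n)
    (M₀ : Equiv.Perm (Fin (2 * n))) (hM₀ : M₀ ∈ matchingsOfType n O)
    (R : Type*) [CommRing R] (q : R) (t : Fin n → R) :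
    ∑ M ∈ matchingsOfType n O,
        q ^ sorMatch n O hO M₀ M * ∏ k ∈ CycMatch n O hO M₀ M, t k
      = ∑ M ∈ matchingsOfType n O, q ^ neM O M * ∏ k ∈ LongM n O hO M, t k := by
  classical
  have hv : ∀ M, M ∈ matchingsOfType n O → ∀ k, SP.encode hO M k ≤ (SP.Dk hO M₀ k).card :=
    fun M hM k => SP.encode_le hO M₀ hM₀ hM k
  have hmaps : ∀ M, M ∈ matchingsOfType n O →
      SP.unsortSeq hO M₀ (SP.encode hO M) n ∈ matchingsOfType n O :=
    fun M hM => SP.unsort_mem hO M₀ hM₀ _ (hv M hM) n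
  have hinj : ∀ M1 ∈ matchingsOfType n O, ∀ M2 ∈ matchingsOfType n O,
      SP.unsortSeq hO M₀ (SP.encode hO M1) n = SP.unsortSeq hO M₀ (SP.encode hO M2) n →
      M1 = M2 := by
    intro M1 h1 M2 h2 heq
    apply SP.encode_inj hO M₀ hM₀ h1 h2
    intro k
    have e1 := SP.sorMk_unsort hO M₀ hM₀ (SP.encode hO M1) (hv M1 h1) k
    have e2 := SP.sorMk_unsort hO M₀ hM₀ (SP.encode hO M2) (hv M2 h2) k
    rw [← e1, ← e2, heq]
  refine (Finset.sum_bij (i := fun M _ => SP.unsortSeq hO M₀ (SP.encode hO M) n)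
    (fun M hM => hmaps M hM) (fun M1 h1 M2 h2 => hinj M1 h1 M2 h2) ?_ ?_).symm
  · intro Mb hMb
    obtain ⟨a, ha, hab⟩ := Finset.surj_on_of_inj_on_of_card_le
      (fun M (_ : M ∈ matchingsOfType n O) => SP.unsortSeq hO M₀ (SP.encode hO M) n)
      (fun M hM => hmaps M hM) (fun M1 M2 h1 h2 hh => hinj M1 h1 M2 h2 hh) le_rfl Mb hMb
    exact ⟨a, ha, hab.symm⟩
  · intro M hM
    have hsor : sorMatch n O hO M₀ (SP.unsortSeq hO M₀ (SP.encode hO M) n) = neM O M := by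
      rw [sorMatch, SP.neM_eq hO M₀ hM₀ hM]
      exact Finset.sum_congr rfl (fun k _ => SP.sorMk_unsort hO M₀ hM₀ _ (hv M hM) k)
    have hcyc : CycMatch n O hO M₀ (SP.unsortSeq hO M₀ (SP.encode hO M) n)
        = LongM n O hO M := by
      rw [SP.cyc_unsort hO M₀ hM₀ _ (hv M hM), SP.LongM_eq hO M]
    rw [hsor, hcyc]
end

section
/- For a signed permutation σ ∈ B_n, inv_B(σ) equals mix(g(σ)) where g(σ) is the bicolored matching with edges o_{|σ(k)|}·c_k colored red if σ(k) > 0 and blue if σ(k) < 0, and mix(M) = ne(M) + 2·cr_{*b}(M) + 2·al_{*b}(M) + b(M). -/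
/-- Negation on the set `±{1,…,n}`, modelled as `Fin n × Bool`
(`(k, false)` is `k+1`, `(k, true)` is `−(k+1)`). -/
def negV {n : ℕ} (x : Fin n × Bool) : Fin n × Bool := (x.1, !x.2)

/-- The signed value (in `ℤ`) of a point of `Fin n × Bool`. -/
def sval {n : ℕ} (x : Fin n × Bool) : ℤ :=
  if x.2 then -((x.1 : ℤ) + 1) else (x.1 : ℤ) + 1

/-- The hyperoctahedral group `B_n`: permutations of `±{1,…,n}` commuting
with negation. -/
def Bgroup (n : ℕ) : Finset (Equiv.Perm (Fin n × Bool)) :=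
  Finset.univ.filter (fun π => ∀ x, π (negV x) = negV (π x))

/-- `σ(k)` as an integer, for `k ∈ {1,…,n}` (`k : Fin n` is the paper's `k+1`). -/
def bval {n : ℕ} (π : Equiv.Perm (Fin n × Bool)) (k : Fin n) : ℤ :=
  sval (π (k, false))

/-- Number of negative values `N(σ)`. -/
def negCount {n : ℕ} (π : Equiv.Perm (Fin n × Bool)) : ℕ :=
  (Finset.univ.filter (fun k : Fin n => bval π k < 0)).card

/-- Type `B` inversion number. -/
def invB {n : ℕ} (π : Equiv.Perm (Fin n × Bool)) : ℕ :=
  (Finset.univ.filter (fun p : Fin n × Fin n =>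
      p.1 < p.2 ∧ bval π p.2 < bval π p.1)).card +
  (Finset.univ.filter (fun p : Fin n × Fin n =>
      p.1 < p.2 ∧ bval π p.2 < -bval π p.1)).card +
  negCount π

/-- `nmin_B(σ) = |{i : σ(i) > |σ(j)| for some j > i}| + N(σ)`. -/
def nminB {n : ℕ} (π : Equiv.Perm (Fin n × Bool)) : ℕ :=
  (Finset.univ.filter (fun i : Fin n =>
      ∃ j : Fin n, i < j ∧ |bval π j| < bval π i)).card + negCount π


/-- The `k`-th closer. -/
noncomputable def closer (n : ℕ) (O : Finset (Fin (2 * n))) (hOc : Oᶜ.card = n)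
    (k : Fin n) : Fin (2 * n) :=
  Oᶜ.orderEmbOfFin hOc k

/-- Number of crossings whose right (larger-opener) arc is blue. -/
def crbM {n : ℕ} (O : Finset (Fin (2 * n))) (M : Equiv.Perm (Fin (2 * n)))
    (col : Fin (2 * n) → Bool) : ℕ :=
  (Finset.univ.filter (fun p : Fin (2 * n) × Fin (2 * n) =>
    p.1 ∈ O ∧ p.2 ∈ O ∧ p.1 < p.2 ∧ p.2 < M p.1 ∧ M p.1 < M p.2 ∧
      col p.2 = true)).card

/-- Number of alignments whose right arc is blue. -/
def albM {n : ℕ} (O : Finset (Fin (2 * n))) (M : Equiv.Perm (Fin (2 * n)))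
    (col : Fin (2 * n) → Bool) : ℕ :=
  (Finset.univ.filter (fun p : Fin (2 * n) × Fin (2 * n) =>
    p.1 ∈ O ∧ p.2 ∈ O ∧ M p.1 < p.2 ∧ col p.2 = true)).card

/-- Number of blue edges (counted by their closers). -/
def blueM {n : ℕ} (O : Finset (Fin (2 * n))) (col : Fin (2 * n) → Bool) : ℕ :=
  (Oᶜ.filter (fun c => col c = true)).card

/-- `mix(M) = ne(M) + 2 cr_{*b}(M) + 2 al_{*b}(M) + b(M)`. -/
def mixM {n : ℕ} (O : Finset (Fin (2 * n))) (M : Equiv.Perm (Fin (2 * n)))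
    (col : Fin (2 * n) → Bool) : ℕ :=
  neM O M + 2 * crbM O M col + 2 * albM O M col + blueM O col

open Finset

lemma emb_lt_iff {m n : ℕ} (s : Finset (Fin m)) (hs : s.card = n) (k : Fin n) (c : Fin m)
    (hc : c ∉ s) : s.orderEmbOfFin hs k < c ↔ (k : ℕ) < (s.filter (· < c)).card := by
  set e := s.orderEmbOfFin hs with he
  have hsm : StrictMono e := (s.orderEmbOfFin hs).strictMono
  have hmem : ∀ i : Fin n, e i ∈ s := fun i => Finset.orderEmbOfFin_mem s hs i
  have himg : s.filter (· < c) = (univ.filter (fun i : Fin n => e i < c)).image e := by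
    ext x
    simp only [mem_filter, mem_image, mem_univ, true_and]
    constructor
    · rintro ⟨hx, hxc⟩
      have : x ∈ Set.range e := by rw [he, Finset.range_orderEmbOfFin]; exact hx
      obtain ⟨i, rfl⟩ := this
      exact ⟨i, hxc, rfl⟩
    · rintro ⟨i, hi, rfl⟩; exact ⟨hmem i, hi⟩
  rw [himg, Finset.card_image_of_injective _ hsm.injective]
  constructor
  · intro h
    have hsub : Finset.Iic k ⊆ univ.filter (fun i : Fin n => e i < c) := by
      intro i hi
      simp only [mem_Iic] at hi
      simp only [mem_filter, mem_univ, true_and]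
      exact lt_of_le_of_lt (hsm.le_iff_le.2 hi) h
    have := Finset.card_le_card hsub
    rw [Fin.card_Iic] at this
    omega
  · intro h
    by_contra hlt
    have hck : c < e k := lt_of_le_of_ne (not_lt.1 hlt) (fun h' => hc (h' ▸ hmem k))
    have hsub : univ.filter (fun i : Fin n => e i < c) ⊆ Finset.Iio k := by
      intro i hi
      simp only [mem_filter, mem_univ, true_and] at hi
      simp only [mem_Iio]
      exact hsm.lt_iff_lt.1 (hi.trans hck)
    have := Finset.card_le_card hsub
    rw [Fin.card_Iio] at this
    omega
lemma lhs_eval_nest (u v : ℤ) (bi bj : Bool) (h : 0 < v) (huv : v < u) :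
    (if (if bj = true then -v else v) < (if bi = true then -u else u) then (1 : ℕ) else 0) +
      (if (if bj = true then -v else v) < -(if bi = true then -u else u) then (1 : ℕ) else 0)
      = 1 := by
  split_ifs <;> omega

lemma lhs_eval_asc (u v : ℤ) (bi bj : Bool) (h : 0 < u) (huv : u < v) :
    (if (if bj = true then -v else v) < (if bi = true then -u else u) then (1 : ℕ) else 0) +
      (if (if bj = true then -v else v) < -(if bi = true then -u else u) then (1 : ℕ) else 0)
      = if bj = true then 2 else 0 := by
  split_ifs <;> omega


/-- For a signed permutation `σ ∈ B_r` and the bicolored matching `g(σ)` of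
type `D(r)` with edges `o_{|σ(k)|}·c_k`, colored blue exactly when `σ(k) < 0`,
one has `inv_B(σ) = mix(g(σ))`. -/
theorem invB_eq_mix (n : ℕ) (r : Fin n → ℕ) (hmono : Monotone r)
    (hr : ∀ k : Fin n, (k : ℕ) + 1 ≤ r k ∧ r k ≤ n)
    (O : Finset (Fin (2 * n))) (hO : O.card = n) (hOc : Oᶜ.card = n)
    (hDr : ∀ k : Fin n, (O.filter (· < closer n O hOc k)).card = r k)
    (π : Equiv.Perm (Fin n × Bool)) (hπ : π ∈ Bgroup n)
    (hπr : ∀ k : Fin n, ((π (k, false)).1 : ℕ) + 1 ≤ r k)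
    (M : Equiv.Perm (Fin (2 * n))) (hM : M ∈ matchingsOfType n O)
    (hg : ∀ k : Fin n, M (closer n O hOc k) = opener n O hO (π (k, false)).1)
    (col : Fin (2 * n) → Bool) (hcol : ∀ i, col (M i) = col i)
    (hgcol : ∀ k : Fin n, col (closer n O hOc k) = (π (k, false)).2) :
    invB π = mixM O M col := by
  classical
  rw [matchingsOfType, Finset.mem_filter] at hM
  obtain ⟨-, hMinv, hMne, hMopen⟩ := hM
  rw [Bgroup, Finset.mem_filter] at hπ
  have hcomm := hπ.2
  set φ : Fin n → Fin n := fun k => (π (k, false)).1 with hφ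
  have φinj : Function.Injective φ := by
    intro i j h
    by_cases hb : (π (i, false)).2 = (π (j, false)).2
    · have : π (i, false) = π (j, false) := Prod.ext h hb
      have := π.injective this
      exact (Prod.ext_iff.1 this).1
    · have hb' : (π (i, false)).2 = !(π (j, false)).2 := by
        cases h1 : (π (i, false)).2 <;> cases h2 : (π (j, false)).2 <;>
          simp_all
      have : π (i, false) = negV (π (j, false)) := by
        apply Prod.ext
        · exact h
        · exact hb'
      rw [← hcomm (j, false)] at this
      have := π.injective this
      simp [negV] at this
  have φsurj : Function.Surjective φ := Finite.surjective_of_injective φinj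
  set Op := opener n O hO with hOpdef
  set Cl := closer n O hOc with hCldef
  have OpMem : ∀ m, Op m ∈ O := fun m => Finset.orderEmbOfFin_mem O hO m
  have ClMemc : ∀ k, Cl k ∈ Oᶜ := fun k => Finset.orderEmbOfFin_mem Oᶜ hOc k
  have ClMem : ∀ k, Cl k ∉ O := fun k => Finset.mem_compl.1 (ClMemc k)
  have OpMono : StrictMono Op := (O.orderEmbOfFin hO).strictMono
  have ClMono : StrictMono Cl := (Oᶜ.orderEmbOfFin hOc).strictMono
  have hMO : ∀ k, M (Op (φ k)) = Cl k := fun k => by rw [← hg k, hMinv]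
  have opLtCl : ∀ (m k : Fin n), (Op m < Cl k ↔ (m : ℕ) < r k) := by
    intro m k
    rw [← hDr k]
    exact emb_lt_iff O hO m (Cl k) (ClMem k)
  have opSelf : ∀ k, Op (φ k) < Cl k := fun k => (opLtCl _ k).2 (by
    have h1 := hπr k
    have h2 : ((φ k : ℕ)) = ((π (k, false)).1 : ℕ) := rfl
    omega)
  have hbv : ∀ k, bval π k =
      if (π (k, false)).2 = true then -((φ k : ℤ) + 1) else (φ k : ℤ) + 1 := fun k => rfl
  have colOp : ∀ k, col (Op (φ k)) = (π (k, false)).2 := fun k => by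
    rw [← hg k, hcol, hgcol]
  have OpSurj : ∀ q ∈ O, ∃ k, Op (φ k) = q := by
    intro q hq
    have : q ∈ Set.range (O.orderEmbOfFin hO) := by
      rw [Finset.range_orderEmbOfFin]; exact hq
    obtain ⟨a, ha⟩ := this
    obtain ⟨k, hk⟩ := φsurj a
    exact ⟨k, by rw [hk]; exact ha⟩
  -- (D) blue count
  have hblue : blueM O col = negCount π := by
    rw [blueM, negCount]
    symm
    apply Finset.card_bij (i := fun k _ => Cl k)
    · intro k hk
      simp only [Finset.mem_filter, Finset.mem_univ, true_and] at hk ⊢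
      refine ⟨ClMemc k, ?_⟩
      rw [hgcol k]
      by_contra h2
      have h2' : (π (k, false)).2 = false := by
        cases h : (π (k, false)).2
        · rfl
        · exact absurd h h2
      rw [hbv k, h2'] at hk
      simp at hk
      omega
    · intro a _ b _ h; exact ClMono.injective h
    · intro c hc
      simp only [Finset.mem_filter] at hc
      obtain ⟨hc1, hc2⟩ := hc
      have : c ∈ Set.range (Oᶜ.orderEmbOfFin hOc) := by
        rw [Finset.range_orderEmbOfFin]; exact hc1
      obtain ⟨k, hk⟩ := this
      have hk' : Cl k = c := hk
      refine ⟨k, ?_, hk'⟩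
      simp only [Finset.mem_filter, Finset.mem_univ, true_and]
      have : (π (k, false)).2 = true := by rw [← hgcol k, hk']; exact hc2
      rw [hbv k, this, if_pos rfl]
      omega
  -- (A) nestings
  have hne : neM O M = (univ.filter fun p : Fin n × Fin n =>
      p.1 < p.2 ∧ φ p.2 < φ p.1).card := by
    symm
    rw [neM]
    apply Finset.card_bij (i := fun p _ => (Op (φ p.2), Op (φ p.1)))
    · intro p hp
      simp only [mem_filter, mem_univ, true_and] at hp ⊢
      obtain ⟨h1, h2⟩ := hp
      refine ⟨OpMem _, OpMem _, OpMono h2, ?_⟩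
      rw [hMO, hMO]
      exact ClMono h1
    · intro a _ b _ h
      have h1 := (Prod.ext_iff.1 h).1
      have h2 := (Prod.ext_iff.1 h).2
      have e1 : a.2 = b.2 := φinj (OpMono.injective h1)
      have e2 : a.1 = b.1 := φinj (OpMono.injective h2)
      exact Prod.ext e2 e1
    · intro q hq
      simp only [mem_filter, mem_univ, true_and] at hq
      obtain ⟨hq1, hq2, hq3, hq4⟩ := hq
      obtain ⟨j, hj⟩ := OpSurj q.1 hq1
      obtain ⟨i, hi⟩ := OpSurj q.2 hq2
      refine ⟨(i, j), ?_, ?_⟩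
      · simp only [mem_filter, mem_univ, true_and]
        constructor
        · rw [← hi, ← hj, hMO, hMO] at hq4
          exact ClMono.lt_iff_lt.1 hq4
        · rw [← hi, ← hj] at hq3
          exact OpMono.lt_iff_lt.1 hq3
      · exact Prod.ext hj hi
  -- (B) crossings with blue right arc
  have hcrb : crbM O M col = (univ.filter fun p : Fin n × Fin n =>
      p.1 < p.2 ∧ φ p.1 < φ p.2 ∧ Op (φ p.2) < Cl p.1 ∧ (π (p.2, false)).2 = true).card := by
    symm
    rw [crbM]
    apply Finset.card_bij (i := fun p _ => (Op (φ p.1), Op (φ p.2)))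
    · intro p hp
      simp only [mem_filter, mem_univ, true_and] at hp ⊢
      obtain ⟨h1, h2, h3, h4⟩ := hp
      refine ⟨OpMem _, OpMem _, OpMono h2, ?_, ?_, ?_⟩
      · rw [hMO]; exact h3
      · rw [hMO, hMO]; exact ClMono h1
      · rw [colOp]; exact h4
    · intro a _ b _ h
      have h1 := (Prod.ext_iff.1 h).1
      have h2 := (Prod.ext_iff.1 h).2
      exact Prod.ext (φinj (OpMono.injective h1)) (φinj (OpMono.injective h2))
    · intro q hq
      simp only [mem_filter, mem_univ, true_and] at hq
      obtain ⟨hq1, hq2, hq3, hq4, hq5, hq6⟩ := hq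
      obtain ⟨i, hi⟩ := OpSurj q.1 hq1
      obtain ⟨j, hj⟩ := OpSurj q.2 hq2
      refine ⟨(i, j), ?_, Prod.ext hi hj⟩
      simp only [mem_filter, mem_univ, true_and]
      rw [← hi, ← hj] at hq3 hq4 hq5
      rw [hMO] at hq4
      rw [hMO, hMO] at hq5
      refine ⟨ClMono.lt_iff_lt.1 hq5, OpMono.lt_iff_lt.1 hq3, hq4, ?_⟩
      rw [← colOp j, hj]; exact hq6
  -- (C) alignments with blue right arc
  have halb : albM O M col = (univ.filter fun p : Fin n × Fin n =>
      Cl p.1 < Op (φ p.2) ∧ (π (p.2, false)).2 = true).card := by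
    symm
    rw [albM]
    apply Finset.card_bij (i := fun p _ => (Op (φ p.1), Op (φ p.2)))
    · intro p hp
      simp only [mem_filter, mem_univ, true_and] at hp ⊢
      obtain ⟨h1, h2⟩ := hp
      refine ⟨OpMem _, OpMem _, ?_, ?_⟩
      · rw [hMO]; exact h1
      · rw [colOp]; exact h2
    · intro a _ b _ h
      have h1 := (Prod.ext_iff.1 h).1
      have h2 := (Prod.ext_iff.1 h).2
      exact Prod.ext (φinj (OpMono.injective h1)) (φinj (OpMono.injective h2))
    · intro q hq
      simp only [mem_filter, mem_univ, true_and] at hq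
      obtain ⟨hq1, hq2, hq3, hq4⟩ := hq
      obtain ⟨i, hi⟩ := OpSurj q.1 hq1
      obtain ⟨j, hj⟩ := OpSurj q.2 hq2
      refine ⟨(i, j), ?_, Prod.ext hi hj⟩
      simp only [mem_filter, mem_univ, true_and]
      rw [← hi, ← hj] at hq3
      rw [hMO] at hq3
      refine ⟨hq3, ?_⟩
      rw [← colOp j, hj]; exact hq4
  -- (E) the pointwise counting identity
  have key : (Finset.univ.filter (fun p : Fin n × Fin n =>
        p.1 < p.2 ∧ bval π p.2 < bval π p.1)).card +
      (Finset.univ.filter (fun p : Fin n × Fin n =>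
        p.1 < p.2 ∧ bval π p.2 < -bval π p.1)).card
      = (univ.filter fun p : Fin n × Fin n => p.1 < p.2 ∧ φ p.2 < φ p.1).card
      + 2 * (univ.filter fun p : Fin n × Fin n =>
          p.1 < p.2 ∧ φ p.1 < φ p.2 ∧ Op (φ p.2) < Cl p.1 ∧ (π (p.2, false)).2 = true).card
      + 2 * (univ.filter fun p : Fin n × Fin n =>
          Cl p.1 < Op (φ p.2) ∧ (π (p.2, false)).2 = true).card := by
    simp only [Finset.card_filter]
    rw [← Finset.sum_add_distrib, Finset.mul_sum, Finset.mul_sum,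
      ← Finset.sum_add_distrib, ← Finset.sum_add_distrib]
    apply Finset.sum_congr rfl
    rintro ⟨i, j⟩ -
    dsimp only
    by_cases hij : i < j
    · have hijne : φ i ≠ φ j := fun h => absurd (φinj h) hij.ne
      simp only [hij, true_and]
      rcases hijne.lt_or_gt with hlt | hgt
      · -- φ i < φ j : crossing or alignment
        have e3 : ¬ (φ j < φ i) := asymm hlt
        have hne2 : Op (φ j) ≠ Cl i := fun h => ClMem i (h ▸ OpMem _)
        have hzx : (0 : ℤ) < (φ i : ℤ) + 1 := by positivity
        have huv : ((φ i : ℤ) + 1) < ((φ j : ℤ) + 1) := by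
          have : (φ i : ℕ) < (φ j : ℕ) := hlt
          omega
        rcases hne2.lt_or_gt with hoc | hco
        · -- crossing
          have e5 : ¬ (Cl i < Op (φ j) ∧ (π (j, false)).2 = true) :=
            fun h => absurd h.1 (asymm hoc)
          have e4 : (φ i < φ j ∧ Op (φ j) < Cl i ∧ (π (j, false)).2 = true) ↔
              ((π (j, false)).2 = true) := by simp [hlt, hoc]
          rw [if_neg e3, if_neg e5]
          simp only [e4]
          rw [hbv i, hbv j,
            lhs_eval_asc ((φ i : ℤ) + 1) ((φ j : ℤ) + 1) _ _ hzx huv]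
          cases (π (j, false)).2 <;> simp
        · -- alignment
          have e4 : ¬ (φ i < φ j ∧ Op (φ j) < Cl i ∧ (π (j, false)).2 = true) :=
            fun h => absurd h.2.1 (asymm hco)
          have e5 : (Cl i < Op (φ j) ∧ (π (j, false)).2 = true) ↔
              ((π (j, false)).2 = true) := by simp [hco]
          rw [if_neg e3, if_neg e4]
          simp only [e5]
          rw [hbv i, hbv j,
            lhs_eval_asc ((φ i : ℤ) + 1) ((φ j : ℤ) + 1) _ _ hzx huv]
          cases (π (j, false)).2 <;> simp
      · -- φ j < φ i : nesting
        have hzx : (0 : ℤ) < (φ j : ℤ) + 1 := by positivity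
        have huv : ((φ j : ℤ) + 1) < ((φ i : ℤ) + 1) := by
          have : (φ j : ℕ) < (φ i : ℕ) := hgt
          omega
        have hCl : ¬ Cl i < Op (φ j) := by
          intro h
          exact absurd ((OpMono hgt).trans (opSelf i)) (asymm h)
        have e4 : ¬ (φ i < φ j ∧ Op (φ j) < Cl i ∧ (π (j, false)).2 = true) :=
          fun h => absurd h.1 (asymm hgt)
        have e5 : ¬ (Cl i < Op (φ j) ∧ (π (j, false)).2 = true) := fun h => hCl h.1
        rw [if_pos hgt, if_neg e4, if_neg e5]
        rw [hbv i, hbv j,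
          lhs_eval_nest ((φ i : ℤ) + 1) ((φ j : ℤ) + 1) _ _ hzx huv]
        norm_num
    · -- ¬ i < j : everything vanishes
      have e1 : ¬ (i < j ∧ bval π j < bval π i) := fun h => hij h.1
      have e2 : ¬ (i < j ∧ bval π j < -bval π i) := fun h => hij h.1
      have e3 : ¬ (i < j ∧ φ j < φ i) := fun h => hij h.1
      have e4 : ¬ (i < j ∧ φ i < φ j ∧ Op (φ j) < Cl i ∧ (π (j, false)).2 = true) :=
        fun h => hij h.1
      have e5 : ¬ (Cl i < Op (φ j) ∧ (π (j, false)).2 = true) := by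
        rintro ⟨h1, -⟩
        exact hij (ClMono.lt_iff_lt.1 (h1.trans (opSelf j)))
      rw [if_neg e1, if_neg e2, if_neg e3, if_neg e4, if_neg e5]
      norm_num
  -- assemble
  rw [invB, mixM, hne, hcrb, halb, hblue]
  omega
end

section
/- The set of closers belonging to arcs with nothing nested below them matches right-to-left minima of the weight word: if M = φ(D,(w_1,...,w_n)) is the matching obtained from a weighted Dyck path by connecting openers o_n,...,o_1 right to left, connecting o_k to the w_k-th largest still-unconnected closer greater than o_k, then Short(M) = Rlminl(2−w_1, 3−w_2, ..., n+1−w_n). -/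
/-- `Short(M)`: indices `k` such that no arc of `M` is nested below the arc
ending at the `k`-th closer. -/
noncomputable def ShortM (n : ℕ) (O : Finset (Fin (2 * n))) (hOc : Oᶜ.card = n)
    (M : Equiv.Perm (Fin (2 * n))) : Finset (Fin n) :=
  Finset.univ.filter (fun k : Fin n =>
    ¬ ∃ i ∈ O, M (closer n O hOc k) < i ∧ M i < closer n O hOc k)


lemma rank_orderEmbOfFin {α : Type*} [LinearOrder α] (s : Finset α) {m : ℕ}
    (h : s.card = m) (k : Fin m) :
    (s.filter (fun x => x < s.orderEmbOfFin h k)).card = k := by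
  classical
  have himg : s.filter (fun x => x < s.orderEmbOfFin h k)
      = (Finset.univ.filter (fun j : Fin m => j < k)).image (s.orderEmbOfFin h) := by
    ext x
    simp only [Finset.mem_filter, Finset.mem_image, Finset.mem_univ, true_and]
    constructor
    · rintro ⟨hxs, hlt⟩
      have hx : x ∈ Set.range (s.orderEmbOfFin h) := by
        rw [Finset.range_orderEmbOfFin]; exact hxs
      obtain ⟨j, rfl⟩ := hx
      exact ⟨j, (s.orderEmbOfFin h).lt_iff_lt.mp hlt, rfl⟩
    · rintro ⟨j, hj, rfl⟩
      exact ⟨Finset.orderEmbOfFin_mem s h j, (s.orderEmbOfFin h).lt_iff_lt.mpr hj⟩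
  rw [himg, Finset.card_image_of_injective _ (s.orderEmbOfFin h).injective]
  have h2 : Finset.univ.filter (fun j : Fin m => j < k) = Finset.Iio k := by ext x; simp
  rw [h2]; simp [Fin.card_Iio]
/-- If `M = φ(D,(w_1,…,w_n))` is obtained from the weighted Dyck path by
connecting the openers from right to left, joining the `k`-th opener to the
`w_k`-th largest still-unconnected closer larger than it (expressed here by
the hypothesis `hφ`: exactly `w_k − 1` still-available closers exceed `M(o_k)`),
then `Short(M)` equals the set of right-to-left minimum letters of the word
`(2−w_1, 3−w_2, …, n+1−w_n)`. -/
theorem Short_eq_Rlminl_of_weighted_Dyck (n : ℕ) (O : Finset (Fin (2 * n)))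
    (hD : IsDyckType n O) (hO : O.card = n) (hOc : Oᶜ.card = n)
    (w : Fin n → ℕ) (hw : ∀ k, 1 ≤ w k ∧ w k ≤ riseHeight n O hO k)
    (M : Equiv.Perm (Fin (2 * n))) (hM : M ∈ matchingsOfType n O)
    (hφ : ∀ k : Fin n,
      (Finset.univ.filter (fun c : Fin (2 * n) =>
        c ∉ O ∧ opener n O hO k < c ∧ M c ≤ opener n O hO k ∧
          M (opener n O hO k) < c)).card = w k - 1) :
    ShortM n O hOc M
      = Finset.univ.filter (fun k : Fin n =>
          ∃ i : Fin n, (i : ℕ) + 2 - w i = (k : ℕ) + 1 ∧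
            ∀ j : Fin n, i < j → (i : ℕ) + 2 - w i < (j : ℕ) + 2 - w j) := by
  classical
  simp only [matchingsOfType, Finset.mem_filter, Finset.mem_univ, true_and] at hM
  obtain ⟨hinv, hfix, hop⟩ := hM
  set o : Fin n → Fin (2 * n) := opener n O hO with ho
  set cl : Fin n → Fin (2 * n) := closer n O hOc with hcl
  -- basic matching facts
  have hMlt : ∀ x, x ∉ O → M x < x := fun x hx =>
    lt_of_le_of_ne (not_lt.mp fun h => hx ((hop x).mpr h)) (hfix x)
  have hMgt : ∀ x, x ∈ O → x < M x := fun x hx => (hop x).mp hx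
  have hMO : ∀ x, x ∉ O → M x ∈ O := fun x hx =>
    (hop (M x)).mpr (by rw [hinv x]; exact hMlt x hx)
  have hMOc : ∀ x, x ∈ O → M x ∉ O := fun x hx h => by
    have h2 := hMgt (M x) h
    rw [hinv x] at h2
    exact lt_asymm h2 (hMgt x hx)
  have oMem : ∀ i, o i ∈ O := fun i => Finset.orderEmbOfFin_mem O hO i
  have oLt : ∀ i j : Fin n, o i < o j ↔ i < j := fun i j =>
    (O.orderEmbOfFin hO).lt_iff_lt
  have oSurj : ∀ x ∈ O, ∃ i, o i = x := by
    intro x hx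
    have : x ∈ Set.range (O.orderEmbOfFin hO) := by rw [Finset.range_orderEmbOfFin]; exact hx
    obtain ⟨i, hi⟩ := this
    exact ⟨i, hi⟩
  have clNot : ∀ k, cl k ∉ O := fun k => by
    have := Finset.orderEmbOfFin_mem Oᶜ hOc k
    rw [Finset.mem_compl] at this
    exact this
  set f : Fin n → Fin (2 * n) := fun i => M (o i) with hf
  have fNotO : ∀ i, f i ∉ O := fun i => hMOc (o i) (oMem i)
  have fGt : ∀ i, o i < f i := fun i => hMgt (o i) (oMem i)
  have fInj : Function.Injective f := fun i j h =>
    (O.orderEmbOfFin hO).injective (M.injective h)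
  set K : Fin n → ℕ := fun i => (Finset.univ.filter fun x => x ∉ O ∧ x < f i).card with hK
  set e : Fin n → ℕ := fun i => (Finset.univ.filter fun l => i < l ∧ f l < f i).card with he
  -- rank of a closer
  have rankCl : ∀ y : Fin (2 * n), (Finset.univ.filter fun x => x ∉ O ∧ x < y).card
      = (Oᶜ.filter (fun x => x < y)).card := by
    intro y; congr 1; ext x; simp [Finset.mem_compl, and_comm]
  have KclEq : ∀ k : Fin n, (Finset.univ.filter fun x => x ∉ O ∧ x < cl k).card = (k : ℕ) := by
    intro k; rw [rankCl]; exact rank_orderEmbOfFin Oᶜ hOc k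
  -- K is an order embedding of f
  have Kmono : ∀ i j : Fin n, f i < f j → K i < K j := by
    intro i j hij
    apply Finset.card_lt_card
    rw [Finset.ssubset_iff_of_subset]
    · exact ⟨f i, by simp [fNotO i, hij], by simp⟩
    · intro x hx
      simp only [Finset.mem_filter, Finset.mem_univ, true_and] at hx ⊢
      exact ⟨hx.1, hx.2.trans hij⟩
  have KltIff : ∀ i j : Fin n, K i < K j ↔ f i < f j := by
    intro i j
    constructor
    · intro h
      rcases lt_trichotomy (f i) (f j) with h1 | h1 | h1
      · exact h1
      · exact absurd h (by rw [fInj h1]; exact lt_irrefl _)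
      · exact absurd (Kmono j i h1) (by omega)
    · exact Kmono i j
  have Kinj : ∀ i j : Fin n, K i = K j → i = j := by
    intro i j h
    rcases lt_trichotomy (f i) (f j) with h1 | h1 | h1
    · exact absurd (Kmono i j h1) (by omega)
    · exact fInj h1
    · exact absurd (Kmono j i h1) (by omega)

  -- master counting identity
  have Kw : ∀ i : Fin n, K i + w i = (i : ℕ) + 1 + e i ∧ e i ≤ K i := by
    intro i
    set oi : Fin (2 * n) := o i with hoi
    set mi : Fin (2 * n) := f i with hmi
    have hoimi : oi < mi := fGt i
    have hMmi : M mi = oi := hinv oi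
    have hminO : mi ∉ O := fNotO i
    -- Step A : openers up to oi number i+1
    have stepA : ((Finset.Iic oi).filter (fun x => x ∈ O)).card = (i : ℕ) + 1 := by
      have h1 : (Finset.Iic oi).filter (fun x => x ∈ O)
          = insert oi (O.filter (fun x => x < oi)) := by
        ext x
        simp only [Finset.mem_filter, Finset.mem_Iic, Finset.mem_insert]
        constructor
        · rintro ⟨hle, hxO⟩
          rcases eq_or_lt_of_le hle with h | h
          · exact Or.inl h
          · exact Or.inr ⟨hxO, h⟩
        · rintro (rfl | ⟨hxO, hlt⟩)
          · exact ⟨le_refl _, oMem i⟩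
          · exact ⟨le_of_lt hlt, hxO⟩
      have h2 : (O.filter (fun x => x < oi)).card = (i : ℕ) := rank_orderEmbOfFin O hO i
      rw [h1, Finset.card_insert_of_notMem (by simp), h2]
    -- Step B : closers with partner ≤ oi number i+1
    have stepB : (Finset.univ.filter (fun x => x ∉ O ∧ M x ≤ oi)).card = (i : ℕ) + 1 := by
      have h1 : Finset.univ.filter (fun x => x ∉ O ∧ M x ≤ oi)
          = ((Finset.Iic oi).filter (fun x => x ∈ O)).image M := by
        ext x
        simp only [Finset.mem_filter, Finset.mem_univ, true_and, Finset.mem_image,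
          Finset.mem_Iic]
        constructor
        · rintro ⟨hxO, hle⟩
          exact ⟨M x, ⟨hle, hMO x hxO⟩, hinv x⟩
        · rintro ⟨y, ⟨hle, hyO⟩, rfl⟩
          refine ⟨hMOc y hyO, ?_⟩
          rw [hinv y]; exact hle
      rw [h1, Finset.card_image_of_injective _ M.injective, stepA]
    -- splits
    set cC : ℕ := ((Finset.Iic oi).filter (fun x => x ∉ O)).card with hcC
    set Gs : Finset (Fin (2 * n)) :=
      Finset.univ.filter (fun x => x ∉ O ∧ oi < x ∧ M x ≤ oi) with hGs
    have stepC : cC + Gs.card = (i : ℕ) + 1 := by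
      have hsplit := Finset.card_filter_add_card_filter_not
        (s := Finset.univ.filter (fun x => x ∉ O ∧ M x ≤ oi))
        (p := fun x => x ≤ oi)
      have h1 : (Finset.univ.filter (fun x => x ∉ O ∧ M x ≤ oi)).filter (fun x => x ≤ oi)
          = (Finset.Iic oi).filter (fun x => x ∉ O) := by
        ext x
        simp only [Finset.mem_filter, Finset.mem_univ, true_and, Finset.mem_Iic]
        constructor
        · rintro ⟨⟨hxO, _⟩, hle⟩; exact ⟨hle, hxO⟩
        · rintro ⟨hle, hxO⟩; exact ⟨⟨hxO, le_of_lt (lt_of_lt_of_le (hMlt x hxO) hle)⟩, hle⟩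
      have h2 : (Finset.univ.filter (fun x => x ∉ O ∧ M x ≤ oi)).filter (fun x => ¬ x ≤ oi)
          = Gs := by
        ext x
        simp only [hGs, Finset.mem_filter, Finset.mem_univ, true_and, not_le]
        tauto
      rw [h1, h2] at hsplit
      rw [← hsplit] at stepB
      omega
    set Xs : Finset (Fin (2 * n)) :=
      Finset.univ.filter (fun x => x ∉ O ∧ oi < x ∧ x < mi ∧ M x ≤ oi) with hXs
    set Hs : Finset (Fin (2 * n)) :=
      Finset.univ.filter (fun x => x ∉ O ∧ oi < x ∧ M x ≤ oi ∧ mi < x) with hHs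
    have stepD : Gs.card = Xs.card + (Hs.card + 1) := by
      have hsplit := Finset.card_filter_add_card_filter_not
        (s := Gs) (p := fun x => x < mi)
      have h1 : Gs.filter (fun x => x < mi) = Xs := by
        ext x
        simp only [hGs, hXs, Finset.mem_filter, Finset.mem_univ, true_and]
        tauto
      have h2 : Gs.filter (fun x => ¬ x < mi) = insert mi Hs := by
        ext x
        simp only [hGs, hHs, Finset.mem_filter, Finset.mem_univ, true_and, not_lt,
          Finset.mem_insert]
        constructor
        · rintro ⟨⟨hxO, hlt, hle⟩, hge⟩
          rcases eq_or_lt_of_le hge with h | h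
          · exact Or.inl h.symm
          · exact Or.inr ⟨hxO, hlt, hle, h⟩
        · rintro (rfl | ⟨hxO, hlt, hle, hgt⟩)
          · exact ⟨⟨hminO, hoimi, le_of_eq hMmi⟩, le_refl _⟩
          · exact ⟨⟨hxO, hlt, hle⟩, le_of_lt hgt⟩
      have h3 : mi ∉ Hs := by simp [hHs]
      rw [h1, h2, Finset.card_insert_of_notMem h3] at hsplit
      omega
    set Es : Finset (Fin (2 * n)) :=
      Finset.univ.filter (fun x => x ∉ O ∧ oi < x ∧ x < mi ∧ oi < M x) with hEs
    have stepE : K i = cC + (Xs.card + Es.card) := by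
      have hsplit := Finset.card_filter_add_card_filter_not
        (s := Finset.univ.filter (fun x => x ∉ O ∧ x < mi))
        (p := fun x => x ≤ oi)
      have h1 : (Finset.univ.filter (fun x => x ∉ O ∧ x < mi)).filter (fun x => x ≤ oi)
          = (Finset.Iic oi).filter (fun x => x ∉ O) := by
        ext x
        simp only [Finset.mem_filter, Finset.mem_univ, true_and, Finset.mem_Iic]
        constructor
        · rintro ⟨⟨hxO, _⟩, hle⟩; exact ⟨hle, hxO⟩
        · rintro ⟨hle, hxO⟩; exact ⟨⟨hxO, lt_of_le_of_lt hle hoimi⟩, hle⟩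
      set Ys : Finset (Fin (2 * n)) :=
        Finset.univ.filter (fun x => x ∉ O ∧ oi < x ∧ x < mi) with hYs
      have h2 : (Finset.univ.filter (fun x => x ∉ O ∧ x < mi)).filter (fun x => ¬ x ≤ oi)
          = Ys := by
        ext x
        simp only [hYs, Finset.mem_filter, Finset.mem_univ, true_and, not_le]
        tauto
      have hsplit2 := Finset.card_filter_add_card_filter_not
        (s := Ys) (p := fun x => M x ≤ oi)
      have h3 : Ys.filter (fun x => M x ≤ oi) = Xs := by
        ext x
        simp only [hYs, hXs, Finset.mem_filter, Finset.mem_univ, true_and]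
        tauto
      have h4 : Ys.filter (fun x => ¬ M x ≤ oi) = Es := by
        ext x
        simp only [hYs, hEs, Finset.mem_filter, Finset.mem_univ, true_and, not_le]
        tauto
      rw [h1, h2] at hsplit
      rw [h3, h4] at hsplit2
      have : K i = (Finset.univ.filter (fun x => x ∉ O ∧ x < mi)).card := rfl
      omega
    have stepF : Es.card = e i := by
      have h1 : Es = (Finset.univ.filter (fun l : Fin n => i < l ∧ f l < f i)).image f := by
        ext x
        simp only [hEs, Finset.mem_filter, Finset.mem_univ, true_and, Finset.mem_image]
        constructor
        · rintro ⟨hxO, hlt1, hlt2, hlt3⟩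
          obtain ⟨l, hl⟩ := oSurj (M x) (hMO x hxO)
          have hfl : f l = x := by show M (o l) = x; rw [hl, hinv x]
          refine ⟨l, ⟨?_, ?_⟩, hfl⟩
          · rw [← oLt]; rw [hl]; exact hlt3
          · rw [hfl]; exact hlt2
        · rintro ⟨l, ⟨hil, hfl⟩, rfl⟩
          have h5 : oi < o l := (oLt i l).mpr hil
          refine ⟨fNotO l, lt_trans h5 (fGt l), hfl, ?_⟩
          show oi < M (M (o l))
          rw [hinv]; exact h5
      rw [h1, Finset.card_image_of_injective _ fInj]
    have hw1 := (hw i).1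
    have hHcard : Hs.card = w i - 1 := hφ i
    have hw' : Hs.card + 1 = w i := by omega
    constructor
    · calc K i + w i = (cC + (Xs.card + Es.card)) + w i := by rw [stepE]
        _ = (cC + (Xs.card + (Hs.card + 1))) + Es.card := by rw [hw']; ring
        _ = (cC + Gs.card) + Es.card := by rw [stepD]
        _ = (↑i + 1) + e i := by rw [stepC, stepF]
    · rw [stepE, ← stepF]; omega

  set b : Fin n → ℕ := fun i => K i - e i with hb
  have ab : ∀ i : Fin n, (i : ℕ) + 2 - w i = b i + 1 := by
    intro i
    have h1 := (Kw i).1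
    have h2 := (Kw i).2
    have hw1 := (hw i).1
    simp only [hb]
    omega
  have eZero : ∀ p : Fin n, (∀ l, p < l → K p < K l) → e p = 0 := by
    intro p hp
    have hempty : Finset.univ.filter (fun l : Fin n => p < l ∧ f l < f p) = ∅ := by
      apply Finset.filter_eq_empty_iff.mpr
      rintro l - ⟨hpl, hfl⟩
      have h1 := Kmono l p hfl
      have h2 := hp l hpl
      omega
    simp only [he, hempty, Finset.card_empty]
  ext k
  simp only [ShortM, Finset.mem_filter, Finset.mem_univ, true_and, ← hcl]
  obtain ⟨p, hp⟩ := oSurj (M (cl k)) (hMO _ (clNot k))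
  have hfp : f p = cl k := by show M (o p) = cl k; rw [hp, hinv]
  have hKp : K p = (k : ℕ) := by
    simp only [hK]
    rw [hfp]
    exact KclEq k
  have hshort : (¬ ∃ i ∈ O, M (cl k) < i ∧ M i < cl k) ↔ ∀ l, p < l → K p < K l := by
    rw [← hp, ← hfp]
    constructor
    · intro h l hpl
      rw [KltIff]
      by_contra hle
      apply h
      refine ⟨o l, oMem l, (oLt p l).mpr hpl, ?_⟩
      have hle' : f l ≤ f p := not_lt.mp hle
      rcases eq_or_lt_of_le hle' with heq | hlt
      · exact absurd (fInj heq) (ne_of_gt hpl)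
      · exact hlt
    · rintro h ⟨x, hxO, hgt, hlt⟩
      obtain ⟨l, rfl⟩ := oSurj x hxO
      have hpl : p < l := (oLt p l).mp hgt
      have h2 := (KltIff p l).mp (h l hpl)
      exact absurd hlt (asymm h2)
  have crux : (∀ l, p < l → K p < K l) ↔
      (∃ i : Fin n, b i = (k : ℕ) ∧ ∀ j, i < j → b i < b j) := by
    constructor
    · intro hp'
      have hez := eZero p hp'
      refine ⟨p, by simp only [hb]; omega, ?_⟩
      intro j hj
      have hKpj : K p < K j := hp' j hj
      have hcard : e j + 1 ≤ K j - K p := by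
        have hins : (insert j (Finset.univ.filter (fun l : Fin n => j < l ∧ f l < f j))).card
            = e j + 1 := by
          rw [Finset.card_insert_of_notMem (by simp)]
        have hle := Finset.card_le_card_of_injOn (fun l : Fin n => K l)
          (s := insert j (Finset.univ.filter (fun l : Fin n => j < l ∧ f l < f j)))
          (t := Finset.Ioc (K p) (K j))
          (by
            intro x hx
            simp only [Finset.mem_coe, Finset.mem_insert, Finset.mem_filter, Finset.mem_univ, true_and] at hx
            rw [Finset.mem_coe, Finset.mem_Ioc]
            rcases hx with rfl | ⟨hjx, hfx⟩
            · exact ⟨hKpj, le_refl _⟩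
            · exact ⟨hp' x (hj.trans hjx), le_of_lt (Kmono x j hfx)⟩)
          (fun x _ y _ hxy => Kinj x y hxy)
        rw [Nat.card_Ioc, hins] at hle
        exact hle
      have h2 := (Kw j).2
      simp only [hb]
      omega
    · rintro ⟨i, hbi, hmin⟩
      by_cases hall : ∀ l, i < l → K i < K l
      · have hez := eZero i hall
        have hKi : K i = (k : ℕ) := by simp only [hb] at hbi; omega
        have hip : i = p := Kinj i p (by rw [hKi, hKp])
        subst hip
        exact hall
      · exfalso
        push_neg at hall
        obtain ⟨l1, hl1a, hl1b⟩ := hall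
        obtain ⟨l0, hl0mem, hl0min⟩ := Finset.exists_min_image
          (Finset.univ.filter (fun l : Fin n => i < l)) K ⟨l1, by simp [hl1a]⟩
        simp only [Finset.mem_filter, Finset.mem_univ, true_and] at hl0mem hl0min
        have hl0RL : ∀ m, l0 < m → K l0 < K m := by
          intro m hm
          have h1 := hl0min m (hl0mem.trans hm)
          rcases eq_or_lt_of_le h1 with heq | h
          · exact absurd (Kinj l0 m heq) (ne_of_lt hm)
          · exact h
        have hez0 := eZero l0 hl0RL
        have hKl0i : K l0 < K i := by
          have h1 := hl0min l1 hl1a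
          have hne : K l0 ≠ K i := fun hh => by
            have h3 := Kinj l0 i hh
            rw [h3] at hl0mem
            exact lt_irrefl i hl0mem
          omega
        have hcard : e i ≤ K i - K l0 := by
          have hle := Finset.card_le_card_of_injOn (fun l : Fin n => K l)
            (s := Finset.univ.filter (fun m : Fin n => i < m ∧ f m < f i))
            (t := Finset.Ico (K l0) (K i))
            (by
              intro x hx
              simp only [Finset.mem_coe, Finset.mem_filter, Finset.mem_univ, true_and] at hx
              rw [Finset.mem_coe, Finset.mem_Ico]
              exact ⟨hl0min x hx.1, Kmono x i hx.2⟩)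
            (fun x _ y _ hxy => Kinj x y hxy)
          rw [Nat.card_Ico] at hle
          exact hle
        have hcontra := hmin l0 hl0mem
        simp only [hb] at hcontra
        omega
  rw [hshort, crux]
  apply exists_congr
  intro i
  rw [ab i]
  constructor
  · rintro ⟨h1, h2⟩
    refine ⟨by omega, fun j hj => ?_⟩
    have h3 := h2 j hj
    rw [ab j]
    omega
  · rintro ⟨h1, h2⟩
    refine ⟨by omega, fun j hj => ?_⟩
    have h3 := h2 j hj
    rw [ab j] at h3
    omega
end
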